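/- arXiv:2206.10972 — 4 statements merged into one kernel-verified Lean document; each statement's English description precedes it below -/
import Mathlib

section
/- In a right-angled Artin group, an element g is cyclically reduced if and only if every cyclic conjugate of g has the same word length as g; that is, for every geodesic decomposition g = g₁g₂, the decomposition g₂g₁ is also geodesic. -/
/-- The commutation relators of the right-angled Artin group `G(Γ)`:
generators `v, w` commute whenever `{v, w}` is NOT an edge of `Γ`
(the convention of the paper). -/
def raagRels {V : Type} (Γ : SimpleGraph V) : Set (FreeGroup V) :=
  {r | ∃ v w : V, v ≠ w ∧ ¬ Γ.Adj v w ∧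
    r = FreeGroup.of v * FreeGroup.of w * (FreeGroup.of v)⁻¹ * (FreeGroup.of w)⁻¹}

/-- The right-angled Artin group `G(Γ)` (paper's convention). -/
abbrev RAAG {V : Type} (Γ : SimpleGraph V) := PresentedGroup (raagRels Γ)

/-- The generator of `G(Γ)` corresponding to a vertex. -/
def raagGen {V : Type} (Γ : SimpleGraph V) (v : V) : RAAG Γ := PresentedGroup.of v

/-- The group element corresponding to a letter `v` or `v⁻¹`
(a letter is a pair `(v, b)`, `b = true` meaning the positive letter `v`). -/
def raagLetter {V : Type} (Γ : SimpleGraph V) (l : V × Bool) : RAAG Γ :=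
  if l.2 then raagGen Γ l.1 else (raagGen Γ l.1)⁻¹

/-- The element of `G(Γ)` represented by a word on `V(Γ)^{±1}`. -/
def evalWord {V : Type} (Γ : SimpleGraph V) (w : List (V × Bool)) : RAAG Γ :=
  (w.map (raagLetter Γ)).prod

/-- The word length `|g|` of an element of `G(Γ)`. -/
noncomputable def wlen {V : Type} (Γ : SimpleGraph V) (g : RAAG Γ) : ℕ :=
  sInf {n | ∃ w : List (V × Bool), evalWord Γ w = g ∧ w.length = n}

/-- A word is reduced if no shorter word represents the same element. -/
def IsReducedWord {V : Type} (Γ : SimpleGraph V) (w : List (V × Bool)) : Prop :=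
  w.length = wlen Γ (evalWord Γ w)

/-- The `n`-th power of a word (concatenation of `n` copies). -/
def wpow {α : Type*} (w : List α) (n : ℕ) : List α := (List.replicate n w).flatten

/-- The support of `g`: the set of generators appearing in some reduced word
representing `g` (this set is known to be independent of the reduced word). -/
def Supp {V : Type} (Γ : SimpleGraph V) (g : RAAG Γ) : Set V :=
  {v | ∃ w : List (V × Bool), evalWord Γ w = g ∧ w.length = wlen Γ g ∧
        v ∈ w.map Prod.fst}

/-- `g` is cyclically reduced if its word length is minimal in its conjugacy class. -/
def CyclicallyReduced {V : Type} (Γ : SimpleGraph V) (g : RAAG Γ) : Prop :=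
  ∀ u : RAAG Γ, wlen Γ g ≤ wlen Γ (u⁻¹ * g * u)

/-- `g` is non-split if its support spans a connected subgraph of `Γ`. -/
def NonSplit {V : Type} (Γ : SimpleGraph V) (g : RAAG Γ) : Prop :=
  ((Γ.induce (Supp Γ g))).Connected

/-- `g` is strongly non-split if it is non-split and no generator disjointly
commutes with `g`. -/
def StronglyNonSplit {V : Type} (Γ : SimpleGraph V) (g : RAAG Γ) : Prop :=
  NonSplit Γ g ∧ ¬ ∃ v : V, v ∉ Supp Γ g ∧ ∀ u ∈ Supp Γ g, ¬ Γ.Adj v u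

/-- The set `S(g)` of starting generators of `g`. -/
def SGen {V : Type} (Γ : SimpleGraph V) (g : RAAG Γ) : Set V :=
  {v | ∃ (b : Bool) (h : RAAG Γ), g = raagLetter Γ (v, b) * h ∧
        wlen Γ g = 1 + wlen Γ h}

/-- `g` is SD-conical (w.r.t. a linear order on the vertices) if `S(g)` is a
singleton `{v₀}` and `v₀` does not commute with any smaller generator,
i.e. `{v, v₀} ∈ E(Γ)` for all `v < v₀`. -/
def SDConical {V : Type} (Γ : SimpleGraph V) (lo : LinearOrder V) (g : RAAG Γ) : Prop :=
  ∃ v₀ : V, SGen Γ g = {v₀} ∧ ∀ v : V, lo.lt v v₀ → Γ.Adj v v₀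

/-- `g` is primitive if it is nontrivial and not a proper power. -/
def RaagPrimitive {V : Type} (Γ : SimpleGraph V) (g : RAAG Γ) : Prop :=
  g ≠ 1 ∧ ∀ (u : RAAG Γ) (n : ℕ), g = u ^ n → n = 1

/-- The order on letters: extend the order on `V` so that each `v` is the
immediate predecessor of `v⁻¹`. -/
def letterLT {V : Type} (lo : LinearOrder V) (l m : V × Bool) : Prop :=
  lo.lt l.1 m.1 ∨ (l.1 = m.1 ∧ l.2 = true ∧ m.2 = false)

/-- `w` is the CGW-normal form `σ(g)` of `g`: the lexicographically largest
reduced word representing `g`. -/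
def NormalForm {V : Type} (Γ : SimpleGraph V) (lo : LinearOrder V)
    (w : List (V × Bool)) (g : RAAG Γ) : Prop :=
  evalWord Γ w = g ∧ w.length = wlen Γ g ∧
    ∀ w' : List (V × Bool), evalWord Γ w' = g → w'.length = wlen Γ g →
      w' = w ∨ List.Lex (letterLT lo) w' w


set_option maxHeartbeats 1000000

open Classical

namespace Raag

variable {V : Type} (Γ : SimpleGraph V)

/-- inverse of a letter -/
def linv (l : V × Bool) : V × Bool := (l.1, !l.2)

@[simp] theorem linv_linv (l : V × Bool) : linv (linv l) = l := by
  cases l with | mk v b => cases b <;> rfl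

@[simp] theorem linv_fst (l : V × Bool) : (linv l).1 = l.1 := rfl

theorem linv_ne (l : V × Bool) : linv l ≠ l := by
  cases l with | mk v b => cases b <;> simp [linv]

/-- independence (commuting, distinct) of letters -/
def Ind (l m : V × Bool) : Prop := l.1 ≠ m.1 ∧ ¬ Γ.Adj l.1 m.1

theorem Ind.symm {Γ : SimpleGraph V} {l m : V × Bool} (h : Ind Γ l m) : Ind Γ m l :=
  ⟨fun e => h.1 e.symm, fun a => h.2 a.symm⟩

@[simp] theorem ind_linv_left {Γ : SimpleGraph V} {l m : V × Bool} :
    Ind Γ (linv l) m ↔ Ind Γ l m := Iff.rfl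

@[simp] theorem ind_linv_right {Γ : SimpleGraph V} {l m : V × Bool} :
    Ind Γ l (linv m) ↔ Ind Γ l m := Iff.rfl

theorem not_ind_self {Γ : SimpleGraph V} (l : V × Bool) : ¬ Ind Γ l l := fun h => h.1 rfl

theorem not_ind_linv_self {Γ : SimpleGraph V} (l : V × Bool) : ¬ Ind Γ l (linv l) :=
  fun h => h.1 rfl

@[simp] theorem raagLetter_linv (l : V × Bool) :
    raagLetter Γ (linv l) = (raagLetter Γ l)⁻¹ := by
  cases l with | mk v b =>
  cases b <;> simp [raagLetter, linv]

theorem commute_of_not_adj {v w : V} (hne : v ≠ w) (hadj : ¬ Γ.Adj v w) :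
    Commute (raagGen Γ v) (raagGen Γ w) := by
  have : (QuotientGroup.mk (FreeGroup.of v * FreeGroup.of w * (FreeGroup.of v)⁻¹ *
      (FreeGroup.of w)⁻¹) : RAAG Γ) = 1 := by
    apply (QuotientGroup.eq_one_iff _).2
    apply Subgroup.subset_normalClosure
    exact ⟨v, w, hne, hadj, rfl⟩
  have h2 : (raagGen Γ v) * (raagGen Γ w) * (raagGen Γ v)⁻¹ * (raagGen Γ w)⁻¹ = 1 := by
    exact this
  have h3 : raagGen Γ v * raagGen Γ w * (raagGen Γ v)⁻¹ = raagGen Γ w := by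
    have := mul_eq_one_iff_eq_inv.1 h2
    simpa using this
  exact (mul_inv_eq_iff_eq_mul.mp h3)

theorem commute_letters {l m : V × Bool} (h : Ind Γ l m) :
    Commute (raagLetter Γ l) (raagLetter Γ m) := by
  have base : Commute (raagGen Γ l.1) (raagGen Γ m.1) := commute_of_not_adj Γ h.1 h.2
  cases l with | mk v b =>
  cases m with | mk w c =>
  cases b <;> cases c <;> simp [raagLetter] <;>
    first
      | exact base
      | exact base.inv_left
      | exact base.inv_right
      | exact base.inv_left.inv_right

/-! ### evalWord and wlen basics -/

theorem evalWord_nil : evalWord Γ ([] : List (V × Bool)) = 1 := rfl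

theorem evalWord_cons (l : V × Bool) (w : List (V × Bool)) :
    evalWord Γ (l :: w) = raagLetter Γ l * evalWord Γ w := by
  simp [evalWord]

theorem evalWord_append (x y : List (V × Bool)) :
    evalWord Γ (x ++ y) = evalWord Γ x * evalWord Γ y := by
  simp [evalWord]

theorem evalWord_singleton (l : V × Bool) : evalWord Γ [l] = raagLetter Γ l := by
  simp [evalWord]

theorem evalWord_invRev (w : List (V × Bool)) :
    evalWord Γ (w.reverse.map linv) = (evalWord Γ w)⁻¹ := by
  induction w with
  | nil => simp [evalWord]
  | cons l w ih =>
    rw [evalWord_cons, List.reverse_cons, List.map_append]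
    rw [show ([l].map linv) = [linv l] from rfl]
    rw [evalWord_append, ih, evalWord_singleton, raagLetter_linv]
    rw [mul_inv_rev]

theorem evalWord_surjective : Function.Surjective (evalWord Γ) := by
  intro g
  obtain ⟨f, rfl⟩ := QuotientGroup.mk_surjective (s := Subgroup.normalClosure (raagRels Γ)) g
  induction f using FreeGroup.induction_on with
  | C1 => exact ⟨[], rfl⟩
  | of x => exact ⟨[(x, true)], by simp [evalWord, raagLetter, raagGen, PresentedGroup.of]; rfl⟩
  | inv_of x hx =>
    obtain ⟨w, hw⟩ := hx
    refine ⟨w.reverse.map linv, ?_⟩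
    rw [evalWord_invRev, hw]
    rfl
  | mul x y hx hy =>
    obtain ⟨wx, hwx⟩ := hx
    obtain ⟨wy, hwy⟩ := hy
    exact ⟨wx ++ wy, by rw [evalWord_append, hwx, hwy]; rfl⟩

theorem repSet_nonempty (g : RAAG Γ) :
    {n | ∃ w : List (V × Bool), evalWord Γ w = g ∧ w.length = n}.Nonempty := by
  obtain ⟨w, hw⟩ := evalWord_surjective Γ g
  exact ⟨w.length, w, hw, rfl⟩

theorem wlen_le_length {g : RAAG Γ} {w : List (V × Bool)} (h : evalWord Γ w = g) :
    wlen Γ g ≤ w.length := Nat.sInf_le ⟨w, h, rfl⟩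

theorem exists_min_rep (g : RAAG Γ) :
    ∃ w : List (V × Bool), evalWord Γ w = g ∧ w.length = wlen Γ g := by
  have := Nat.sInf_mem (repSet_nonempty Γ g)
  obtain ⟨w, hw, hl⟩ := this
  exact ⟨w, hw, hl⟩

theorem wlen_mul_le (g h : RAAG Γ) : wlen Γ (g * h) ≤ wlen Γ g + wlen Γ h := by
  obtain ⟨w₁, h1, l1⟩ := exists_min_rep Γ g
  obtain ⟨w₂, h2, l2⟩ := exists_min_rep Γ h
  have : evalWord Γ (w₁ ++ w₂) = g * h := by rw [evalWord_append, h1, h2]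
  calc wlen Γ (g * h) ≤ (w₁ ++ w₂).length := wlen_le_length Γ this
    _ = wlen Γ g + wlen Γ h := by simp [l1, l2]

theorem wlen_inv_le (g : RAAG Γ) : wlen Γ g⁻¹ ≤ wlen Γ g := by
  obtain ⟨w, hw, hl⟩ := exists_min_rep Γ g
  have : evalWord Γ (w.reverse.map linv) = g⁻¹ := by rw [evalWord_invRev, hw]
  calc wlen Γ g⁻¹ ≤ (w.reverse.map linv).length := wlen_le_length Γ this
    _ = wlen Γ g := by simp [hl]

theorem wlen_inv (g : RAAG Γ) : wlen Γ g⁻¹ = wlen Γ g :=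
  le_antisymm (wlen_inv_le Γ g) (by simpa using wlen_inv_le Γ g⁻¹)

/-! ### parity -/

noncomputable def parity : RAAG Γ →* Multiplicative (ZMod 2) :=
  PresentedGroup.toGroup (f := fun _ : V => Multiplicative.ofAdd (1 : ZMod 2)) (by
    rintro r ⟨v, w, -, -, rfl⟩
    simp [mul_comm])

theorem parity_letter (l : V × Bool) :
    parity Γ (raagLetter Γ l) = Multiplicative.ofAdd (1 : ZMod 2) := by
  cases l with | mk v b =>
  cases b <;> simp [raagLetter, raagGen, parity, PresentedGroup.toGroup.of]
  · rw [← ofAdd_neg]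
    norm_num
    rfl

theorem raagLetter_ne_one (l : V × Bool) : raagLetter Γ l ≠ 1 := by
  intro h
  have := parity_letter Γ l
  rw [h, map_one] at this
  have : (1 : ZMod 2) = 0 := by
    have := congrArg Multiplicative.toAdd this.symm
    simpa using this
  simp at this

theorem wlen_letter (l : V × Bool) : wlen Γ (raagLetter Γ l) = 1 := by
  have hle : wlen Γ (raagLetter Γ l) ≤ 1 := by
    have := wlen_le_length Γ (evalWord_singleton Γ l)
    simpa using this
  have : wlen Γ (raagLetter Γ l) ≠ 0 := by
    intro h0
    obtain ⟨w, hw, hlen⟩ := exists_min_rep Γ (raagLetter Γ l)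
    rw [h0, List.length_eq_zero_iff] at hlen
    subst hlen
    exact raagLetter_ne_one Γ l hw.symm
  omega

theorem wlen_one : wlen Γ (1 : RAAG Γ) = 0 :=
  Nat.le_zero.mp (wlen_le_length Γ (evalWord_nil Γ))

/-! ### combinatorial reducedness -/

def HasCancel (w : List (V × Bool)) : Prop :=
  ∃ (x y z : List (V × Bool)) (l : V × Bool),
    w = x ++ l :: y ++ linv l :: z ∧ ∀ m ∈ y, Ind Γ l m

def Reduced (w : List (V × Bool)) : Prop := ¬ HasCancel Γ w

theorem commute_evalWord {l : V × Bool} {y : List (V × Bool)} (h : ∀ m ∈ y, Ind Γ l m) :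
    Commute (raagLetter Γ l) (evalWord Γ y) := by
  induction y with
  | nil => exact Commute.one_right _
  | cons m y ih =>
    rw [evalWord_cons]
    exact (commute_letters Γ (h m (by simp))).mul_right
      (ih (fun m hm => h m (by simp [hm])))

theorem evalWord_delete {x y z : List (V × Bool)} {l : V × Bool} (h : ∀ m ∈ y, Ind Γ l m) :
    evalWord Γ (x ++ l :: y ++ linv l :: z) = evalWord Γ (x ++ y ++ z) := by
  have hc := commute_evalWord Γ h
  rw [evalWord_append, evalWord_append, evalWord_append, evalWord_append, evalWord_cons,
    evalWord_cons, raagLetter_linv, hc.eq]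
  group

theorem exists_reduced_rep (w : List (V × Bool)) :
    ∃ w' : List (V × Bool), Reduced Γ w' ∧ evalWord Γ w' = evalWord Γ w ∧
      w'.length ≤ w.length := by
  suffices H : ∀ (n : ℕ) (w : List (V × Bool)), w.length ≤ n →
      ∃ w' : List (V × Bool), Reduced Γ w' ∧ evalWord Γ w' = evalWord Γ w ∧
        w'.length ≤ w.length from H w.length w le_rfl
  intro n
  induction n with
  | zero =>
    intro w hw
    rw [Nat.le_zero, List.length_eq_zero_iff] at hw
    subst hw
    refine ⟨[], fun hc => ?_, rfl, le_refl _⟩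
    obtain ⟨x, y, z, l, heq, -⟩ := hc
    exact absurd heq (by simp)
  | succ n ih =>
    intro w hw
    by_cases hc : HasCancel Γ w
    · obtain ⟨x, y, z, l, rfl, hy⟩ := hc
      have hlen : (x ++ y ++ z).length ≤ n := by simp at hw ⊢; omega
      obtain ⟨w', hr, he, hl⟩ := ih (x ++ y ++ z) hlen
      exact ⟨w', hr, by rw [he, evalWord_delete Γ hy], by simp at hl ⊢; omega⟩
    · exact ⟨w, hc, rfl, le_refl _⟩

theorem min_rep_reduced {g : RAAG Γ} {w : List (V × Bool)} (he : evalWord Γ w = g)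
    (hl : w.length = wlen Γ g) : Reduced Γ w := by
  intro hc
  obtain ⟨x, y, z, l, rfl, hy⟩ := hc
  have he2 : evalWord Γ (x ++ y ++ z) = g := by rw [← evalWord_delete Γ hy, he]
  have := wlen_le_length Γ he2
  simp at this hl
  omega

theorem exists_reduced_min_rep (g : RAAG Γ) :
    ∃ w : List (V × Bool), Reduced Γ w ∧ evalWord Γ w = g ∧ w.length = wlen Γ g := by
  obtain ⟨w, he, hl⟩ := exists_min_rep Γ g
  exact ⟨w, min_rep_reduced Γ he hl, he, hl⟩

/-! ### shuffles -/

def Step (w w' : List (V × Bool)) : Prop :=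
  ∃ (x y : List (V × Bool)) (l m : V × Bool),
    Ind Γ l m ∧ w = x ++ l :: m :: y ∧ w' = x ++ m :: l :: y

def Shuf : List (V × Bool) → List (V × Bool) → Prop := Relation.ReflTransGen (Step Γ)

theorem Step.symm' {w w' : List (V × Bool)} (h : Step Γ w w') : Step Γ w' w := by
  obtain ⟨x, y, l, m, hi, rfl, rfl⟩ := h
  exact ⟨x, y, m, l, hi.symm, rfl, rfl⟩

theorem Shuf.refl (w : List (V × Bool)) : Shuf Γ w w := Relation.ReflTransGen.refl

theorem Shuf.trans {a b c : List (V × Bool)} (h : Shuf Γ a b) (h' : Shuf Γ b c) :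
    Shuf Γ a c := Relation.ReflTransGen.trans h h'

theorem Shuf.symm {a b : List (V × Bool)} (h : Shuf Γ a b) : Shuf Γ b a := by
  induction h with
  | refl => exact Shuf.refl Γ a
  | tail _ hbc ih =>
    exact Relation.ReflTransGen.trans (Relation.ReflTransGen.single (Step.symm' Γ hbc)) ih

theorem Step.shuf {a b : List (V × Bool)} (h : Step Γ a b) : Shuf Γ a b :=
  Relation.ReflTransGen.single h

theorem Step.length_eq {a b : List (V × Bool)} (h : Step Γ a b) : a.length = b.length := by
  obtain ⟨x, y, l, m, _, rfl, rfl⟩ := h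
  simp

theorem Shuf.length_eq {a b : List (V × Bool)} (h : Shuf Γ a b) : a.length = b.length := by
  induction h with
  | refl => rfl
  | tail _ hbc ih => rw [ih, Step.length_eq Γ hbc]

theorem Step.evalWord_eq {a b : List (V × Bool)} (h : Step Γ a b) :
    evalWord Γ a = evalWord Γ b := by
  obtain ⟨x, y, l, m, hi, rfl, rfl⟩ := h
  rw [evalWord_append, evalWord_append, evalWord_cons, evalWord_cons, evalWord_cons,
    evalWord_cons, ← mul_assoc (raagLetter Γ l), (commute_letters Γ hi).eq, mul_assoc]

theorem Shuf.evalWord_eq {a b : List (V × Bool)} (h : Shuf Γ a b) :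
    evalWord Γ a = evalWord Γ b := by
  induction h with
  | refl => rfl
  | tail _ hbc ih => rw [ih, Step.evalWord_eq Γ hbc]

theorem Step.cons {a b : List (V × Bool)} (c : V × Bool) (h : Step Γ a b) :
    Step Γ (c :: a) (c :: b) := by
  obtain ⟨x, y, l, m, hi, rfl, rfl⟩ := h
  exact ⟨c :: x, y, l, m, hi, rfl, rfl⟩

theorem Shuf.cons {a b : List (V × Bool)} (c : V × Bool) (h : Shuf Γ a b) :
    Shuf Γ (c :: a) (c :: b) := by
  induction h with
  | refl => exact Shuf.refl Γ _
  | tail _ hbc ih => exact Shuf.trans Γ ih (Step.shuf Γ (Step.cons Γ c hbc))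

theorem shuf_swap {l m : V × Bool} (y : List (V × Bool)) (hi : Ind Γ l m) :
    Shuf Γ (l :: m :: y) (m :: l :: y) :=
  Step.shuf Γ ⟨[], y, l, m, hi, rfl, rfl⟩

/-- shuffle a letter through a commuting block -/
theorem shuf_through {l : V × Bool} {y : List (V × Bool)} (h : ∀ m ∈ y, Ind Γ l m)
    (z : List (V × Bool)) : Shuf Γ (l :: (y ++ z)) (y ++ l :: z) := by
  induction y with
  | nil => exact Shuf.refl Γ _
  | cons m y ih =>
    have h1 : Shuf Γ (l :: m :: (y ++ z)) (m :: l :: (y ++ z)) :=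
      shuf_swap Γ _ (h m (by simp))
    exact Shuf.trans Γ h1 (Shuf.cons Γ m (ih (fun m hm => h m (by simp [hm]))))

/-! ### the act function -/

def Cancelable (l : V × Bool) (w : List (V × Bool)) : Prop :=
  ∃ y z : List (V × Bool), w = y ++ linv l :: z ∧ ∀ m ∈ y, Ind Γ l m

noncomputable def act (l : V × Bool) : List (V × Bool) → List (V × Bool)
  | [] => [l]
  | m :: w =>
    if m = linv l then w
    else if Ind Γ l m then m :: act l w
    else l :: m :: w

theorem act_nil (l : V × Bool) : act Γ l [] = [l] := rfl

theorem act_cons_cancel (l : V × Bool) (w : List (V × Bool)) :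
    act Γ l (linv l :: w) = w := by simp [act]

theorem ne_linv_of_ind {l m : V × Bool} (h : Ind Γ l m) : m ≠ linv l := by
  intro e
  exact h.1 (by rw [e, linv_fst])

theorem act_cons_ind {l m : V × Bool} (w : List (V × Bool)) (h : Ind Γ l m) :
    act Γ l (m :: w) = m :: act Γ l w := by
  simp [act, ne_linv_of_ind Γ h, h]

theorem act_cons_stop {l m : V × Bool} (w : List (V × Bool)) (h1 : m ≠ linv l)
    (h2 : ¬ Ind Γ l m) : act Γ l (m :: w) = l :: m :: w := by
  simp [act, h1, h2]

theorem cancelable_head (l : V × Bool) (w : List (V × Bool)) :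
    Cancelable Γ l (linv l :: w) := ⟨[], w, rfl, by simp⟩

theorem not_cancelable_cons {l m : V × Bool} {w : List (V × Bool)}
    (h : ¬ Cancelable Γ l (m :: w)) (hi : Ind Γ l m) : ¬ Cancelable Γ l w := by
  rintro ⟨y, z, rfl, hy⟩
  refine h ⟨m :: y, z, rfl, ?_⟩
  intro m' hm'
  rcases List.mem_cons.1 hm' with h' | h'
  · subst h'; exact hi
  · exact hy _ h'

theorem act_shuf_cons {l : V × Bool} {w : List (V × Bool)} (h : ¬ Cancelable Γ l w) :
    Shuf Γ (act Γ l w) (l :: w) := by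
  induction w with
  | nil => exact Shuf.refl Γ _
  | cons m w ih =>
    by_cases hm : m = linv l
    · subst hm; exact absurd (cancelable_head Γ l w) h
    · by_cases hi : Ind Γ l m
      · rw [act_cons_ind Γ w hi]
        have h1 : Shuf Γ (m :: act Γ l w) (m :: l :: w) :=
          Shuf.cons Γ m (ih (not_cancelable_cons Γ h hi))
        exact Shuf.trans Γ h1 (shuf_swap Γ w hi.symm)
      · rw [act_cons_stop Γ w hm hi]
        exact Shuf.refl Γ _

theorem act_cancel {l : V × Bool} :
    ∀ y z : List (V × Bool), (∀ m ∈ y, Ind Γ l m) →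
      act Γ l (y ++ linv l :: z) = y ++ z := by
  intro y
  induction y with
  | nil => intro z _; exact act_cons_cancel Γ l z
  | cons m y ih =>
    intro z h
    have hm : Ind Γ l m := h m (by simp)
    rw [List.cons_append, act_cons_ind Γ _ hm, ih z (fun m' hm' => h m' (by simp [hm']))]
    rfl

/-! ### reducedness lemmas -/

theorem reduced_nil : Reduced Γ ([] : List (V × Bool)) := by
  rintro ⟨x, y, z, l, heq, -⟩
  exact absurd heq (by simp)

theorem reduced_of_reduced_cons {l : V × Bool} {w : List (V × Bool)}
    (h : Reduced Γ (l :: w)) : Reduced Γ w := by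
  rintro ⟨x, y, z, l', rfl, hy⟩
  exact h ⟨l :: x, y, z, l', rfl, hy⟩

theorem not_cancelable_of_reduced_cons {l : V × Bool} {w : List (V × Bool)}
    (h : Reduced Γ (l :: w)) : ¬ Cancelable Γ l w := by
  rintro ⟨y, z, rfl, hy⟩
  exact h ⟨[], y, z, l, rfl, hy⟩

theorem reduced_cons_of {l : V × Bool} {w : List (V × Bool)} (hred : Reduced Γ w)
    (hc : ¬ Cancelable Γ l w) : Reduced Γ (l :: w) := by
  rintro ⟨x, y, z, l', heq, hy⟩
  cases x with
  | nil =>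
    rw [List.nil_append] at heq
    injection heq with h1 h2
    subst h1
    exact hc ⟨y, z, h2, hy⟩
  | cons c x =>
    injection heq with h1 h2
    exact hred ⟨x, y, z, l', h2, hy⟩

/-- the splitting tool -/
theorem append_eq_append_cons {α : Type*} {y z p q : List α} {a : α}
    (h : y ++ z = p ++ a :: q) :
    (∃ t, y = p ++ a :: t ∧ q = t ++ z) ∨ (∃ t, p = y ++ t ∧ z = t ++ a :: q) := by
  rcases List.append_eq_append_iff.1 h with ⟨t, hp, hz⟩ | ⟨t, hy, hq⟩
  · exact Or.inr ⟨t, hp, hz⟩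
  · cases t with
    | nil => exact Or.inr ⟨[], by simp [hy], by simp at hq ⊢; exact hq.symm⟩
    | cons b t =>
      injection hq with h1 h2
      subst h1
      exact Or.inl ⟨t, hy, h2⟩

/-- deleting a cancelled letter keeps reducedness -/
theorem reduced_delete {l : V × Bool} {y z : List (V × Bool)}
    (hred : Reduced Γ (y ++ linv l :: z)) (hy : ∀ m ∈ y, Ind Γ l m) :
    Reduced Γ (y ++ z) := by
  rintro ⟨p, q, r, b, heq, hq⟩
  have heq1 : y ++ z = p ++ b :: (q ++ linv b :: r) := by
    rw [heq]; simp
  rcases append_eq_append_cons heq1 with ⟨t, hy', hqr⟩ | ⟨t, hp', hz'⟩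
  · -- b inside y : y = p ++ b :: t, q ++ linv b :: r = t ++ z
    have hb : Ind Γ l b := hy b (by simp [hy'])
    have hqr2 : t ++ z = q ++ linv b :: r := hqr.symm
    rcases append_eq_append_cons hqr2 with ⟨s, ht', hr'⟩ | ⟨s, hq', hz'⟩
    · -- pair fully inside y : t = q ++ linv b :: s, r = s ++ z
      refine hred ⟨p, q, s ++ linv l :: z, b, ?_, hq⟩
      rw [hy', ht']
      simp
    · -- pair straddles : y = p ++ b :: t, q = t ++ s, z = s ++ linv b :: r
      refine hred ⟨p, t ++ linv l :: s, r, b, ?_, ?_⟩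
      · rw [hy', hz']
        simp
      · intro m hm
        simp only [List.mem_append, List.mem_cons] at hm
        rcases hm with hm | hm | hm
        · exact hq m (by simp [hq', hm])
        · subst hm
          exact (hb.symm : Ind Γ b (linv l))
        · exact hq m (by simp [hq', hm])
  · -- pair fully inside z : p = y ++ t, z = t ++ b :: q ++ linv b :: r
    refine hred ⟨y ++ linv l :: t, q, r, b, ?_, hq⟩
    rw [hz']
    simp

/-- act preserves reduced words, cancellable case gives exact value; main inverse lemma -/
theorem not_cancelable_delete {l : V × Bool} {y z : List (V × Bool)}
    (hred : Reduced Γ (y ++ linv l :: z)) (hy : ∀ m ∈ y, Ind Γ l m) :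
    ¬ Cancelable Γ (linv l) (y ++ z) := by
  rintro ⟨p, q, heq, hp⟩
  rw [linv_linv] at heq
  rcases append_eq_append_cons heq with ⟨t, hy', -⟩ | ⟨t, hp', hz'⟩
  · exact not_ind_self l (hy l (by simp [hy']))
  · refine hred ⟨y, t, q, linv l, ?_, ?_⟩
    · rw [hz', linv_linv]
      simp
    · intro m hm
      exact hp m (by simp [hp', hm])

/-- act respects shuffling -/
theorem act_step_aux (l a b : V × Bool) (hab : Ind Γ a b) :
    ∀ x y : List (V × Bool),
      Shuf Γ (act Γ l (x ++ a :: b :: y)) (act Γ l (x ++ b :: a :: y)) := by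
  intro x
  induction x with
  | nil =>
    intro y
    simp only [List.nil_append]
    by_cases ha : a = linv l
    · subst ha
      have hb : Ind Γ l b := hab
      rw [act_cons_cancel, act_cons_ind Γ _ hb, act_cons_cancel]
      exact Shuf.refl Γ _
    · by_cases hb : b = linv l
      · subst hb
        have ha' : Ind Γ l a := (hab.symm : Ind Γ (linv l) a)
        rw [act_cons_cancel, act_cons_ind Γ _ ha', act_cons_cancel]
        exact Shuf.refl Γ _
      · by_cases hia : Ind Γ l a <;> by_cases hib : Ind Γ l b
        · rw [act_cons_ind Γ _ hia, act_cons_ind Γ _ hib, act_cons_ind Γ _ hib,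
            act_cons_ind Γ _ hia]
          exact shuf_swap Γ _ hab
        · rw [act_cons_ind Γ _ hia, act_cons_stop Γ _ hb hib, act_cons_stop Γ _ hb hib]
          -- a :: l :: b :: y  ~  l :: b :: a :: y
          have s1 : Shuf Γ (a :: l :: b :: y) (l :: a :: b :: y) :=
            shuf_swap Γ _ hia.symm
          have s2 : Shuf Γ (l :: a :: b :: y) (l :: b :: a :: y) :=
            Shuf.cons Γ l (shuf_swap Γ _ hab)
          exact Shuf.trans Γ s1 s2
        · rw [act_cons_stop Γ _ ha hia, act_cons_ind Γ _ hib, act_cons_stop Γ _ ha hia]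
          -- l :: a :: b :: y ~ b :: l :: a :: y
          have s1 : Shuf Γ (l :: a :: b :: y) (l :: b :: a :: y) :=
            Shuf.cons Γ l (shuf_swap Γ _ hab)
          have s2 : Shuf Γ (l :: b :: a :: y) (b :: l :: a :: y) :=
            shuf_swap Γ _ hib
          exact Shuf.trans Γ s1 s2
        · rw [act_cons_stop Γ _ ha hia, act_cons_stop Γ _ hb hib]
          exact Shuf.cons Γ l (shuf_swap Γ _ hab)
  | cons c x ih =>
    intro y
    simp only [List.cons_append]
    by_cases hc : c = linv l
    · subst hc
      rw [act_cons_cancel, act_cons_cancel]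
      exact Step.shuf Γ ⟨x, y, a, b, hab, rfl, rfl⟩
    · by_cases hic : Ind Γ l c
      · rw [act_cons_ind Γ _ hic, act_cons_ind Γ _ hic]
        exact Shuf.cons Γ c (ih y)
      · rw [act_cons_stop Γ _ hc hic, act_cons_stop Γ _ hc hic]
        exact Shuf.cons Γ l (Shuf.cons Γ c (Step.shuf Γ ⟨x, y, a, b, hab, rfl, rfl⟩))

theorem shuf_act {l : V × Bool} {u u' : List (V × Bool)} (h : Shuf Γ u u') :
    Shuf Γ (act Γ l u) (act Γ l u') := by
  induction h with
  | refl => exact Shuf.refl Γ _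
  | tail _ hbc ih =>
    obtain ⟨x, y, a, b, hab, rfl, rfl⟩ := hbc
    exact Shuf.trans Γ ih (act_step_aux Γ l a b hab x y)

theorem act_linv_act {l : V × Bool} {w : List (V × Bool)} (hred : Reduced Γ w) :
    Shuf Γ (act Γ (linv l) (act Γ l w)) w := by
  by_cases hc : Cancelable Γ l w
  · obtain ⟨y, z, rfl, hy⟩ := hc
    rw [act_cancel Γ y z hy]
    have h1 := act_shuf_cons Γ (not_cancelable_delete Γ hred hy)
    have h2 : Shuf Γ (linv l :: (y ++ z)) (y ++ linv l :: z) :=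
      shuf_through Γ (l := linv l) (fun m hm => (hy m hm : Ind Γ (linv l) m)) z
    exact Shuf.trans Γ h1 h2
  · have h1 : Shuf Γ (act Γ l w) (l :: w) := act_shuf_cons Γ hc
    have h2 : Shuf Γ (act Γ (linv l) (act Γ l w)) (act Γ (linv l) (l :: w)) :=
      shuf_act Γ h1
    have h3 : act Γ (linv l) (l :: w) = w := by
      have h4 := act_cons_cancel Γ (linv l) w
      rwa [linv_linv] at h4
    rwa [h3] at h2

/-- commuting letters act commutatively -/
theorem act_comm {l m : V × Bool} (h : Ind Γ l m) :
    ∀ w : List (V × Bool), Shuf Γ (act Γ l (act Γ m w)) (act Γ m (act Γ l w)) := by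
  intro w
  induction w with
  | nil =>
    rw [act_nil, act_nil, act_cons_ind Γ _ h, act_cons_ind Γ _ h.symm, act_nil, act_nil]
    exact shuf_swap Γ _ h.symm
  | cons a w ih =>
    by_cases ha : a = linv l
    · subst ha
      have hma : Ind Γ m (linv l) := h.symm
      rw [act_cons_ind Γ _ hma, act_cons_cancel, act_cons_cancel]
      exact Shuf.refl Γ _
    · by_cases hb : a = linv m
      · subst hb
        have hla : Ind Γ l (linv m) := h
        rw [act_cons_cancel, act_cons_ind Γ _ hla, act_cons_cancel]
        exact Shuf.refl Γ _
      · by_cases hia : Ind Γ l a <;> by_cases hib : Ind Γ m a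
        · rw [act_cons_ind Γ _ hib, act_cons_ind Γ _ hia, act_cons_ind Γ _ hia,
            act_cons_ind Γ _ hib]
          exact Shuf.cons Γ a ih
        · rw [act_cons_stop Γ _ hb hib, act_cons_ind Γ _ h, act_cons_ind Γ _ hia,
            act_cons_stop Γ _ hb hib]
          exact Shuf.refl Γ _
        · rw [act_cons_ind Γ _ hib, act_cons_stop Γ _ ha hia, act_cons_stop Γ _ ha hia,
            act_cons_ind Γ _ h.symm, act_cons_ind Γ _ hib]
          exact Shuf.refl Γ _
        · rw [act_cons_stop Γ _ hb hib, act_cons_ind Γ _ h, act_cons_stop Γ _ ha hia,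
            act_cons_ind Γ _ h.symm, act_cons_stop Γ _ hb hib]
          exact shuf_swap Γ _ h.symm

/-! ### the action of the RAAG on reduced shuffle classes -/

def shufSetoid : Setoid (List (V × Bool)) :=
  ⟨Shuf Γ, fun w => Shuf.refl Γ w, fun h => Shuf.symm Γ h, fun h h' => Shuf.trans Γ h h'⟩

def Cl := Quotient (shufSetoid Γ)

def mkCl (w : List (V × Bool)) : Cl Γ := Quotient.mk (shufSetoid Γ) w

theorem mkCl_eq_iff {w w' : List (V × Bool)} : mkCl Γ w = mkCl Γ w' ↔ Shuf Γ w w' :=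
  ⟨fun h => Quotient.exact h, fun h => Quotient.sound h⟩

noncomputable def actCl (l : V × Bool) : Cl Γ → Cl Γ :=
  Quotient.map (act Γ l) (fun _ _ h => shuf_act Γ h)

theorem actCl_mk (l : V × Bool) (w : List (V × Bool)) :
    actCl Γ l (mkCl Γ w) = mkCl Γ (act Γ l w) := rfl

/-- classes containing a reduced word -/
def QR := {c : Cl Γ // ∃ w, Reduced Γ w ∧ mkCl Γ w = c}

theorem actCl_good (l : V × Bool) {w : List (V × Bool)} (hred : Reduced Γ w) :
    ∃ w', Reduced Γ w' ∧ mkCl Γ w' = actCl Γ l (mkCl Γ w) := by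
  rw [actCl_mk]
  by_cases hc : Cancelable Γ l w
  · obtain ⟨y, z, rfl, hy⟩ := hc
    rw [act_cancel Γ y z hy]
    exact ⟨y ++ z, reduced_delete Γ hred hy, rfl⟩
  · exact ⟨l :: w, reduced_cons_of Γ hred hc,
      (mkCl_eq_iff Γ).2 (Shuf.symm Γ (act_shuf_cons Γ hc))⟩

noncomputable def actQR (l : V × Bool) : QR Γ → QR Γ := fun c =>
  ⟨actCl Γ l c.1, by
    obtain ⟨w, hred, hw⟩ := c.2
    obtain ⟨w', h1, h2⟩ := actCl_good Γ l hred
    exact ⟨w', h1, by rw [h2, hw]⟩⟩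

theorem actQR_linv_actQR (l : V × Bool) (c : QR Γ) :
    actQR Γ (linv l) (actQR Γ l c) = c := by
  obtain ⟨cv, w, hred, hw⟩ := c
  apply Subtype.ext
  show actCl Γ (linv l) (actCl Γ l cv) = cv
  rw [← hw, actCl_mk, actCl_mk]
  exact (mkCl_eq_iff Γ).2 (act_linv_act Γ hred)

noncomputable def actPerm (l : V × Bool) : Equiv.Perm (QR Γ) where
  toFun := actQR Γ l
  invFun := actQR Γ (linv l)
  left_inv := fun c => actQR_linv_actQR Γ l c
  right_inv := fun c => by
    have := actQR_linv_actQR Γ (linv l) c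
    rwa [linv_linv] at this

theorem actPerm_linv (l : V × Bool) : actPerm Γ (linv l) = (actPerm Γ l)⁻¹ := by
  apply Equiv.ext
  intro c
  rfl

theorem actPerm_comm {l m : V × Bool} (h : Ind Γ l m) :
    actPerm Γ l * actPerm Γ m = actPerm Γ m * actPerm Γ l := by
  apply Equiv.ext
  intro c
  obtain ⟨cv, w, hred, hw⟩ := c
  apply Subtype.ext
  show actCl Γ l (actCl Γ m cv) = actCl Γ m (actCl Γ l cv)
  rw [← hw, actCl_mk, actCl_mk, actCl_mk, actCl_mk]
  exact (mkCl_eq_iff Γ).2 (act_comm Γ h w)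

noncomputable def phi : RAAG Γ →* Equiv.Perm (QR Γ) :=
  PresentedGroup.toGroup (f := fun v : V => actPerm Γ (v, true)) (by
    rintro r ⟨v, w, hne, hnadj, rfl⟩
    have h : Ind Γ (v, true) (w, true) := ⟨hne, hnadj⟩
    simp only [map_mul, map_inv, FreeGroup.lift_apply_of]
    rw [mul_assoc, mul_assoc]
    rw [← mul_inv_rev, ← mul_assoc]
    rw [actPerm_comm Γ h]
    group)

theorem phi_letter (l : V × Bool) : phi Γ (raagLetter Γ l) = actPerm Γ l := by
  cases l with | mk v b =>
  cases b
  · show phi Γ (raagLetter Γ (v, false)) = actPerm Γ (v, false)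
    have h1 : raagLetter Γ (v, false) = (raagGen Γ v)⁻¹ := rfl
    rw [h1, map_inv]
    have h2 : phi Γ (raagGen Γ v) = actPerm Γ (v, true) :=
      PresentedGroup.toGroup.of _
    rw [h2, ← actPerm_linv]
    rfl
  · exact PresentedGroup.toGroup.of _

noncomputable def basept : QR Γ := ⟨mkCl Γ [], [], reduced_nil Γ, rfl⟩

theorem phi_evalWord {w : List (V × Bool)} (hred : Reduced Γ w) :
    phi Γ (evalWord Γ w) (basept Γ) = ⟨mkCl Γ w, w, hred, rfl⟩ := by
  induction w with
  | nil =>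
    rw [evalWord_nil, map_one]
    rfl
  | cons l w ih =>
    rw [evalWord_cons, map_mul]
    have hred' : Reduced Γ w := reduced_of_reduced_cons Γ hred
    rw [Equiv.Perm.mul_apply, ih hred', phi_letter]
    apply Subtype.ext
    show actCl Γ l (mkCl Γ w) = mkCl Γ (l :: w)
    rw [actCl_mk]
    exact (mkCl_eq_iff Γ).2 (act_shuf_cons Γ (not_cancelable_of_reduced_cons Γ hred))

theorem reduced_unique {w w' : List (V × Bool)} (hred : Reduced Γ w) (hred' : Reduced Γ w')
    (h : evalWord Γ w = evalWord Γ w') : Shuf Γ w w' := by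
  have h1 := phi_evalWord Γ hred
  have h2 := phi_evalWord Γ hred'
  rw [h] at h1
  rw [h1] at h2
  have h3 := congrArg Subtype.val h2
  simp only at h3
  exact (mkCl_eq_iff Γ).1 h3

theorem reduced_length {w : List (V × Bool)} (hred : Reduced Γ w) :
    w.length = wlen Γ (evalWord Γ w) := by
  obtain ⟨w₀, hred₀, he₀, hl₀⟩ := exists_reduced_min_rep Γ (evalWord Γ w)
  have := Shuf.length_eq Γ (reduced_unique Γ hred hred₀ he₀.symm)
  rw [this, hl₀]

/-! ### cyclically reduced words and powers -/

def CycRed (w : List (V × Bool)) : Prop :=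
  ¬ ∃ (y₁ y₂ y₃ : List (V × Bool)) (a : V × Bool),
      w = y₁ ++ a :: y₂ ++ linv a :: y₃ ∧ (∀ m ∈ y₁, Ind Γ a m) ∧ (∀ m ∈ y₃, Ind Γ a m)

theorem wpow_zero {α : Type*} (w : List α) : wpow w 0 = [] := rfl

theorem wpow_succ {α : Type*} (w : List α) (n : ℕ) : wpow w (n + 1) = w ++ wpow w n := by
  simp [wpow, List.replicate_succ]

theorem evalWord_wpow (w : List (V × Bool)) (n : ℕ) :
    evalWord Γ (wpow w n) = (evalWord Γ w) ^ n := by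
  induction n with
  | zero => rw [wpow_zero, pow_zero]; rfl
  | succ n ih => rw [wpow_succ, evalWord_append, ih, pow_succ']

theorem length_wpow {α : Type*} (w : List α) (n : ℕ) :
    (wpow w n).length = n * w.length := by
  induction n with
  | zero => simp [wpow_zero]
  | succ n ih => rw [wpow_succ]; simp [ih]; ring

/-- key combinatorial lemma : appending a cyclically reduced word stays reduced -/
theorem reduced_append_cycred {w t : List (V × Bool)} (hw : Reduced Γ w)
    (ht : Reduced Γ t) (hccr : CycRed Γ w) (hshape : t = [] ∨ ∃ s, t = w ++ s) :
    Reduced Γ (w ++ t) := by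
  rintro ⟨p, q, r, b, heq, hq⟩
  have heq1 : w ++ t = p ++ b :: (q ++ linv b :: r) := by rw [heq]; simp
  rcases append_eq_append_cons heq1 with ⟨c, hw1, h2⟩ | ⟨c, hp2, ht2⟩
  · -- b inside w : w = p ++ b :: c,  q ++ linv b :: r = c ++ t
    have h2' : c ++ t = q ++ linv b :: r := h2.symm
    rcases append_eq_append_cons h2' with ⟨d, hc, hr⟩ | ⟨d, hqd, ht'⟩
    · -- pair fully inside w
      exact hw ⟨p, q, d, b, by rw [hw1, hc]; simp, hq⟩
    · -- q = c ++ d, t = d ++ linv b :: r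
      have hcInd : ∀ m ∈ c, Ind Γ b m := fun m hm => hq m (by simp [hqd, hm])
      have hdInd : ∀ m ∈ d, Ind Γ b m := fun m hm => hq m (by simp [hqd, hm])
      rcases hshape with rfl | ⟨s, rfl⟩
      · exact absurd ht' (by simp)
      · have ht'' : w ++ s = d ++ linv b :: r := ht'
        rcases append_eq_append_cons ht'' with ⟨e, hw2, hr2⟩ | ⟨e, hd2, hs2⟩
        · -- w = d ++ linv b :: e
          have E : p ++ b :: c = d ++ linv b :: e := by rw [← hw1, hw2]
          rcases append_eq_append_cons E with ⟨f, hp3, he3⟩ | ⟨f, hd3, hbc⟩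
          · -- p = d ++ linv b :: f, e = f ++ b :: c : CycRed violation
            refine hccr ⟨d, f, c, linv b, ?_, ?_, ?_⟩
            · rw [hw1, hp3]; simp
            · intro m hm; exact (hdInd m hm).symm.symm
            · intro m hm; exact hcInd m hm
          · -- d = p ++ f, b :: c = f ++ linv b :: e
            cases f with
            | nil =>
              rw [List.nil_append] at hbc
              injection hbc with hb1 hb2
              exact absurd hb1.symm (linv_ne b)
            | cons b' f =>
              injection hbc with hb1 hb2
              subst hb1
              exact hw ⟨p, f, e, b, by rw [hw1, hb2]; simp, fun m hm =>
                hcInd m (by rw [hb2]; simp [hm])⟩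
        · -- d = w ++ e : b ∈ d, contradiction
          have hbw : b ∈ w := by rw [hw1]; simp
          have : Ind Γ b b := hdInd b (by rw [hd2]; simp [hbw])
          exact not_ind_self b this
  · -- pair fully inside t
    exact ht ⟨c, q, r, b, by rw [ht2]; simp, hq⟩

theorem cycred_ind_fix {b : V × Bool} {m : V × Bool} (h : Ind Γ b m) : Ind Γ (linv b) m := h

theorem reduced_wpow {w : List (V × Bool)} (hw : Reduced Γ w) (hccr : CycRed Γ w) :
    ∀ n, Reduced Γ (wpow w n) := by
  intro n
  induction n with
  | zero => rw [wpow_zero]; exact reduced_nil Γ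
  | succ n ih =>
    rw [wpow_succ]
    refine reduced_append_cycred Γ hw ih hccr ?_
    cases n with
    | zero => exact Or.inl (wpow_zero w)
    | succ n => exact Or.inr ⟨wpow w n, wpow_succ w n⟩

/-! ### main theorem pieces -/

theorem conj_pow_aux (u g : RAAG Γ) (n : ℕ) :
    (u⁻¹ * g * u) ^ n = u⁻¹ * g ^ n * u := by
  induction n with
  | zero => group
  | succ n ih => rw [pow_succ, pow_succ, ih]; group

theorem wlen_pow_le (c : RAAG Γ) (n : ℕ) : wlen Γ (c ^ n) ≤ n * wlen Γ c := by
  induction n with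
  | zero => rw [pow_zero]; simp [wlen_one]
  | succ n ih =>
    rw [pow_succ]
    calc wlen Γ (c ^ n * c) ≤ wlen Γ (c ^ n) + wlen Γ c := wlen_mul_le Γ _ _
      _ ≤ n * wlen Γ c + wlen Γ c := by omega
      _ = (n + 1) * wlen Γ c := by ring

/-- from the hypothesis H, the minimal representative is cyclically reduced -/
theorem cycred_of_H {g : RAAG Γ}
    (hH : ∀ g₁ g₂ : RAAG Γ, g = g₁ * g₂ → wlen Γ g = wlen Γ g₁ + wlen Γ g₂ →
        wlen Γ (g₂ * g₁) = wlen Γ g₂ + wlen Γ g₁)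
    {w : List (V × Bool)} (he : evalWord Γ w = g) (hl : w.length = wlen Γ g) :
    CycRed Γ w := by
  rintro ⟨y₁, y₂, y₃, a, rfl, h1, h3⟩
  have c1 : Commute (raagLetter Γ a) (evalWord Γ y₁) := commute_evalWord Γ h1
  have c3 : Commute (raagLetter Γ a) (evalWord Γ y₃) := commute_evalWord Γ h3
  have gdecomp : g = raagLetter Γ a * evalWord Γ (y₁ ++ y₂ ++ y₃) * (raagLetter Γ a)⁻¹ := by
    rw [← he]
    rw [show (y₁ ++ a :: y₂ ++ linv a :: y₃) = y₁ ++ (a :: y₂) ++ (linv a :: y₃) from by simp]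
    simp only [evalWord_append, evalWord_cons, raagLetter_linv]
    have e3 : (raagLetter Γ a)⁻¹ * evalWord Γ y₃ = evalWord Γ y₃ * (raagLetter Γ a)⁻¹ :=
      (c3.inv_left).eq
    calc evalWord Γ y₁ * (raagLetter Γ a * evalWord Γ y₂) *
          ((raagLetter Γ a)⁻¹ * evalWord Γ y₃)
        = evalWord Γ y₁ * raagLetter Γ a * evalWord Γ y₂ *
          ((raagLetter Γ a)⁻¹ * evalWord Γ y₃) := by group
      _ = raagLetter Γ a * evalWord Γ y₁ * evalWord Γ y₂ *
          ((raagLetter Γ a)⁻¹ * evalWord Γ y₃) := by rw [← c1.eq]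
      _ = raagLetter Γ a * evalWord Γ y₁ * evalWord Γ y₂ *
          (evalWord Γ y₃ * (raagLetter Γ a)⁻¹) := by rw [e3]
      _ = raagLetter Γ a * (evalWord Γ y₁ * evalWord Γ y₂ * evalWord Γ y₃) *
          (raagLetter Γ a)⁻¹ := by group
  have hlw : wlen Γ g = y₁.length + y₂.length + y₃.length + 2 := by
    rw [← hl]
    simp
    omega
  have hwh : wlen Γ (evalWord Γ (y₁ ++ y₂ ++ y₃)) ≤ y₁.length + y₂.length + y₃.length := by
    have := wlen_le_length Γ (rfl : evalWord Γ (y₁ ++ y₂ ++ y₃) = evalWord Γ (y₁ ++ y₂ ++ y₃))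
    simp only [List.length_append] at this
    omega
  have hA1 : wlen Γ (raagLetter Γ a) = 1 := wlen_letter Γ a
  have hAinv1 : wlen Γ (raagLetter Γ a)⁻¹ = 1 := by rw [wlen_inv]; exact hA1
  have hsplit : g = raagLetter Γ a * (evalWord Γ (y₁ ++ y₂ ++ y₃) * (raagLetter Γ a)⁻¹) := by
    rw [← mul_assoc, ← gdecomp]
  have hg2le : wlen Γ (evalWord Γ (y₁ ++ y₂ ++ y₃) * (raagLetter Γ a)⁻¹) ≤ wlen Γ g - 1 := by
    calc wlen Γ (evalWord Γ (y₁ ++ y₂ ++ y₃) * (raagLetter Γ a)⁻¹)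
        ≤ wlen Γ (evalWord Γ (y₁ ++ y₂ ++ y₃)) + wlen Γ (raagLetter Γ a)⁻¹ := wlen_mul_le Γ _ _
      _ ≤ wlen Γ g - 1 := by omega
  have hg2ge : wlen Γ g ≤ 1 + wlen Γ (evalWord Γ (y₁ ++ y₂ ++ y₃) * (raagLetter Γ a)⁻¹) := by
    calc wlen Γ g ≤ wlen Γ (raagLetter Γ a) +
        wlen Γ (evalWord Γ (y₁ ++ y₂ ++ y₃) * (raagLetter Γ a)⁻¹) := by
          rw [hsplit]
          exact wlen_mul_le Γ _ _
      _ = 1 + wlen Γ (evalWord Γ (y₁ ++ y₂ ++ y₃) * (raagLetter Γ a)⁻¹) := by rw [hA1]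
  have hgeo : wlen Γ g = wlen Γ (raagLetter Γ a) +
      wlen Γ (evalWord Γ (y₁ ++ y₂ ++ y₃) * (raagLetter Γ a)⁻¹) := by omega
  have hfin := hH _ _ hsplit hgeo
  have hg2A : evalWord Γ (y₁ ++ y₂ ++ y₃) * (raagLetter Γ a)⁻¹ * raagLetter Γ a =
      evalWord Γ (y₁ ++ y₂ ++ y₃) := by group
  rw [hg2A] at hfin
  omega

theorem wlen_pow_eq {g : RAAG Γ}
    (hH : ∀ g₁ g₂ : RAAG Γ, g = g₁ * g₂ → wlen Γ g = wlen Γ g₁ + wlen Γ g₂ →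
        wlen Γ (g₂ * g₁) = wlen Γ g₂ + wlen Γ g₁) (n : ℕ) :
    wlen Γ (g ^ n) = n * wlen Γ g := by
  obtain ⟨w, hred, he, hl⟩ := exists_reduced_min_rep Γ g
  have hccr : CycRed Γ w := cycred_of_H Γ hH he hl
  have hrpow : Reduced Γ (wpow w n) := reduced_wpow Γ hred hccr n
  have heval : evalWord Γ (wpow w n) = g ^ n := by rw [evalWord_wpow, he]
  have := reduced_length Γ hrpow
  rw [heval, length_wpow, hl] at this
  omega

end Raag

theorem stmt8 {V : Type} (Γ : SimpleGraph V) (g : RAAG Γ) :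
    CyclicallyReduced Γ g ↔
      ∀ g₁ g₂ : RAAG Γ, g = g₁ * g₂ → wlen Γ g = wlen Γ g₁ + wlen Γ g₂ →
        wlen Γ (g₂ * g₁) = wlen Γ g₂ + wlen Γ g₁ := by
  constructor
  · intro hc g₁ g₂ hsplit hgeo
    have h1 : g₂ * g₁ = g₁⁻¹ * g * g₁ := by rw [hsplit]; group
    refine le_antisymm (Raag.wlen_mul_le Γ g₂ g₁) ?_
    have h2 := hc g₁
    rw [← h1] at h2
    omega
  · intro hH u
    have key := fun n => Raag.wlen_pow_eq Γ hH n
    set c := u⁻¹ * g * u with hc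
    have hconj : ∀ n : ℕ, wlen Γ (g ^ n) ≤ 2 * wlen Γ u + n * wlen Γ c := by
      intro n
      have h1 : g ^ n = u * c ^ n * u⁻¹ := by rw [hc, Raag.conj_pow_aux]; group
      calc wlen Γ (g ^ n) = wlen Γ (u * c ^ n * u⁻¹) := by rw [h1]
        _ ≤ wlen Γ (u * c ^ n) + wlen Γ u⁻¹ := Raag.wlen_mul_le Γ _ _
        _ ≤ wlen Γ u + wlen Γ (c ^ n) + wlen Γ u⁻¹ := by
            have := Raag.wlen_mul_le Γ u (c ^ n); omega
        _ ≤ 2 * wlen Γ u + n * wlen Γ c := by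
            have h2 := Raag.wlen_pow_le Γ c n
            have h3 := Raag.wlen_inv Γ u
            omega
    by_contra hlt
    push_neg at hlt
    set n := 2 * wlen Γ u + 1 with hn
    have h3 := key n
    have h4 := hconj n
    rw [h3] at h4
    have h5 : n * (wlen Γ c + 1) ≤ n * wlen Γ g := Nat.mul_le_mul_left n (by omega)
    have h6 : n * wlen Γ c + n ≤ 2 * wlen Γ u + n * wlen Γ c := by
      calc n * wlen Γ c + n = n * (wlen Γ c + 1) := by ring
        _ ≤ n * wlen Γ g := h5
        _ ≤ 2 * wlen Γ u + n * wlen Γ c := h4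
    omega
end

section
/- Let w be a (possibly non-reduced) word in a right-angled Artin group G(Γ). Then w is reduced (represents an element of word length equal to its length) if and only if w has no innermost cancellation, i.e., no subword of the form v^{±1}·w₁·v^{∓1} where every generator in the support of w₁ commutes with v and no letter of w₁ equals v or v⁻¹. -/
namespace Stmt9Aux

variable {V : Type} (Γ : SimpleGraph V)

lemma eval_nil : evalWord Γ [] = 1 := rfl

lemma eval_cons (l : V × Bool) (u : List (V × Bool)) :
    evalWord Γ (l :: u) = raagLetter Γ l * evalWord Γ u := by
  simp [evalWord]

lemma eval_append (a b : List (V × Bool)) :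
    evalWord Γ (a ++ b) = evalWord Γ a * evalWord Γ b := by
  simp [evalWord]

lemma letter_true (v : V) : raagLetter Γ (v, true) = raagGen Γ v := rfl

lemma letter_false (v : V) : raagLetter Γ (v, false) = (raagGen Γ v)⁻¹ := rfl

open commutatorElement in
lemma gen_comm {v w : V} (h : v ≠ w) (hna : ¬ Γ.Adj v w) :
    Commute (raagGen Γ v) (raagGen Γ w) := by
  have hr : (FreeGroup.of v * FreeGroup.of w * (FreeGroup.of v)⁻¹ * (FreeGroup.of w)⁻¹) ∈
      Subgroup.normalClosure (raagRels Γ) :=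
    Subgroup.subset_normalClosure ⟨v, w, h, hna, rfl⟩
  have h1 : (QuotientGroup.mk (FreeGroup.of v * FreeGroup.of w * (FreeGroup.of v)⁻¹ *
      (FreeGroup.of w)⁻¹) : RAAG Γ) = 1 := (QuotientGroup.eq_one_iff _).mpr hr
  have h2 : raagGen Γ v * raagGen Γ w * (raagGen Γ v)⁻¹ * (raagGen Γ w)⁻¹ = 1 := h1
  have h3 : ⁅raagGen Γ v, raagGen Γ w⁆ = 1 := by
    rw [commutatorElement_def]; exact h2
  exact commutatorElement_eq_one_iff_commute.mp h3

lemma letter_commute {x y : V × Bool} (h1 : x.1 ≠ y.1) (h2 : ¬ Γ.Adj x.1 y.1) :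
    Commute (raagLetter Γ x) (raagLetter Γ y) := by
  have hc : Commute (raagGen Γ x.1) (raagGen Γ y.1) := gen_comm Γ h1 h2
  obtain ⟨v, bx⟩ := x; obtain ⟨w, byy⟩ := y
  cases bx <;> cases byy <;>
    simp only [letter_true, letter_false] <;>
    first
      | exact hc
      | exact hc.inv_left
      | exact hc.inv_right
      | exact hc.inv_left.inv_right

lemma letter_mul_inv (v : V) (b : Bool) :
    raagLetter Γ (v, b) * raagLetter Γ (v, !b) = 1 := by
  cases b <;> simp [letter_true, letter_false]

lemma commute_eval {l : V × Bool} {a : List (V × Bool)}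
    (h : ∀ m ∈ a, m.1 ≠ l.1 ∧ ¬ Γ.Adj m.1 l.1) :
    Commute (raagLetter Γ l) (evalWord Γ a) := by
  induction a with
  | nil => exact Commute.one_right _
  | cons m a ih =>
      rw [eval_cons]
      have hm := h m (List.mem_cons_self)
      exact Commute.mul_right
        (letter_commute Γ (fun he => hm.1 he.symm) (fun ha => hm.2 (Γ.adj_symm ha)))
        (ih (fun x hx => h x (List.mem_cons_of_mem _ hx)))


/-- `m` commutes with the generator of `l` and is not that generator. -/
def Com (Γ : SimpleGraph V) (l m : V × Bool) : Prop := m.1 ≠ l.1 ∧ ¬ Γ.Adj m.1 l.1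

open Classical in
/-- Try to delete an occurrence of the inverse of `l` that is preceded only by
letters commuting with `l`. -/
noncomputable def del (Γ : SimpleGraph V) (l : V × Bool) :
    List (V × Bool) → Option (List (V × Bool))
  | [] => none
  | m :: u =>
      if m = (l.1, !l.2) then some u
      else if Com Γ l m then (del Γ l u).map (m :: ·) else none

variable (Γ : SimpleGraph V)

lemma del_nil (l : V × Bool) : del Γ l [] = none := rfl

lemma del_cons_pos {l m : V × Bool} (u : List (V × Bool)) (h : m = (l.1, !l.2)) :
    del Γ l (m :: u) = some u := by
  rw [del, if_pos h]

lemma del_cons_comm {l m : V × Bool} (u : List (V × Bool)) (h : m ≠ (l.1, !l.2))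
    (hc : Com Γ l m) : del Γ l (m :: u) = (del Γ l u).map (m :: ·) := by
  rw [del, if_neg h, if_pos hc]

lemma del_cons_stop {l m : V × Bool} (u : List (V × Bool)) (h : m ≠ (l.1, !l.2))
    (hc : ¬ Com Γ l m) : del Γ l (m :: u) = none := by
  rw [del, if_neg h, if_neg hc]

lemma del_length {l : V × Bool} : ∀ {u s : List (V × Bool)},
    del Γ l u = some s → s.length + 1 = u.length := by
  intro u
  induction u with
  | nil => intro s h; rw [del_nil] at h; exact absurd h (by simp)
  | cons m u ih =>
      intro s h
      by_cases h1 : m = (l.1, !l.2)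
      · rw [del_cons_pos Γ u h1] at h
        simp_all
      · by_cases h2 : Com Γ l m
        · rw [del_cons_comm Γ u h1 h2] at h
          rcases Option.map_eq_some_iff.mp h with ⟨t, ht, rfl⟩
          simp [← ih ht]
        · rw [del_cons_stop Γ u h1 h2] at h; exact absurd h (by simp)

lemma del_some_spec {l : V × Bool} : ∀ {u s : List (V × Bool)},
    del Γ l u = some s →
    ∃ a c, u = a ++ (l.1, !l.2) :: c ∧ (∀ m ∈ a, Com Γ l m) ∧ s = a ++ c := by
  intro u
  induction u with
  | nil => intro s h; rw [del_nil] at h; exact absurd h (by simp)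
  | cons m u ih =>
      intro s h
      by_cases h1 : m = (l.1, !l.2)
      · rw [del_cons_pos Γ u h1] at h
        exact ⟨[], u, by simp [h1], by simp, by simpa using h.symm⟩
      · by_cases h2 : Com Γ l m
        · rw [del_cons_comm Γ u h1 h2] at h
          rcases Option.map_eq_some_iff.mp h with ⟨t, ht, rfl⟩
          rcases ih ht with ⟨a, c, rfl, ha, rfl⟩
          exact ⟨m :: a, c, by simp, by simpa [h2] using ha, by simp⟩
        · rw [del_cons_stop Γ u h1 h2] at h; exact absurd h (by simp)

lemma del_of_spec {l : V × Bool} : ∀ (a c : List (V × Bool)), (∀ m ∈ a, Com Γ l m) →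
    del Γ l (a ++ (l.1, !l.2) :: c) = some (a ++ c) := by
  intro a
  induction a with
  | nil => intro c _; simpa using del_cons_pos Γ c rfl
  | cons m a ih =>
      intro c h
      have hm : Com Γ l m := h m (List.mem_cons_self)
      have hne : m ≠ (l.1, !l.2) := fun he => hm.1 (by rw [he])
      rw [List.cons_append, del_cons_comm Γ _ hne hm,
        ih c (fun x hx => h x (List.mem_cons_of_mem _ hx))]
      rfl


/-- Mixed lemma: deleting the `m`-cancellation cannot create an `l`-cancellation,
when the generators of `l` and `m` commute. -/
lemma del_mix {l m : V × Bool} (h1 : l.1 ≠ m.1) (h2 : ¬ Γ.Adj l.1 m.1) :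
    ∀ {u u₁ : List (V × Bool)}, del Γ m u = some u₁ → del Γ l u = none →
      del Γ l u₁ = none := by
  intro u
  induction u with
  | nil => intro u₁ h; rw [del_nil] at h; exact absurd h (by simp)
  | cons x r ih =>
      intro u₁ hm hl
      by_cases hx1 : x = (m.1, !m.2)
      · rw [del_cons_pos Γ r hx1] at hm
        obtain rfl : r = u₁ := by simpa using hm
        have hxl : x ≠ (l.1, !l.2) := by
          intro he; rw [hx1] at he; exact h1 ((Prod.ext_iff.mp he).1).symm
        have hcom : Com Γ l x := by
          refine ⟨?_, ?_⟩
          · rw [hx1]; exact fun he => h1 he.symm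
          · rw [hx1]; exact fun ha => h2 (Γ.adj_symm ha)
        rw [del_cons_comm Γ r hxl hcom] at hl
        exact Option.map_eq_none_iff.mp hl
      · by_cases hx2 : Com Γ m x
        · rw [del_cons_comm Γ r hx1 hx2] at hm
          rcases Option.map_eq_some_iff.mp hm with ⟨r₁, hr₁, rfl⟩
          by_cases hy1 : x = (l.1, !l.2)
          · rw [del_cons_pos Γ r hy1] at hl; exact absurd hl (by simp)
          · by_cases hy2 : Com Γ l x
            · rw [del_cons_comm Γ r hy1 hy2] at hl
              have := ih hr₁ (Option.map_eq_none_iff.mp hl)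
              rw [del_cons_comm Γ r₁ hy1 hy2, this]; rfl
            · exact del_cons_stop Γ r₁ hy1 hy2
        · rw [del_cons_stop Γ r hx1 hx2] at hm; exact absurd hm (by simp)

/-- Two independent cancellations can be performed in either order. -/
lemma del_both {l m : V × Bool} (h1 : l.1 ≠ m.1) (h2 : ¬ Γ.Adj l.1 m.1) :
    ∀ {u u₁ u₂ : List (V × Bool)}, del Γ l u = some u₂ → del Γ m u = some u₁ →
      ∃ w, del Γ m u₂ = some w ∧ del Γ l u₁ = some w := by
  intro u
  induction u with
  | nil => intro u₁ u₂ h; rw [del_nil] at h; exact absurd h (by simp)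
  | cons x r ih =>
      intro u₁ u₂ hl hm
      by_cases hxl : x = (l.1, !l.2)
      · -- x is the l-target; it commutes with m
        have hxm : x ≠ (m.1, !m.2) := by
          intro he; rw [hxl] at he; exact h1 (Prod.ext_iff.mp he).1
        have hcom : Com Γ m x := by
          constructor
          · rw [hxl]; exact h1
          · rw [hxl]; exact h2
        rw [del_cons_pos Γ r hxl] at hl
        obtain rfl : r = u₂ := by simpa using hl
        rw [del_cons_comm Γ r hxm hcom] at hm
        rcases Option.map_eq_some_iff.mp hm with ⟨r₁, hr₁, rfl⟩
        exact ⟨r₁, hr₁, del_cons_pos Γ r₁ hxl⟩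
      · by_cases hxm : x = (m.1, !m.2)
        · have hcom : Com Γ l x := by
            constructor
            · rw [hxm]; exact fun he => h1 he.symm
            · rw [hxm]; exact fun ha => h2 (Γ.adj_symm ha)
          rw [del_cons_pos Γ r hxm] at hm
          obtain rfl : r = u₁ := by simpa using hm
          rw [del_cons_comm Γ r hxl hcom] at hl
          rcases Option.map_eq_some_iff.mp hl with ⟨r₂, hr₂, rfl⟩
          exact ⟨r₂, del_cons_pos Γ r₂ hxm, hr₂⟩
        · -- x is neither target; both must commute
          have hcl : Com Γ l x := by
            by_contra hc
            rw [del_cons_stop Γ r hxl hc] at hl; exact absurd hl (by simp)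
          have hcm : Com Γ m x := by
            by_contra hc
            rw [del_cons_stop Γ r hxm hc] at hm; exact absurd hm (by simp)
          rw [del_cons_comm Γ r hxl hcl] at hl
          rw [del_cons_comm Γ r hxm hcm] at hm
          rcases Option.map_eq_some_iff.mp hl with ⟨r₂, hr₂, rfl⟩
          rcases Option.map_eq_some_iff.mp hm with ⟨r₁, hr₁, rfl⟩
          rcases ih hr₂ hr₁ with ⟨w, hw1, hw2⟩
          refine ⟨x :: w, ?_, ?_⟩
          · rw [del_cons_comm Γ r₂ hxm hcm, hw1]; rfl
          · rw [del_cons_comm Γ r₁ hxl hcl, hw2]; rfl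


/-- Swapping two adjacent commuting (distinct) letters. -/
inductive SwapR : List (V × Bool) → List (V × Bool) → Prop
  | swap (a b : List (V × Bool)) (x y : V × Bool) (h1 : x.1 ≠ y.1) (h2 : ¬ Γ.Adj x.1 y.1) :
      SwapR (a ++ x :: y :: b) (a ++ y :: x :: b)

/-- Shuffle equivalence: reflexive-transitive closure of swaps. -/
def Shuf (u u' : List (V × Bool)) : Prop := Relation.ReflTransGen (SwapR Γ) u u'

variable {Γ}

lemma SwapR.symm' {u u' : List (V × Bool)} (h : SwapR Γ u u') : SwapR Γ u' u := by
  rcases h with ⟨a, b, x, y, h1, h2⟩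
  exact SwapR.swap a b y x (fun he => h1 he.symm) (fun ha => h2 (Γ.adj_symm ha))

lemma Shuf.refl (u : List (V × Bool)) : Shuf Γ u u := Relation.ReflTransGen.refl

lemma Shuf.trans {u v w : List (V × Bool)} (h : Shuf Γ u v) (h' : Shuf Γ v w) :
    Shuf Γ u w := Relation.ReflTransGen.trans h h'

lemma Shuf.single {u v : List (V × Bool)} (h : SwapR Γ u v) : Shuf Γ u v :=
  Relation.ReflTransGen.single h

lemma Shuf.symm {u v : List (V × Bool)} (h : Shuf Γ u v) : Shuf Γ v u :=
  by
    haveI : Std.Symm (SwapR Γ) := ⟨fun _ _ hh => hh.symm'⟩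
    exact (Relation.ReflTransGen.stdSymm (r := SwapR Γ)).symm _ _ h

lemma SwapR.cons {u v : List (V × Bool)} (x : V × Bool) (h : SwapR Γ u v) :
    SwapR Γ (x :: u) (x :: v) := by
  rcases h with ⟨a, b, z, y, h1, h2⟩
  exact SwapR.swap (x :: a) b z y h1 h2

lemma Shuf.cons {u v : List (V × Bool)} (x : V × Bool) (h : Shuf Γ u v) :
    Shuf Γ (x :: u) (x :: v) :=
  Relation.ReflTransGen.lift (x :: ·) (fun _ _ hh => hh.cons x) _ _ h

lemma SwapR.length {u v : List (V × Bool)} (h : SwapR Γ u v) : u.length = v.length := by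
  rcases h with ⟨a, b, x, y, _, _⟩; simp

lemma Shuf.length {u v : List (V × Bool)} (h : Shuf Γ u v) : u.length = v.length := by
  induction h with
  | refl => rfl
  | tail _ h ih => exact ih.trans h.length

lemma SwapR.eval {u v : List (V × Bool)} (h : SwapR Γ u v) :
    evalWord Γ u = evalWord Γ v := by
  rcases h with ⟨a, b, x, y, h1, h2⟩
  simp only [eval_append, eval_cons]
  rw [← mul_assoc (raagLetter Γ x), (letter_commute Γ h1 h2).eq, mul_assoc]

lemma Shuf.eval {u v : List (V × Bool)} (h : Shuf Γ u v) :
    evalWord Γ u = evalWord Γ v := by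
  induction h with
  | refl => rfl
  | tail _ h ih => exact ih.trans h.eval

/-- A letter can be shuffled past a block of letters commuting with it. -/
lemma shuffle_past {l : V × Bool} : ∀ (a : List (V × Bool)) (c : List (V × Bool)),
    (∀ m ∈ a, Com Γ l m) → Shuf Γ (l :: (a ++ c)) (a ++ l :: c) := by
  intro a
  induction a with
  | nil => intro c _; exact Shuf.refl _
  | cons x a ih =>
      intro c h
      have hx := h x (List.mem_cons_self)
      have hs : SwapR Γ ([] ++ l :: x :: (a ++ c)) ([] ++ x :: l :: (a ++ c)) :=
        SwapR.swap [] (a ++ c) l x (fun he => hx.1 he.symm) (fun ha => hx.2 (Γ.adj_symm ha))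
      refine Shuf.trans (Shuf.single (by simpa using hs)) ?_
      simpa using (ih c (fun m hm => h m (List.mem_cons_of_mem _ hm))).cons x

/-- How deletion interacts with a single swap. -/
lemma del_swap {l : V × Bool} {u u' : List (V × Bool)} (h : SwapR Γ u u') :
    (del Γ l u = none ∧ del Γ l u' = none) ∨
      ∃ s s', del Γ l u = some s ∧ del Γ l u' = some s' ∧ Shuf Γ s s' := by
  rcases h with ⟨a, b, x, y, h1, h2⟩
  induction a with
  | cons z a ih =>
      by_cases hz : z = (l.1, !l.2)
      · right
        refine ⟨a ++ x :: y :: b, a ++ y :: x :: b, del_cons_pos Γ _ hz,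
          del_cons_pos Γ _ hz, Shuf.single (SwapR.swap a b x y h1 h2)⟩
      · by_cases hc : Com Γ l z
        · rcases ih with ⟨hn, hn'⟩ | ⟨s, s', hs, hs', hsh⟩
          · left
            constructor <;> rw [List.cons_append, del_cons_comm Γ _ hz hc]
            · rw [hn]; rfl
            · rw [hn']; rfl
          · right
            refine ⟨z :: s, z :: s', ?_, ?_, hsh.cons z⟩
            · rw [List.cons_append, del_cons_comm Γ _ hz hc, hs]; rfl
            · rw [List.cons_append, del_cons_comm Γ _ hz hc, hs']; rfl
        · left
          constructor <;> rw [List.cons_append, del_cons_stop Γ _ hz hc]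
  | nil =>
      simp only [List.nil_append]
      by_cases hxl : x = (l.1, !l.2)
      · -- x is the target in u; in u', y commutes and then x is found
        have hyl : y ≠ (l.1, !l.2) := fun he => h1 (by rw [hxl, he])
        have hyc : Com Γ l y := by
          constructor
          · intro he; apply h1; rw [hxl]; exact he.symm
          · intro ha; apply h2; rw [hxl]; exact Γ.adj_symm ha
        right
        refine ⟨y :: b, y :: b, del_cons_pos Γ _ hxl, ?_, Shuf.refl _⟩
        rw [del_cons_comm Γ _ hyl hyc, del_cons_pos Γ _ hxl]; rfl
      · by_cases hyl : y = (l.1, !l.2)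
        · have hxc : Com Γ l x := by
            constructor
            · intro he; apply h1; rw [hyl]; exact he
            · intro ha; apply h2; rw [hyl]; exact ha
          right
          refine ⟨x :: b, x :: b, ?_, del_cons_pos Γ _ hyl, Shuf.refl _⟩
          rw [del_cons_comm Γ _ hxl hxc, del_cons_pos Γ _ hyl]; rfl
        · by_cases hxc : Com Γ l x
          · by_cases hyc : Com Γ l y
            · rw [del_cons_comm Γ _ hxl hxc, del_cons_comm Γ _ hyl hyc,
                del_cons_comm Γ _ hyl hyc, del_cons_comm Γ _ hxl hxc]
              cases hd : del Γ l b with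
              | none => left; simp
              | some c =>
                  right
                  refine ⟨x :: y :: c, y :: x :: c, by simp, by simp,
                    Shuf.single ?_⟩
                  exact SwapR.swap [] c x y h1 h2
            · left
              rw [del_cons_comm Γ _ hxl hxc, del_cons_stop Γ _ hyl hyc,
                del_cons_stop Γ _ hyl hyc]
              simp
          · by_cases hyc : Com Γ l y
            · left
              rw [del_cons_stop Γ _ hxl hxc, del_cons_comm Γ _ hyl hyc,
                del_cons_stop Γ _ hxl hxc]
              simp
            · left
              rw [del_cons_stop Γ _ hxl hxc, del_cons_stop Γ _ hyl hyc]
              simp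


variable (Γ)

/-- Recursive "no innermost cancellation" predicate. -/
def NCp : List (V × Bool) → Prop
  | [] => True
  | l :: u => del Γ l u = none ∧ NCp u

/-- Insert a letter in front of a word, performing the cancellation if possible. -/
noncomputable def ins (l : V × Bool) (u : List (V × Bool)) : List (V × Bool) :=
  (del Γ l u).getD (l :: u)

variable {Γ}

lemma ins_of_none {l : V × Bool} {u : List (V × Bool)} (h : del Γ l u = none) :
    ins Γ l u = l :: u := by simp [ins, h]

lemma ins_of_some {l : V × Bool} {u s : List (V × Bool)} (h : del Γ l u = some s) :
    ins Γ l u = s := by simp [ins, h]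

lemma ins_eval (l : V × Bool) (u : List (V × Bool)) :
    evalWord Γ (ins Γ l u) = raagLetter Γ l * evalWord Γ u := by
  cases h : del Γ l u with
  | none => rw [ins_of_none h, eval_cons]
  | some s =>
      rw [ins_of_some h]
      rcases del_some_spec Γ h with ⟨a, c, rfl, ha, rfl⟩
      have hc := commute_eval Γ ha
      have hinv : raagLetter Γ l * raagLetter Γ (l.1, !l.2) = 1 := letter_mul_inv Γ l.1 l.2
      simp only [eval_append, eval_cons]
      rw [← mul_assoc, hc.eq, mul_assoc, ← mul_assoc (raagLetter Γ l), hinv, one_mul]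

lemma ins_length (l : V × Bool) (u : List (V × Bool)) :
    (ins Γ l u).length ≤ u.length + 1 := by
  cases h : del Γ l u with
  | none => rw [ins_of_none h]; simp
  | some s =>
      rw [ins_of_some h]
      have := del_length Γ h
      omega

lemma ncp_cons {l : V × Bool} {u : List (V × Bool)} :
    NCp Γ (l :: u) ↔ del Γ l u = none ∧ NCp Γ u := Iff.rfl

/-- NCp is preserved by swaps (auxiliary form). -/
lemma ncp_swap_aux {x y : V × Bool} (h1 : x.1 ≠ y.1) (h2 : ¬ Γ.Adj x.1 y.1) :
    ∀ (a b : List (V × Bool)), NCp Γ (a ++ x :: y :: b) → NCp Γ (a ++ y :: x :: b) := by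
  intro a
  induction a with
  | cons z a ih =>
      intro b hu
      obtain ⟨hz, hu⟩ := hu
      have hz' : del Γ z (a ++ x :: y :: b) = none := hz
      refine ⟨?_, ih b hu⟩
      rcases del_swap (l := z) (SwapR.swap a b x y h1 h2) with ⟨hn, hn'⟩ | ⟨s, s', hs, hs', _⟩
      · exact hn'
      · rw [hs] at hz'; exact absurd hz' (by simp)
  | nil =>
      intro b hu
      obtain ⟨hx, hy, hu⟩ := hu
      -- hx : del Γ x (y :: b) = none
      have hyx : y ≠ (x.1, !x.2) := by
        intro he
        rw [del_cons_pos Γ b he] at hx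
        exact absurd hx (by simp)
      have hcom : Com Γ x y := ⟨fun he => h1 he.symm, fun ha => h2 (Γ.adj_symm ha)⟩
      have hb : del Γ x b = none := by
        rw [del_cons_comm Γ b hyx hcom] at hx
        exact Option.map_eq_none_iff.mp hx
      refine ⟨?_, hb, hu⟩
      have hxy : x ≠ (y.1, !y.2) := fun he => h1 (by rw [he])
      have hcom' : Com Γ y x := ⟨h1, h2⟩
      rw [del_cons_comm Γ b hxy hcom', hy]
      rfl

/-- NCp is preserved by swaps. -/
lemma ncp_swap {u u' : List (V × Bool)} (h : SwapR Γ u u') (hu : NCp Γ u) : NCp Γ u' := by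
  rcases h with ⟨a, b, x, y, h1, h2⟩
  exact ncp_swap_aux h1 h2 a b hu

lemma ncp_shuf {u u' : List (V × Bool)} (h : Shuf Γ u u') (hu : NCp Γ u) : NCp Γ u' := by
  induction h with
  | refl => exact hu
  | tail _ h ih => exact ncp_swap h ih

/-- Deletion preserves NCp. -/
lemma del_ncp : ∀ {u s : List (V × Bool)}, NCp Γ u → del Γ l u = some s → NCp Γ s := by
  intro u
  induction u with
  | nil => intro s _ h; rw [del_nil] at h; exact absurd h (by simp)
  | cons x r ih =>
      intro s hu h
      rcases hu with ⟨hx, hr⟩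
      by_cases h1 : x = (l.1, !l.2)
      · rw [del_cons_pos Γ r h1] at h
        obtain rfl : r = s := by simpa using h
        exact hr
      · by_cases h2 : Com Γ l x
        · rw [del_cons_comm Γ r h1 h2] at h
          rcases Option.map_eq_some_iff.mp h with ⟨r', hr', rfl⟩
          refine ⟨?_, ih hr hr'⟩
          exact del_mix Γ (l := x) (m := l) h2.1 h2.2 hr' hx
        · rw [del_cons_stop Γ r h1 h2] at h; exact absurd h (by simp)

lemma ncp_ins (l : V × Bool) {u : List (V × Bool)} (hu : NCp Γ u) : NCp Γ (ins Γ l u) := by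
  cases h : del Γ l u with
  | none => rw [ins_of_none h]; exact ⟨h, hu⟩
  | some s => rw [ins_of_some h]; exact del_ncp hu h

/-- Insertion respects single swaps, up to shuffle. -/
lemma ins_swap {l : V × Bool} {u u' : List (V × Bool)} (h : SwapR Γ u u') :
    Shuf Γ (ins Γ l u) (ins Γ l u') := by
  rcases del_swap h (l := l) with ⟨hn, hn'⟩ | ⟨s, s', hs, hs', hsh⟩
  · rw [ins_of_none hn, ins_of_none hn']
    exact (Shuf.single h).cons l
  · rw [ins_of_some hs, ins_of_some hs']
    exact hsh

/-- Inverse property: inserting `l⁻¹` then `l` is a shuffle of the identity. -/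
lemma ins_inv (v : V) (b : Bool) {u : List (V × Bool)} (hu : NCp Γ u) :
    Shuf Γ (ins Γ (v, b) (ins Γ (v, !b) u)) u := by
  cases h : del Γ (v, !b) u with
  | none =>
      rw [ins_of_none h]
      have : del Γ (v, b) ((v, !b) :: u) = some u :=
        del_cons_pos Γ u (show (v, !b) = ((v, b).1, !(v, b).2) by simp)
      rw [ins_of_some this]
      exact Shuf.refl _
  | some u' =>
      rw [ins_of_some h]
      -- first: del Γ (v,b) u' = none
      have hnone : ∀ (u : List (V × Bool)), NCp Γ u →
          ∀ {u'}, del Γ (v, !b) u = some u' → del Γ (v, b) u' = none := by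
        intro u
        induction u with
        | nil => intro _ u' h; rw [del_nil] at h; exact absurd h (by simp)
        | cons x r ih =>
            intro hu u' hd
            rcases hu with ⟨hx, hr⟩
            by_cases h1 : x = (v, !(!b))
            · rw [del_cons_pos Γ r h1] at hd
              obtain rfl : r = u' := by simpa using hd
              have : x = (v, b) := by simpa using h1
              rw [this] at hx; exact hx
            · by_cases h2 : Com Γ (v, !b) x
              · rw [del_cons_comm Γ r h1 h2] at hd
                rcases Option.map_eq_some_iff.mp hd with ⟨r', hr', rfl⟩
                have hx1 : x ≠ ((v, b).1, !(v, b).2) := by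
                  intro he; exact h2.1 (by rw [he])
                have hx2 : Com Γ (v, b) x := h2
                rw [del_cons_comm Γ r' hx1 hx2, ih hr hr']
                rfl
              · rw [del_cons_stop Γ r h1 h2] at hd; exact absurd hd (by simp)
      have h0 : del Γ (v, b) u' = none := hnone u hu h
      rw [ins_of_none h0]
      rcases del_some_spec Γ h with ⟨a, c, hu', ha, rfl⟩
      have : ((v, !b).1, !(v, !b).2) = (v, b) := by simp
      rw [this] at hu'
      rw [hu']
      exact shuffle_past a c ha

/-- Commutation property of insertions of commuting letters. -/
lemma ins_comm {l m : V × Bool} (h1 : l.1 ≠ m.1) (h2 : ¬ Γ.Adj l.1 m.1)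
    (u : List (V × Bool)) :
    Shuf Γ (ins Γ l (ins Γ m u)) (ins Γ m (ins Γ l u)) := by
  have hml : m ≠ (l.1, !l.2) := fun he => h1 (Prod.ext_iff.mp he).1.symm
  have hlm : l ≠ (m.1, !m.2) := fun he => h1 (Prod.ext_iff.mp he).1
  have hcml : Com Γ l m := ⟨fun he => h1 he.symm, fun ha => h2 (Γ.adj_symm ha)⟩
  have hclm : Com Γ m l := ⟨h1, h2⟩
  cases hl : del Γ l u with
  | none =>
      cases hm : del Γ m u with
      | none =>
          rw [ins_of_none hm, ins_of_none hl]
          have dl : del Γ l (m :: u) = none := by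
            rw [del_cons_comm Γ u hml hcml, hl]; rfl
          have dm : del Γ m (l :: u) = none := by
            rw [del_cons_comm Γ u hlm hclm, hm]; rfl
          rw [ins_of_none dl, ins_of_none dm]
          exact Shuf.single (SwapR.swap [] u l m h1 h2)
      | some u₁ =>
          rw [ins_of_some hm, ins_of_none hl]
          have d1 : del Γ l u₁ = none := del_mix Γ h1 h2 hm hl
          rw [ins_of_none d1]
          have dm : del Γ m (l :: u) = some (l :: u₁) := by
            rw [del_cons_comm Γ u hlm hclm, hm]; rfl
          rw [ins_of_some dm]
          exact Shuf.refl _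
  | some u₂ =>
      cases hm : del Γ m u with
      | none =>
          rw [ins_of_none hm, ins_of_some hl]
          have d1 : del Γ m u₂ = none :=
            del_mix Γ (fun he => h1 he.symm) (fun ha => h2 (Γ.adj_symm ha)) hl hm
          have dl : del Γ l (m :: u) = some (m :: u₂) := by
            rw [del_cons_comm Γ u hml hcml, hl]; rfl
          rw [ins_of_none d1, ins_of_some dl]
          exact Shuf.refl _
      | some u₁ =>
          rcases del_both Γ h1 h2 hl hm with ⟨w, hw1, hw2⟩
          rw [ins_of_some hm, ins_of_some hl, ins_of_some hw2, ins_of_some hw1]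
          exact Shuf.refl _


/-! ### The action of the RAAG on shuffle classes of non-cancellable words -/

def RW (Γ : SimpleGraph V) : Type := {w : List (V × Bool) // NCp Γ w}

def rwRel (Γ : SimpleGraph V) (a b : RW Γ) : Prop := SwapR Γ a.1 b.1

def XQ (Γ : SimpleGraph V) : Type := Quot (rwRel Γ)

def mkX {Γ : SimpleGraph V} (w : List (V × Bool)) (h : NCp Γ w) : XQ Γ :=
  Quot.mk _ ⟨w, h⟩

lemma mkX_eq_of_shuf {Γ : SimpleGraph V} {w w' : List (V × Bool)} (h : Shuf Γ w w')
    (hw : NCp Γ w) : ∀ (hw' : NCp Γ w'), mkX w hw = mkX w' hw' := by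
  induction h with
  | refl => intro hw'; rfl
  | @tail b c hab hbc ih =>
      intro hw'
      have hb : NCp Γ b := ncp_shuf hab hw
      exact (ih hb).trans (Quot.sound hbc)

noncomputable def insXQ {Γ : SimpleGraph V} (l : V × Bool) : XQ Γ → XQ Γ :=
  Quot.lift (fun a => mkX (ins Γ l a.1) (ncp_ins l a.2))
    (fun a b hab => mkX_eq_of_shuf (ins_swap hab) (ncp_ins l a.2) (ncp_ins l b.2))

lemma insXQ_mk {Γ : SimpleGraph V} (l : V × Bool) (w : List (V × Bool)) (h : NCp Γ w) :
    insXQ l (mkX w h) = mkX (ins Γ l w) (ncp_ins l h) := rfl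

noncomputable def permX (Γ : SimpleGraph V) (v : V) : Equiv.Perm (XQ Γ) where
  toFun := insXQ (v, true)
  invFun := insXQ (v, false)
  left_inv := by
    intro x
    induction x using Quot.ind with
    | _ a => exact mkX_eq_of_shuf (ins_inv v false a.2) (ncp_ins _ (ncp_ins _ a.2)) a.2
  right_inv := by
    intro x
    induction x using Quot.ind with
    | _ a => exact mkX_eq_of_shuf (ins_inv v true a.2) (ncp_ins _ (ncp_ins _ a.2)) a.2

lemma permX_comm {Γ : SimpleGraph V} {v w : V} (hvw : v ≠ w) (hna : ¬ Γ.Adj v w) :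
    permX Γ v * permX Γ w = permX Γ w * permX Γ v := by
  refine Equiv.ext (fun x => ?_)
  induction x using Quot.ind with
  | _ a =>
      show permX Γ v (permX Γ w (Quot.mk _ a)) = permX Γ w (permX Γ v (Quot.mk _ a))
      exact mkX_eq_of_shuf (ins_comm (l := (v, true)) (m := (w, true)) hvw hna a.1)
        (ncp_ins _ (ncp_ins _ a.2)) (ncp_ins _ (ncp_ins _ a.2))

open commutatorElement in
noncomputable def piHom (Γ : SimpleGraph V) : RAAG Γ →* Equiv.Perm (XQ Γ) :=
  PresentedGroup.toGroup (f := fun v => permX Γ v) (by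
    rintro r ⟨v, w, hvw, hna, rfl⟩
    simp only [map_mul, map_inv, FreeGroup.lift_apply_of]
    have hcomm := permX_comm hvw hna
    have h1 : ⁅permX Γ v, permX Γ w⁆ = 1 :=
      commutatorElement_eq_one_iff_mul_comm.mpr hcomm
    rwa [commutatorElement_def] at h1)

lemma pi_letter {Γ : SimpleGraph V} (l : V × Bool) (x : XQ Γ) :
    piHom Γ (raagLetter Γ l) x = insXQ l x := by
  obtain ⟨v, b⟩ := l
  cases b
  · rw [letter_false, map_inv]
    have h1 : piHom Γ (raagGen Γ v) = permX Γ v := PresentedGroup.toGroup.of _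
    rw [h1]
    rfl
  · rw [letter_true]
    have h1 : piHom Γ (raagGen Γ v) = permX Γ v := PresentedGroup.toGroup.of _
    rw [h1]
    rfl

noncomputable def lenX {Γ : SimpleGraph V} : XQ Γ → ℕ :=
  Quot.lift (fun a => a.1.length) (fun _ _ h => h.length)

def nilX (Γ : SimpleGraph V) : XQ Γ := mkX [] trivial

lemma run_cons {Γ : SimpleGraph V} (l : V × Bool) (u : List (V × Bool)) (x : XQ Γ) :
    piHom Γ (evalWord Γ (l :: u)) x = insXQ l (piHom Γ (evalWord Γ u) x) := by
  rw [eval_cons, map_mul, Equiv.Perm.mul_apply, pi_letter]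

lemma run_le {Γ : SimpleGraph V} (w : List (V × Bool)) :
    lenX (piHom Γ (evalWord Γ w) (nilX Γ)) ≤ w.length := by
  induction w with
  | nil =>
      rw [eval_nil, map_one]
      exact Nat.le_refl _
  | cons l u ih =>
      rw [run_cons]
      have key : ∀ y : XQ Γ, lenX (insXQ l y) ≤ lenX y + 1 := by
        intro y
        induction y using Quot.ind with
        | _ a => exact ins_length l a.1
      calc lenX (insXQ l (piHom Γ (evalWord Γ u) (nilX Γ)))
          ≤ lenX (piHom Γ (evalWord Γ u) (nilX Γ)) + 1 := key _
        _ ≤ u.length + 1 := by omega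
        _ = (l :: u).length := by simp

lemma run_ncp {Γ : SimpleGraph V} (w : List (V × Bool)) (hw : NCp Γ w) :
    piHom Γ (evalWord Γ w) (nilX Γ) = mkX w hw := by
  induction w with
  | nil => rw [eval_nil, map_one]; rfl
  | cons l u ih =>
      obtain ⟨hd, hu⟩ := hw
      rw [run_cons, ih hu, insXQ_mk]
      apply mkX_eq_of_shuf
      rw [ins_of_none hd]
      exact Shuf.refl _


/-! ### Bridge to the statement -/

/-- The "has an innermost cancellation" predicate of the theorem. -/
def HasC (Γ : SimpleGraph V) (w : List (V × Bool)) : Prop :=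
  ∃ (w₁ w₂ w₃ : List (V × Bool)) (v : V) (b : Bool),
    w = w₁ ++ [(v, b)] ++ w₂ ++ [(v, !b)] ++ w₃ ∧
    ∀ l ∈ w₂, l.1 ≠ v ∧ ¬ Γ.Adj l.1 v

lemma hasC_cons {x : V × Bool} {u : List (V × Bool)} :
    HasC Γ (x :: u) ↔
      (∃ a c, u = a ++ (x.1, !x.2) :: c ∧ ∀ m ∈ a, Com Γ x m) ∨ HasC Γ u := by
  constructor
  · rintro ⟨w₁, w₂, w₃, v, b, heq, hcm⟩
    simp only [List.append_assoc, List.singleton_append] at heq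
    cases w₁ with
    | nil =>
        rw [List.nil_append] at heq
        obtain ⟨rfl, rfl⟩ : x = (v, b) ∧ u = w₂ ++ (v, !b) :: w₃ := by
          constructor <;> [exact (List.cons.injEq _ _ _ _ ▸ heq).1;
            exact (List.cons.injEq _ _ _ _ ▸ heq).2]
        left
        exact ⟨w₂, w₃, rfl, fun m hm => ⟨(hcm m hm).1, (hcm m hm).2⟩⟩
    | cons z w₁ =>
        rw [List.cons_append] at heq
        obtain ⟨rfl, rfl⟩ : x = z ∧ u = w₁ ++ (v, b) :: (w₂ ++ (v, !b) :: w₃) := by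
          constructor <;> [exact (List.cons.injEq _ _ _ _ ▸ heq).1;
            exact (List.cons.injEq _ _ _ _ ▸ heq).2]
        right
        exact ⟨w₁, w₂, w₃, v, b, by simp, hcm⟩
  · rintro (⟨a, c, rfl, hcm⟩ | ⟨w₁, w₂, w₃, v, b, rfl, hcm⟩)
    · exact ⟨[], a, c, x.1, x.2, by simp, fun m hm => ⟨(hcm m hm).1, (hcm m hm).2⟩⟩
    · exact ⟨x :: w₁, w₂, w₃, v, b, by simp, hcm⟩

lemma hasC_iff : ∀ (w : List (V × Bool)), HasC Γ w ↔ ¬ NCp Γ w := by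
  intro w
  induction w with
  | nil =>
      constructor
      · rintro ⟨w₁, w₂, w₃, v, b, heq, -⟩
        exact absurd heq.symm (by simp)
      · intro h; exact absurd trivial h
  | cons x u ih =>
      rw [hasC_cons]
      show _ ↔ ¬ (del Γ x u = none ∧ NCp Γ u)
      constructor
      · rintro (⟨a, c, rfl, hcm⟩ | h) ⟨hd, hn⟩
        · rw [del_of_spec Γ a c hcm] at hd
          exact absurd hd (by simp)
        · exact (ih.mp h) hn
      · intro h
        by_cases hd : del Γ x u = none
        · right
          exact ih.mpr (fun hn => h ⟨hd, hn⟩)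
        · left
          rcases Option.ne_none_iff_exists'.mp hd with ⟨s, hs⟩
          rcases del_some_spec Γ hs with ⟨a, c, heq, hcm, -⟩
          exact ⟨a, c, heq, hcm⟩

lemma eval_cancel (w₁ w₂ w₃ : List (V × Bool)) (v : V) (b : Bool)
    (hcm : ∀ l ∈ w₂, l.1 ≠ v ∧ ¬ Γ.Adj l.1 v) :
    evalWord Γ (w₁ ++ [(v, b)] ++ w₂ ++ [(v, !b)] ++ w₃) =
      evalWord Γ ((w₁ ++ w₂) ++ w₃) := by
  have hx : Commute (raagLetter Γ (v, b)) (evalWord Γ w₂) :=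
    commute_eval Γ (by exact hcm)
  have hinv : raagLetter Γ (v, b) * raagLetter Γ (v, !b) = 1 := letter_mul_inv Γ v b
  simp only [eval_append, eval_cons, eval_nil, mul_one]
  rw [mul_assoc (evalWord Γ w₁), hx.eq, ← mul_assoc (evalWord Γ w₁),
    mul_assoc (evalWord Γ w₁ * evalWord Γ w₂), hinv, mul_one]


end Stmt9Aux

open Stmt9Aux in
theorem stmt9 {V : Type} (Γ : SimpleGraph V) (w : List (V × Bool)) :
    IsReducedWord Γ w ↔
      ¬ ∃ (w₁ w₂ w₃ : List (V × Bool)) (v : V) (b : Bool),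
        w = w₁ ++ [(v, b)] ++ w₂ ++ [(v, !b)] ++ w₃ ∧
        ∀ l ∈ w₂, l.1 ≠ v ∧ ¬ Γ.Adj l.1 v := by
  show IsReducedWord Γ w ↔ ¬ HasC Γ w
  constructor
  · intro hred hC
    obtain ⟨w₁, w₂, w₃, v, b, heq, hcm⟩ := hC
    have hev : evalWord Γ w = evalWord Γ ((w₁ ++ w₂) ++ w₃) := by
      rw [heq]; exact eval_cancel w₁ w₂ w₃ v b hcm
    have hmem : wlen Γ (evalWord Γ w) ≤ ((w₁ ++ w₂) ++ w₃).length :=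
      Nat.sInf_le ⟨(w₁ ++ w₂) ++ w₃, hev.symm, rfl⟩
    have hlen : ((w₁ ++ w₂) ++ w₃).length + 2 = w.length := by
      rw [heq]; simp; omega
    rw [IsReducedWord] at hred
    omega
  · intro hnc
    have hncp : NCp Γ w := by
      by_contra h
      exact hnc ((hasC_iff w).mpr h)
    refine le_antisymm ?_ (Nat.sInf_le ⟨w, rfl, rfl⟩)
    refine le_csInf ⟨w.length, ⟨w, rfl, rfl⟩⟩ ?_
    rintro n ⟨w', hw', rfl⟩
    have h1 : lenX (piHom Γ (evalWord Γ w') (nilX Γ)) ≤ w'.length := run_le w'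
    rw [hw', run_ncp w hncp] at h1
    exact h1
end

section
/- In a right-angled Artin group G(Γ), suppose a reduced word w represents g and w·w⋯w (n copies, n ≥ 2) is not reduced. Then there are words w₃, w₅, w₂ and a letter x ∈ V(Γ)^{±1} such that w = w₃ x⁻¹ w₅ x w₂, where x disjointly commutes with w₂ and x⁻¹ disjointly commutes with w₃; in particular g admits a geodesic decomposition g = x⁻¹hx with h = w₃w₅w₂. -/
namespace S10
open Classical

variable {V : Type} (Γ : SimpleGraph V)

/-- letter inverse -/
def linv (l : V × Bool) : V × Bool := (l.1, !l.2)

@[simp] lemma linv_linv (l : V × Bool) : linv (linv l) = l := by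
  cases l with | mk a b => cases b <;> rfl

@[simp] lemma linv_fst (l : V × Bool) : (linv l).1 = l.1 := rfl

/-- `l` commutes with `m` -/
def lcomm (l m : V × Bool) : Prop := l.1 ≠ m.1 ∧ ¬ Γ.Adj l.1 m.1

lemma lcomm_symm {l m : V × Bool} (h : lcomm Γ l m) : lcomm Γ m l :=
  ⟨h.1.symm, fun a => h.2 a.symm⟩

@[simp] lemma lcomm_linv_left (l m : V × Bool) : lcomm Γ (linv l) m ↔ lcomm Γ l m := Iff.rfl

@[simp] lemma lcomm_linv_right (l m : V × Bool) : lcomm Γ l (linv m) ↔ lcomm Γ l m := Iff.rfl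

lemma not_lcomm_self (l : V × Bool) : ¬ lcomm Γ l l := fun h => h.1 rfl

lemma not_lcomm_linv (l : V × Bool) : ¬ lcomm Γ l (linv l) := fun h => h.1 rfl

lemma ne_linv_of_lcomm {l m : V × Bool} (h : lcomm Γ l m) : m ≠ linv l := by
  intro e; exact h.1 (by rw [e, linv_fst])

/-- `l` can be cancelled against an `l⁻¹` in `w` after a commuting prefix. -/
def Deletable (l : V × Bool) (w : List (V × Bool)) : Prop :=
  ∃ a c : List (V × Bool), (∀ x ∈ a, lcomm Γ l x) ∧ w = a ++ linv l :: c

lemma decomp_unique {l : V × Bool} :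
    ∀ {a c a' c' : List (V × Bool)}, (∀ x ∈ a, lcomm Γ l x) → (∀ x ∈ a', lcomm Γ l x) →
    a ++ linv l :: c = a' ++ linv l :: c' → a = a' ∧ c = c' := by
  intro a
  induction a with
  | nil =>
    intro c a' c' _ ha' h
    cases a' with
    | nil => simpa using h
    | cons x t =>
      exfalso
      have hx : x = linv l := by simpa using (congrArg List.head? h).symm
      exact (ha' x (by simp)).1 (by rw [hx, linv_fst])
  | cons x t ih =>
    intro c a' c' ha ha' h
    cases a' with
    | nil =>
      exfalso
      have hx : x = linv l := by simpa using congrArg List.head? h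
      exact (ha x (by simp)).1 (by rw [hx, linv_fst])
    | cons y t' =>
      simp only [List.cons_append, List.cons.injEq] at h
      obtain ⟨rfl, h2⟩ := h
      obtain ⟨h3, h4⟩ := ih (fun z hz => ha z (by simp [hz])) (fun z hz => ha' z (by simp [hz])) h2
      exact ⟨by rw [h3], h4⟩

end S10

namespace S10
variable {V : Type} (Γ : SimpleGraph V)

open Classical in
/-- act of letter `l` on words: cancel if possible, else prepend. -/
noncomputable def act (l : V × Bool) (w : List (V × Bool)) : List (V × Bool) :=
  if h : Deletable Γ l w then h.choose ++ h.choose_spec.choose else l :: w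

lemma act_eq_of_decomp {l : V × Bool} {w a c : List (V × Bool)}
    (ha : ∀ x ∈ a, lcomm Γ l x) (hw : w = a ++ linv l :: c) : act Γ l w = a ++ c := by
  have hD : Deletable Γ l w := ⟨a, c, ha, hw⟩
  rw [act, dif_pos hD]
  obtain ⟨h1, h2⟩ := hD.choose_spec.choose_spec
  obtain ⟨e1, e2⟩ := decomp_unique Γ h1 ha (h2.symm.trans hw)
  exact congrArg₂ (· ++ ·) e1 e2

lemma act_eq_cons {l : V × Bool} {w : List (V × Bool)} (h : ¬ Deletable Γ l w) :
    act Γ l w = l :: w := by rw [act, dif_neg h]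

/-- `w` contains a cancelling pair. -/
def HasPair (w : List (V × Bool)) : Prop :=
  ∃ (u₁ : List (V × Bool)) (l : V × Bool) (a u₂ : List (V × Bool)),
    (∀ x ∈ a, lcomm Γ l x) ∧ w = u₁ ++ l :: a ++ linv l :: u₂

/-- combinatorially reduced -/
def Red (w : List (V × Bool)) : Prop := ¬ HasPair Γ w

lemma red_nil : Red Γ [] := by
  rintro ⟨u₁, l, a, u₂, _, h⟩
  exact absurd (congrArg List.length h) (by simp)

lemma hasPair_cons_iff {x : V × Bool} {t : List (V × Bool)} :
    HasPair Γ (x :: t) ↔ Deletable Γ x t ∨ HasPair Γ t := by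
  constructor
  · rintro ⟨u₁, l, a, u₂, ha, h⟩
    cases u₁ with
    | nil =>
      rw [List.nil_append] at h
      injection h with h1 h2
      exact Or.inl ⟨a, u₂, h1 ▸ ha, h1 ▸ h2⟩
    | cons y t' =>
      rw [List.cons_append] at h
      injection h with h1 h2
      exact Or.inr ⟨t', l, a, u₂, ha, h2⟩
  · rintro (⟨a, c, ha, hc⟩ | ⟨u₁, l, a, u₂, ha, h⟩)
    · exact ⟨[], x, a, c, ha, by simp [hc]⟩
    · exact ⟨x :: u₁, l, a, u₂, ha, by simp [h]⟩

lemma red_cons_iff {x : V × Bool} {t : List (V × Bool)} :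
    Red Γ (x :: t) ↔ ¬ Deletable Γ x t ∧ Red Γ t := by
  rw [Red, hasPair_cons_iff]; tauto

end S10

namespace S10
variable {V : Type} (Γ : SimpleGraph V)

lemma getElem_split {α : Type*} {w p q : List α} {x : α} (h : w = p ++ x :: q)
    {k : ℕ} (hk : k < w.length) (he : k = p.length) : w[k] = x := by
  subst h he
  rw [List.getElem_append_right le_rfl]; simp

lemma getElem_mem_middle {α : Type*} {w p a q : List α} (h : w = p ++ a ++ q)
    {k : ℕ} (h1 : p.length ≤ k) (h2 : k < p.length + a.length)
    (hk : k < w.length) : w[k] ∈ a := by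
  subst h
  rw [List.getElem_append_left (by simp; omega), List.getElem_append_right h1]
  exact List.getElem_mem _

def IdxPair (w : List (V × Bool)) (i j : ℕ) : Prop :=
  ∃ (hij : i < j) (hj : j < w.length),
    w[j]'hj = linv (w[i]'(hij.trans hj)) ∧
    ∀ (k : ℕ) (hik : i < k) (hkj : k < j), lcomm Γ (w[i]'(hij.trans hj)) (w[k]'(hkj.trans hj))

lemma idxPair_of_hasPair {w : List (V × Bool)} (h : HasPair Γ w) :
    ∃ i j, IdxPair Γ w i j := by
  obtain ⟨u₁, l, a, u₂, ha, hw⟩ := h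
  have hlen : w.length = u₁.length + a.length + u₂.length + 2 := by
    subst hw; simp; omega
  have hij : u₁.length < u₁.length + a.length + 1 := by omega
  have hj : u₁.length + a.length + 1 < w.length := by omega
  have hi : w[u₁.length]'(hij.trans hj) = l :=
    getElem_split (p := u₁) (x := l) (q := a ++ linv l :: u₂) (by simp [hw]) (hij.trans hj) rfl
  have hw' : w = (u₁ ++ l :: a) ++ linv l :: u₂ := by simp [hw]
  have hjv : w[u₁.length + a.length + 1]'hj = linv l :=
    getElem_split hw' hj (by simp [Nat.add_assoc])
  refine ⟨u₁.length, u₁.length + a.length + 1, hij, hj, by rw [hi, hjv], ?_⟩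
  intro k hik hkj
  rw [hi]
  have hw'' : w = (u₁ ++ [l]) ++ a ++ (linv l :: u₂) := by rw [hw]; simp
  exact ha _ (getElem_mem_middle hw'' (by simp; omega) (by simp; omega) _)

lemma hasPair_of_idxPair {w : List (V × Bool)} {i j : ℕ} (h : IdxPair Γ w i j) :
    HasPair Γ w := by
  obtain ⟨hij, hj, hlet, hmid⟩ := h
  refine ⟨w.take i, w[i]'(hij.trans hj), (w.take j).drop (i+1), w.drop (j+1), ?_, ?_⟩
  · intro x hx
    obtain ⟨r, hr, hxr⟩ := List.mem_iff_getElem.1 hx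
    have hrlen : i + 1 + r < j := by
      simp only [List.length_drop, List.length_take] at hr; omega
    have hx' : x = w[i+1+r]'(hrlen.trans hj) := by
      rw [← hxr, List.getElem_drop, List.getElem_take]
    exact hx' ▸ hmid (i+1+r) (by omega) hrlen
  · rw [← hlet]
    have h1 : w = w.take j ++ w[j]'hj :: w.drop (j+1) := by
      conv_lhs => rw [← List.take_append_drop j w, List.drop_eq_getElem_cons hj]
    have h3 : w.take (i+1) = w.take i ++ [w[i]'(hij.trans hj)] := by
      rw [List.take_succ, List.getElem?_eq_getElem (hij.trans hj)]
      rfl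
    have h2 : w.take j = (w.take i ++ [w[i]'(hij.trans hj)]) ++ (w.take j).drop (i+1) := by
      conv_lhs => rw [← List.take_append_drop (i+1) (w.take j)]
      rw [List.take_take, min_eq_left (by omega), h3]
    conv_lhs => rw [h1, h2]
    simp only [List.append_assoc, List.singleton_append, List.cons_append, List.nil_append]

end S10

namespace S10
variable {V : Type} (Γ : SimpleGraph V)

lemma getElem_idx_congr {α : Type*} {w : List α} {m m' : ℕ} (h : m = m')
    (hm' : m' < w.length) (hm : m < w.length) : w[m]'hm = w[m']'hm' := by subst h; rfl

/-- exchange two adjacent commuting letters -/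
def SwapStep (w w' : List (V × Bool)) : Prop :=
  ∃ (s t : List (V × Bool)) (x y : V × Bool),
    lcomm Γ x y ∧ w = s ++ x :: y :: t ∧ w' = s ++ y :: x :: t

lemma SwapStep.symm {w w' : List (V × Bool)} (h : SwapStep Γ w w') : SwapStep Γ w' w := by
  obtain ⟨s, t, x, y, hxy, h1, h2⟩ := h
  exact ⟨s, t, y, x, lcomm_symm Γ hxy, h2, h1⟩

lemma SwapStep.length_eq {w w' : List (V × Bool)} (h : SwapStep Γ w w') :
    w.length = w'.length := by
  obtain ⟨s, t, x, y, _, h1, h2⟩ := h; subst h1 h2; simp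

def swapIdx (p k : ℕ) : ℕ := if k = p then p + 1 else if k = p + 1 then p else k

lemma swapIdx_invol (p k : ℕ) : swapIdx p (swapIdx p k) = k := by
  unfold swapIdx; split_ifs <;> omega

lemma getElem_win2_left {α : Type*} {s t : List α} {a b : α} {k : ℕ}
    (hk : k < s.length) (h : k < (s ++ a :: b :: t).length) :
    (s ++ a :: b :: t)[k] = s[k] := List.getElem_append_left hk

lemma getElem_win2_a {α : Type*} {s t : List α} {a b : α}
    (h : s.length < (s ++ a :: b :: t).length) : (s ++ a :: b :: t)[s.length] = a :=
  getElem_split rfl _ rfl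

lemma getElem_win2_b {α : Type*} {s t : List α} {a b : α}
    (h : s.length + 1 < (s ++ a :: b :: t).length) : (s ++ a :: b :: t)[s.length + 1] = b :=
  getElem_split (p := s ++ [a]) (q := t) (by simp) _ (by simp)

lemma getElem_win2_right {α : Type*} {s t : List α} {a b : α} {k : ℕ}
    (hk : s.length + 2 ≤ k) (h : k < (s ++ a :: b :: t).length) :
    (s ++ a :: b :: t)[k] = t[k - s.length - 2]'(by simp at h ⊢; omega) := by
  rw [List.getElem_append_right (by omega)]
  have h2 : k - s.length = (k - s.length - 2) + 2 := by omega
  rw [getElem_idx_congr h2 (by simp at h ⊢; omega)]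
  simp

lemma swap_getElem {s t : List (V × Bool)} {x y : V × Bool} {k : ℕ}
    (hk : k < (s ++ y :: x :: t).length)
    (hσ : swapIdx s.length k < (s ++ x :: y :: t).length) :
    (s ++ y :: x :: t)[k] = (s ++ x :: y :: t)[swapIdx s.length k] := by
  have hl : (s ++ y :: x :: t).length = s.length + t.length + 2 := by simp; omega
  have hl' : (s ++ x :: y :: t).length = s.length + t.length + 2 := by simp; omega
  unfold swapIdx at *
  split_ifs with h1 h2
  · subst h1
    rw [getElem_win2_a (by omega), getElem_win2_b (by omega)]
  · subst h2
    rw [getElem_win2_b (by omega), getElem_win2_a (by omega)]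
  · rcases lt_or_ge k s.length with h3 | h3
    · rw [getElem_win2_left h3, getElem_win2_left h3]
    · have h4 : s.length + 2 ≤ k := by omega
      rw [getElem_win2_right h4, getElem_win2_right h4]

lemma idxPair_swapStep {w w' : List (V × Bool)} (hs : SwapStep Γ w w')
    {i j : ℕ} (hp : IdxPair Γ w i j) : ∃ i' j', IdxPair Γ w' i' j' := by
  obtain ⟨s, t, x, y, hxy, hw, hw'⟩ := hs
  obtain ⟨hij, hj, hlet, hmid⟩ := hp
  set p := s.length with hp'
  have hlw : w.length = p + t.length + 2 := by subst hw; simp; omega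
  have hlw' : w'.length = p + t.length + 2 := by subst hw'; simp; omega
  have hxv : w[p]'(by omega) = x := by subst hw; exact getElem_win2_a (by omega)
  have hyv : w[p+1]'(by omega) = y := by subst hw; exact getElem_win2_b (by omega)
  have hbound : ∀ k, k < w.length → swapIdx p k < w.length := by
    intro k hk; unfold swapIdx; split_ifs <;> omega
  have F1 : ∀ (k : ℕ) (hk : k < w'.length),
      w'[k]'hk = w[swapIdx p k]'(hbound k (by omega)) := by
    intro k hk
    subst hw hw'
    exact swap_getElem hk _
  -- the pair cannot be exactly the swapped window
  have hne : ¬ (i = p ∧ j = p + 1) := by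
    rintro ⟨rfl, rfl⟩
    apply not_lcomm_linv Γ x
    have hyx : y = linv x := by rw [← hyv, ← hxv]; exact hlet
    rwa [hyx] at hxy
  have hiw : i < w.length := by omega
  have hσij : swapIdx p i < swapIdx p j := by
    unfold swapIdx; split_ifs <;> omega
  have hσj : swapIdx p j < w'.length := by
    have := hbound j (by omega); omega
  refine ⟨swapIdx p i, swapIdx p j, hσij, hσj, ?_, ?_⟩
  · rw [F1, F1, getElem_idx_congr (swapIdx_invol p j) (by omega),
      getElem_idx_congr (swapIdx_invol p i) (by omega)]
    exact hlet
  · intro k hik hkj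
    have hkw : k < w.length := by omega
    rw [F1, F1, getElem_idx_congr (swapIdx_invol p i) (by omega)]
    by_cases hin : i < swapIdx p k ∧ swapIdx p k < j
    · exact hmid _ hin.1 hin.2
    -- special cases
    · by_cases hkp : k = p
      · -- then j = p, letter w[j] = x = linv l, σ k = p + 1 letter y
        have hjp : j = p := by
          subst hkp
          unfold swapIdx at hik hkj hin
          split_ifs at hik hkj hin <;> omega
        have : w[swapIdx p k]'(hbound k hkw) = y := by
          rw [getElem_idx_congr (by unfold swapIdx; split_ifs <;> omega : swapIdx p k = p + 1) (by omega)]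
          exact hyv
        rw [this]
        have hx' : x = linv (w[i]'(hij.trans hj)) := by
          rw [← hxv, ← hlet]
          exact getElem_idx_congr hjp.symm hj (by omega)
        have h7 := hxy
        rw [hx'] at h7
        exact (lcomm_linv_left Γ _ _).1 h7
      · by_cases hkp1 : k = p + 1
        · -- then i = p + 1, letter w[i] = y, σ k = p letter x
          have hip : i = p + 1 := by
            subst hkp1
            unfold swapIdx at hik hkj hin
            split_ifs at hik hkj hin <;> omega
          have h5 : w[swapIdx p k]'(hbound k hkw) = x := by
            rw [getElem_idx_congr (by unfold swapIdx; split_ifs <;> omega : swapIdx p k = p) (by omega)]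
            exact hxv
          have h6 : w[i]'(hij.trans hj) = y := by
            rw [getElem_idx_congr hip (by omega)]
            exact hyv
          rw [h5, h6]
          exact lcomm_symm Γ hxy
        · exfalso
          unfold swapIdx at hik hkj hin
          split_ifs at hik hkj hin <;> omega

end S10

namespace S10
variable {V : Type} (Γ : SimpleGraph V)

open Relation

lemma two_marked {α : Type*} {a c p q : List α} {z u : α}
    (h : a ++ z :: c = p ++ u :: q) :
    (∃ m, p = a ++ z :: m ∧ c = m ++ u :: q) ∨ (a = p ∧ z = u ∧ c = q) ∨
      (∃ m, a = p ++ u :: m ∧ q = m ++ z :: c) := by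
  rcases List.append_eq_append_iff.1 h with ⟨k, hp, hzc⟩ | ⟨k, ha, huq⟩
  · cases k with
    | nil =>
      simp only [List.append_nil] at hp
      injection hzc with h1 h2
      exact Or.inr (Or.inl ⟨hp.symm ▸ rfl, h1, h2⟩)
    | cons z' k' =>
      injection hzc with h1 h2
      subst h1
      exact Or.inl ⟨k', by rw [hp], h2⟩
  · cases k with
    | nil =>
      simp only [List.append_nil] at ha
      injection huq with h1 h2
      exact Or.inr (Or.inl ⟨ha, h1.symm, h2.symm⟩)
    | cons u' k' =>
      injection huq with h1 h2
      subst h1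
      exact Or.inr (Or.inr ⟨k', by rw [ha], h2⟩)

lemma eqv_cons {x : V × Bool} {u u' : List (V × Bool)}
    (h : EqvGen (SwapStep Γ) u u') : EqvGen (SwapStep Γ) (x :: u) (x :: u') := by
  induction h with
  | rel a b hab =>
    obtain ⟨s, t, p, q, hpq, h1, h2⟩ := hab
    exact EqvGen.rel _ _ ⟨x :: s, t, p, q, hpq, by simp [h1], by simp [h2]⟩
  | refl a => exact EqvGen.refl _
  | symm a b _ ih => exact EqvGen.symm _ _ ih
  | trans a b c _ _ ih1 ih2 => exact EqvGen.trans _ _ _ ih1 ih2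

lemma shuffle_cons {z : V × Bool} {a c : List (V × Bool)} (ha : ∀ x ∈ a, lcomm Γ z x) :
    EqvGen (SwapStep Γ) (z :: (a ++ c)) (a ++ z :: c) := by
  induction a with
  | nil => exact EqvGen.refl _
  | cons x a' ih =>
    have h1 : SwapStep Γ (z :: (x :: a' ++ c)) (x :: (z :: (a' ++ c))) :=
      ⟨[], a' ++ c, z, x, ha x (by simp), by simp, by simp⟩
    refine EqvGen.trans _ _ _ (EqvGen.rel _ _ h1) ?_
    exact eqv_cons Γ (ih (fun y hy => ha y (by simp [hy])))

lemma red_act {l : V × Bool} {w : List (V × Bool)} (hw : Red Γ w) : Red Γ (act Γ l w) := by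
  by_cases hD : Deletable Γ l w
  · obtain ⟨a, c, ha, hwd⟩ := hD
    rw [act_eq_of_decomp Γ ha hwd]
    rintro ⟨u₁, m, b, u₂, hb, hpair⟩
    apply hw
    rw [List.append_assoc, List.cons_append] at hpair
    rcases List.append_eq_append_iff.1 hpair with ⟨k, hu₁, hc⟩ | ⟨k, ha2, hrest⟩
    · -- pair entirely within c
      exact ⟨a ++ linv l :: k, m, b, u₂, hb, by rw [hwd, hc]; simp⟩
    · rcases List.cons_eq_append_iff.1 hrest with ⟨hk, hc2⟩ | ⟨k₂, hk, hrest2⟩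
      · -- k = [], a = u₁, pair at start of c
        subst hk
        simp only [List.append_nil] at ha2
        exact ⟨u₁ ++ [linv l], m, b, u₂, hb, by rw [hwd, ha2, hc2]; simp⟩
      · -- k = m :: k₂
        subst hk
        rcases List.append_eq_append_iff.1 hrest2 with ⟨k₃, hk₂, hu⟩ | ⟨k₃, hb2, hc3⟩
        · rcases List.cons_eq_append_iff.1 hu with ⟨hk₃, hc4⟩ | ⟨k₄, hk₃, hu2⟩
          · -- linv m immediately after deleted spot
            subst hk₃
            simp only [List.append_nil] at hk₂
            refine ⟨u₁, m, b ++ [linv l], u₂, ?_, ?_⟩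
            · intro x hx
              rcases List.mem_append.1 hx with hx | hx
              · exact hb x hx
              · simp only [List.mem_singleton] at hx
                subst hx
                have hm : lcomm Γ l m := ha m (by rw [ha2]; simp)
                exact (lcomm_linv_right Γ m l).2 (lcomm_symm Γ hm)
            · rw [hwd, ha2, hk₂, hc4]; simp
          · -- pair entirely inside a
            subst hk₃
            exact ⟨u₁, m, b, k₄ ++ linv l :: c, hb,
              by rw [hwd, ha2, hk₂]; simp⟩
        · -- pair straddles the deleted letter
          refine ⟨u₁, m, k₂ ++ linv l :: k₃, u₂, ?_, ?_⟩
          · intro x hx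
            have hm : lcomm Γ l m := ha m (by rw [ha2]; simp)
            rcases List.mem_append.1 hx with hx | hx
            · exact hb x (by rw [hb2]; exact List.mem_append.2 (Or.inl hx))
            · rcases List.mem_cons.1 hx with hx | hx
              · subst hx
                exact (lcomm_linv_right Γ m l).2 (lcomm_symm Γ hm)
              · exact hb x (by rw [hb2]; exact List.mem_append.2 (Or.inr hx))
          · rw [hwd, ha2, hc3]; simp
  · rw [act_eq_cons Γ hD]
    exact (red_cons_iff Γ).2 ⟨hD, hw⟩

end S10

namespace S10
variable {V : Type} (Γ : SimpleGraph V)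
open Relation

lemma act_swap_del {l x y : V × Bool} {s t : List (V × Bool)} (hxy : lcomm Γ x y)
    (hD : Deletable Γ l (s ++ x :: y :: t)) :
    Deletable Γ l (s ++ y :: x :: t) ∧
      EqvGen (SwapStep Γ) (act Γ l (s ++ x :: y :: t)) (act Γ l (s ++ y :: x :: t)) := by
  obtain ⟨a, c, ha, hd⟩ := hD
  rcases two_marked hd with ⟨m, ha2, hyt⟩ | ⟨hs, hx, hc⟩ | ⟨m, hs, hc⟩
  · -- a = s ++ x :: m, y :: t = m ++ linv l :: c
    cases m with
    | nil =>
      simp only [List.nil_append] at hyt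
      injection hyt with h1 h2
      subst h1 h2
      constructor
      · exact ⟨s, x :: t, fun z hz => ha z (by rw [ha2]; simp [hz]), rfl⟩
      · rw [act_eq_of_decomp Γ ha hd,
          act_eq_of_decomp Γ (a := s) (c := x :: t)
            (fun z hz => ha z (by rw [ha2]; simp [hz])) rfl]
        have heq : a ++ t = s ++ x :: t := by rw [ha2]; simp
        rw [heq]
        exact EqvGen.refl _
    | cons y' m₂ =>
      injection hyt with h1 h2
      subst h1
      -- a = s ++ x :: y :: m₂, t = m₂ ++ linv l :: c
      have hxa : lcomm Γ l x := ha x (by rw [ha2]; simp)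
      have hya : lcomm Γ l y := ha y (by rw [ha2]; simp)
      have hm₂ : ∀ z ∈ m₂, lcomm Γ l z := fun z hz => ha z (by rw [ha2]; simp [hz])
      have hD' : s ++ y :: x :: t = (s ++ y :: x :: m₂) ++ linv l :: c := by
        rw [h2]; simp
      constructor
      · exact ⟨s ++ y :: x :: m₂, c, by
          intro z hz
          rcases List.mem_append.1 hz with hz | hz
          · exact ha z (by rw [ha2]; simp [hz])
          · rcases List.mem_cons.1 hz with rfl | hz
            · exact hya
            · rcases List.mem_cons.1 hz with rfl | hz
              · exact hxa
              · exact hm₂ z hz, hD'⟩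
      · rw [act_eq_of_decomp Γ ha hd, act_eq_of_decomp Γ (a := s ++ y :: x :: m₂) (c := c)
          (by
            intro z hz
            rcases List.mem_append.1 hz with hz | hz
            · exact ha z (by rw [ha2]; simp [hz])
            · rcases List.mem_cons.1 hz with rfl | hz
              · exact hya
              · rcases List.mem_cons.1 hz with rfl | hz
                · exact hxa
                · exact hm₂ z hz) hD']
        apply EqvGen.rel
        exact ⟨s, m₂ ++ c, x, y, hxy, by rw [ha2]; simp, by simp⟩
  · -- x = linv l case
    subst hx
    have hyl : lcomm Γ l y := (lcomm_linv_left Γ l y).1 hxy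
    have hd2 : s ++ y :: linv l :: t = (s ++ [y]) ++ linv l :: t := by simp
    have hcy : c = y :: t := hc.symm
    constructor
    · exact ⟨s ++ [y], t, by
        intro z hz
        rcases List.mem_append.1 hz with hz | hz
        · exact ha z (by rw [← hs]; exact hz)
        · simp only [List.mem_singleton] at hz; subst hz; exact hyl, hd2⟩
    · rw [act_eq_of_decomp Γ ha hd, act_eq_of_decomp Γ (a := s ++ [y]) (c := t)
        (by
          intro z hz
          rcases List.mem_append.1 hz with hz | hz
          · exact ha z (by rw [← hs]; exact hz)
          · simp only [List.mem_singleton] at hz; subst hz; exact hyl) hd2]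
      rw [hs, hcy]
      simp
      exact EqvGen.refl _
  · -- s = a ++ linv l :: m, c = m ++ x :: y :: t : window inside c
    have hd' : s ++ y :: x :: t = a ++ linv l :: (m ++ y :: x :: t) := by rw [hs]; simp
    constructor
    · exact ⟨a, m ++ y :: x :: t, ha, hd'⟩
    · rw [act_eq_of_decomp Γ ha hd, act_eq_of_decomp Γ ha hd']
      apply EqvGen.rel
      exact ⟨a ++ m, t, x, y, hxy, by rw [hc]; simp, by simp⟩

end S10

namespace S10
variable {V : Type} (Γ : SimpleGraph V)
open Relation

lemma act_swapStep {l : V × Bool} {w w' : List (V × Bool)} (hs : SwapStep Γ w w') :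
    EqvGen (SwapStep Γ) (act Γ l w) (act Γ l w') := by
  obtain ⟨s, t, x, y, hxy, hw, hw'⟩ := hs
  subst hw hw'
  by_cases hD : Deletable Γ l (s ++ x :: y :: t)
  · exact (act_swap_del Γ hxy hD).2
  · have hD' : ¬ Deletable Γ l (s ++ y :: x :: t) := fun h =>
      hD (act_swap_del Γ (lcomm_symm Γ hxy) h).1
    rw [act_eq_cons Γ hD, act_eq_cons Γ hD']
    exact EqvGen.rel _ _ ⟨l :: s, t, x, y, hxy, by simp, by simp⟩

lemma act_eqv {l : V × Bool} {w w' : List (V × Bool)} (h : EqvGen (SwapStep Γ) w w') :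
    EqvGen (SwapStep Γ) (act Γ l w) (act Γ l w') := by
  induction h with
  | rel a b hab => exact act_swapStep Γ hab
  | refl a => exact EqvGen.refl _
  | symm a b _ ih => exact EqvGen.symm _ _ ih
  | trans a b c _ _ ih1 ih2 => exact EqvGen.trans _ _ _ ih1 ih2

lemma not_deletable_linv_act {l : V × Bool} {w : List (V × Bool)} (hw : Red Γ w)
    {a c : List (V × Bool)} (ha : ∀ x ∈ a, lcomm Γ l x)
    (hd : w = a ++ linv l :: c) : ¬ Deletable Γ (linv l) (a ++ c) := by
  rintro ⟨p, q, hp, hpq⟩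
  rw [linv_linv] at hpq
  rcases List.append_eq_append_iff.1 hpq with ⟨k, hpk, hck⟩ | ⟨k, hak, hql⟩
  · exact hw ⟨a, linv l, k, q,
      fun x hx => (lcomm_linv_left Γ l x).2 (hp x (by rw [hpk]; simp [hx])),
      by rw [hd, hck]; simp⟩
  · rcases List.cons_eq_append_iff.1 hql with ⟨hk, hcq⟩ | ⟨k₂, hk, hq2⟩
    · subst hk
      simp only [List.append_nil] at hak
      exact hw ⟨a, linv l, [], q, by simp, by rw [hd, hcq]; simp⟩
    · have hl : l ∈ a := by rw [hak, hk]; simp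
      exact (ha l hl).1 rfl

lemma act_linv_act {l : V × Bool} {w : List (V × Bool)} (hw : Red Γ w) :
    EqvGen (SwapStep Γ) (act Γ (linv l) (act Γ l w)) w := by
  by_cases hD : Deletable Γ l w
  · obtain ⟨a, c, ha, hd⟩ := hD
    rw [act_eq_of_decomp Γ ha hd, act_eq_cons Γ (not_deletable_linv_act Γ hw ha hd), hd]
    exact shuffle_cons Γ (fun x hx => (lcomm_linv_left Γ l x).2 (ha x hx))
  · rw [act_eq_cons Γ hD,
      act_eq_of_decomp Γ (a := []) (c := w) (by simp) (by rw [linv_linv, List.nil_append])]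
    rw [List.nil_append]
    exact EqvGen.refl _

lemma not_deletable_cons {l m : V × Bool} {w : List (V × Bool)}
    (hlm : lcomm Γ l m) (hD : ¬ Deletable Γ l w) : ¬ Deletable Γ l (m :: w) := by
  rintro ⟨p, q, hp, hpq⟩
  rcases List.cons_eq_append_iff.1 hpq with ⟨hk, hcq⟩ | ⟨p₂, hk, hq2⟩
  · subst hk
    injection hcq with h1 h2
    exact hlm.1 (by rw [← h1, linv_fst])
  · subst hk
    exact hD ⟨p₂, q, fun x hx => hp x (by simp [hx]), hq2⟩

lemma act_comm_yn {l m : V × Bool} {w : List (V × Bool)} (hlm : lcomm Γ l m)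
    {a c : List (V × Bool)} (ha : ∀ x ∈ a, lcomm Γ l x) (hd : w = a ++ linv l :: c)
    (hDm : ¬ Deletable Γ m w) :
    act Γ l (act Γ m w) = act Γ m (act Γ l w) := by
  rw [act_eq_cons Γ hDm]
  have h1 : act Γ l (m :: w) = (m :: a) ++ c := by
    apply act_eq_of_decomp Γ (a := m :: a) (c := c)
    · intro x hx
      rcases List.mem_cons.1 hx with rfl | hx
      · exact hlm
      · exact ha x hx
    · rw [hd]; simp
  have hnm : ¬ Deletable Γ m (a ++ c) := by
    rintro ⟨p, q, hp, hpq⟩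
    rcases List.append_eq_append_iff.1 hpq with ⟨k, hpk, hck⟩ | ⟨k, hak, hql⟩
    · refine hDm ⟨a ++ linv l :: k, q, ?_, by rw [hd, hck]; simp⟩
      intro x hx
      rcases List.mem_append.1 hx with hx | hx
      · exact hp x (by rw [hpk]; simp [hx])
      · rcases List.mem_cons.1 hx with rfl | hx
        · exact (lcomm_linv_right Γ m l).2 (lcomm_symm Γ hlm)
        · exact hp x (by rw [hpk]; simp [hx])
    · rcases List.cons_eq_append_iff.1 hql with ⟨hk, hcq⟩ | ⟨k₂, hk, hq2⟩
      · subst hk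
        simp only [List.append_nil] at hak
        refine hDm ⟨a ++ [linv l], q, ?_, by rw [hd, hcq]; simp⟩
        intro x hx
        rcases List.mem_append.1 hx with hx | hx
        · exact hp x (by rw [← hak]; exact hx)
        · simp only [List.mem_singleton] at hx
          subst hx
          exact (lcomm_linv_right Γ m l).2 (lcomm_symm Γ hlm)
      · subst hk
        exact hDm ⟨p, k₂ ++ linv l :: c, hp, by rw [hd, hak]; simp⟩
  rw [act_eq_of_decomp Γ ha hd, act_eq_cons Γ hnm, h1]
  simp

lemma act_comm_yy {l m : V × Bool} {w : List (V × Bool)} (hlm : lcomm Γ l m)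
    {a c p q k : List (V × Bool)}
    (ha : ∀ x ∈ a, lcomm Γ l x) (hd : w = a ++ linv l :: c)
    (hp : ∀ x ∈ p, lcomm Γ m x) (hdm : w = p ++ linv m :: q)
    (hpk : p = a ++ linv l :: k) (hck : c = k ++ linv m :: q) :
    act Γ m (act Γ l w) = act Γ l (act Γ m w) := by
  have hk : ∀ x ∈ k, lcomm Γ m x := fun x hx => hp x (by rw [hpk]; simp [hx])
  have ham : ∀ x ∈ a, lcomm Γ m x := fun x hx => hp x (by rw [hpk]; simp [hx])
  rw [act_eq_of_decomp Γ ha hd]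
  rw [act_eq_of_decomp Γ (a := a ++ k) (c := q)
    (by
      intro x hx
      rcases List.mem_append.1 hx with hx | hx
      · exact ham x hx
      · exact hk x hx)
    (by rw [hck]; simp)]
  rw [act_eq_of_decomp Γ hp hdm]
  rw [act_eq_of_decomp Γ (a := a) (c := k ++ q) ha (by rw [hpk]; simp)]
  simp

lemma act_comm {l m : V × Bool} {w : List (V × Bool)} (hlm : lcomm Γ l m) (hw : Red Γ w) :
    EqvGen (SwapStep Γ) (act Γ l (act Γ m w)) (act Γ m (act Γ l w)) := by
  by_cases hDl : Deletable Γ l w <;> by_cases hDm : Deletable Γ m w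
  · obtain ⟨a, c, ha, hd⟩ := hDl
    obtain ⟨p, q, hp, hdm⟩ := hDm
    have h := hd.symm.trans hdm
    rcases two_marked h with ⟨k, hpk, hck⟩ | ⟨h1, h2, h3⟩ | ⟨k, hak, hqk⟩
    · rw [act_comm_yy Γ hlm ha hd hp hdm hpk hck]
      exact EqvGen.refl _
    · exact absurd (congrArg Prod.fst h2) (by simpa using hlm.1)
    · rw [← act_comm_yy Γ (lcomm_symm Γ hlm) hp hdm ha hd hak hqk]
      exact EqvGen.refl _
  · obtain ⟨a, c, ha, hd⟩ := hDl
    rw [act_comm_yn Γ hlm ha hd hDm]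
    exact EqvGen.refl _
  · obtain ⟨p, q, hp, hdm⟩ := hDm
    rw [act_comm_yn Γ (lcomm_symm Γ hlm) hp hdm hDl]
    exact EqvGen.refl _
  · have h1 : ¬ Deletable Γ l (m :: w) := not_deletable_cons Γ hlm hDl
    have h2 : ¬ Deletable Γ m (l :: w) := not_deletable_cons Γ (lcomm_symm Γ hlm) hDm
    rw [act_eq_cons Γ hDm, act_eq_cons Γ hDl, act_eq_cons Γ h1, act_eq_cons Γ h2]
    exact EqvGen.rel _ _ ⟨[], w, l, m, hlm, by simp, by simp⟩

end S10

namespace S10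
variable {V : Type} (Γ : SimpleGraph V)
open Relation

lemma evalWord_nil : evalWord Γ [] = 1 := rfl

lemma evalWord_cons (l : V × Bool) (t : List (V × Bool)) :
    evalWord Γ (l :: t) = raagLetter Γ l * evalWord Γ t := by
  simp [evalWord]

lemma evalWord_append (u v : List (V × Bool)) :
    evalWord Γ (u ++ v) = evalWord Γ u * evalWord Γ v := by
  simp [evalWord]

lemma evalWord_singleton (l : V × Bool) : evalWord Γ [l] = raagLetter Γ l := by
  simp [evalWord]

lemma raag_gen_comm {v u : V} (hne : v ≠ u) (hadj : ¬ Γ.Adj v u) :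
    Commute (raagGen Γ v) (raagGen Γ u) := by
  have hr : (FreeGroup.of v * FreeGroup.of u * (FreeGroup.of v)⁻¹ * (FreeGroup.of u)⁻¹ :
      FreeGroup V) ∈ raagRels Γ := ⟨v, u, hne, hadj, rfl⟩
  have h1 : PresentedGroup.mk (raagRels Γ)
      (FreeGroup.of v * FreeGroup.of u * (FreeGroup.of v)⁻¹ * (FreeGroup.of u)⁻¹) = 1 :=
    (QuotientGroup.eq_one_iff _).2 (Subgroup.subset_normalClosure hr)
  simp only [map_mul, map_inv] at h1
  have h2 : raagGen Γ v * raagGen Γ u * (raagGen Γ v)⁻¹ * (raagGen Γ u)⁻¹ = 1 := h1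
  have h3 : raagGen Γ v * raagGen Γ u * (raagGen Γ v)⁻¹ = raagGen Γ u := by
    have h4 := mul_eq_one_iff_eq_inv.1 h2
    simpa using h4
  rw [Commute, SemiconjBy]
  exact mul_inv_eq_iff_eq_mul.1 h3

lemma raag_letter_comm {l m : V × Bool} (h : lcomm Γ l m) :
    Commute (raagLetter Γ l) (raagLetter Γ m) := by
  have hg : Commute (raagGen Γ l.1) (raagGen Γ m.1) := raag_gen_comm Γ h.1 h.2
  have h1 : Commute (raagGen Γ l.1) (raagLetter Γ m) := by
    unfold raagLetter
    split
    · exact hg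
    · exact hg.inv_right
  unfold raagLetter
  split
  · exact h1
  · exact h1.inv_left

lemma raag_word_comm {l : V × Bool} {a : List (V × Bool)} (ha : ∀ x ∈ a, lcomm Γ l x) :
    Commute (raagLetter Γ l) (evalWord Γ a) := by
  induction a with
  | nil => simp [evalWord_nil, Commute.one_right]
  | cons x t ih =>
    rw [evalWord_cons]
    exact (raag_letter_comm Γ (ha x (by simp))).mul_right (ih (fun y hy => ha y (by simp [hy])))

lemma raagLetter_linv (l : V × Bool) : raagLetter Γ (linv l) = (raagLetter Γ l)⁻¹ := by
  obtain ⟨v, b⟩ := l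
  cases b <;> simp [linv, raagLetter]

lemma evalWord_delete {u₁ : List (V × Bool)} {l : V × Bool} {a u₂ : List (V × Bool)}
    (ha : ∀ x ∈ a, lcomm Γ l x) :
    evalWord Γ (u₁ ++ l :: a ++ linv l :: u₂) = evalWord Γ (u₁ ++ a ++ u₂) := by
  have hc : raagLetter Γ l * evalWord Γ a = evalWord Γ a * raagLetter Γ l :=
    raag_word_comm Γ ha
  simp only [evalWord_append, evalWord_cons, raagLetter_linv]
  rw [hc]
  group

lemma exists_word (g : RAAG Γ) : ∃ u : List (V × Bool), evalWord Γ u = g := by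
  obtain ⟨z, rfl⟩ := PresentedGroup.mk_surjective (raagRels Γ) g
  induction z using FreeGroup.induction_on with
  | C1 => exact ⟨[], rfl⟩
  | of v => exact ⟨[(v, true)], by simp [evalWord, raagLetter, raagGen]; rfl⟩
  | inv_of v _ =>
    exact ⟨[(v, false)], by simp [evalWord, raagLetter, raagGen, map_inv]; rfl⟩
  | mul x y ihx ihy =>
    obtain ⟨ux, hux⟩ := ihx
    obtain ⟨uy, huy⟩ := ihy
    exact ⟨ux ++ uy, by rw [evalWord_append, hux, huy, map_mul]⟩

lemma wlen_le {g : RAAG Γ} {u : List (V × Bool)} (h : evalWord Γ u = g) :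
    wlen Γ g ≤ u.length := Nat.sInf_le ⟨u, h, rfl⟩

lemma exists_min_word (g : RAAG Γ) :
    ∃ u : List (V × Bool), evalWord Γ u = g ∧ u.length = wlen Γ g := by
  have hne : {n | ∃ w : List (V × Bool), evalWord Γ w = g ∧ w.length = n}.Nonempty := by
    obtain ⟨u, hu⟩ := exists_word Γ g
    exact ⟨u.length, u, hu, rfl⟩
  obtain ⟨u, hu, hlen⟩ := Nat.sInf_mem hne
  exact ⟨u, hu, hlen⟩

lemma red_of_min {u : List (V × Bool)} (h : u.length = wlen Γ (evalWord Γ u)) :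
    Red Γ u := by
  rintro ⟨u₁, l, a, u₂, ha, hu⟩
  have hev : evalWord Γ u = evalWord Γ (u₁ ++ a ++ u₂) := by
    rw [hu]; exact evalWord_delete Γ ha
  have hle : wlen Γ (evalWord Γ u) ≤ (u₁ ++ a ++ u₂).length := wlen_le Γ hev.symm
  have : u.length = u₁.length + a.length + u₂.length + 2 := by rw [hu]; simp; omega
  simp only [List.length_append] at hle
  omega

end S10

namespace S10
variable {V : Type} (Γ : SimpleGraph V)
open Relation

def RW := {w : List (V × Bool) // Red Γ w}

def rwSetoid : Setoid (RW Γ) :=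
  ⟨fun u v => EqvGen (SwapStep Γ) u.1 v.1,
    ⟨fun _ => EqvGen.refl _, EqvGen.symm _ _, EqvGen.trans _ _ _⟩⟩

def NQ := Quotient (rwSetoid Γ)

def mkQ (w : List (V × Bool)) (h : Red Γ w) : NQ Γ :=
  Quotient.mk (rwSetoid Γ) ⟨w, h⟩

noncomputable def actQ (l : V × Bool) : NQ Γ → NQ Γ :=
  Quotient.lift (fun u : RW Γ => mkQ Γ (act Γ l u.1) (red_act Γ u.2))
    (fun _ _ huv => Quotient.sound (act_eqv Γ huv))

lemma actQ_mk (l : V × Bool) (w : List (V × Bool)) (h : Red Γ w) :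
    actQ Γ l (mkQ Γ w h) = mkQ Γ (act Γ l w) (red_act Γ h) := rfl

lemma actQ_linv (l : V × Bool) (q : NQ Γ) : actQ Γ (linv l) (actQ Γ l q) = q := by
  induction q using Quotient.inductionOn with
  | h u => exact Quotient.sound (act_linv_act Γ u.2)

noncomputable def pperm (v : V) : Equiv.Perm (NQ Γ) where
  toFun := actQ Γ (v, true)
  invFun := actQ Γ (v, false)
  left_inv := fun q => actQ_linv Γ (v, true) q
  right_inv := fun q => actQ_linv Γ (v, false) q

lemma pperm_comm {v u : V} (hne : v ≠ u) (hadj : ¬ Γ.Adj v u) :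
    pperm Γ v * pperm Γ u = pperm Γ u * pperm Γ v := by
  ext q
  induction q using Quotient.inductionOn with
  | h a =>
    show actQ Γ (v, true) (actQ Γ (u, true) ⟦a⟧) = actQ Γ (u, true) (actQ Γ (v, true) ⟦a⟧)
    exact Quotient.sound (act_comm Γ ⟨hne, hadj⟩ a.2)

noncomputable def rep : RAAG Γ →* Equiv.Perm (NQ Γ) :=
  PresentedGroup.toGroup (f := pperm Γ) (by
    rintro r ⟨v, u, hvu, hadj, rfl⟩
    simp only [map_mul, map_inv, FreeGroup.lift_apply_of]
    rw [mul_inv_eq_one, mul_inv_eq_iff_eq_mul]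
    exact pperm_comm Γ hvu hadj)

end S10

namespace S10
variable {V : Type} (Γ : SimpleGraph V)
open Relation

lemma mkQ_congr {w w' : List (V × Bool)} (h : w = w') (hw : Red Γ w) (hw' : Red Γ w') :
    mkQ Γ w hw = mkQ Γ w' hw' := by subst h; rfl

lemma rep_gen (v : V) : rep Γ (raagGen Γ v) = pperm Γ v :=
  PresentedGroup.toGroup.of _

lemma rep_letter (l : V × Bool) (q : NQ Γ) : rep Γ (raagLetter Γ l) q = actQ Γ l q := by
  obtain ⟨v, b⟩ := l
  cases b
  · have h1 : raagLetter Γ (v, false) = (raagGen Γ v)⁻¹ := rfl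
    rw [h1, map_inv, rep_gen]
    rfl
  · have h1 : raagLetter Γ (v, true) = raagGen Γ v := rfl
    rw [h1, rep_gen]
    rfl

lemma rep_eval {w : List (V × Bool)} (hw : Red Γ w) :
    rep Γ (evalWord Γ w) (mkQ Γ [] (red_nil Γ)) = mkQ Γ w hw := by
  induction w with
  | nil => rw [evalWord_nil, map_one]; rfl
  | cons l t ih =>
    have hc := (red_cons_iff Γ).1 hw
    rw [evalWord_cons, map_mul, Equiv.Perm.mul_apply, ih hc.2, rep_letter, actQ_mk]
    exact mkQ_congr Γ (act_eq_cons Γ hc.1) _ _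

lemma eqv_length {u u' : List (V × Bool)} (h : EqvGen (SwapStep Γ) u u') :
    u.length = u'.length := by
  induction h with
  | rel a b hab => exact hab.length_eq Γ
  | refl a => rfl
  | symm a b _ ih => exact ih.symm
  | trans a b c _ _ ih1 ih2 => exact ih1.trans ih2

lemma red_eqv_of_eval_eq {u u' : List (V × Bool)} (hu : Red Γ u) (hu' : Red Γ u')
    (h : evalWord Γ u = evalWord Γ u') : EqvGen (SwapStep Γ) u u' := by
  have h2 := congrArg (fun g => rep Γ g (mkQ Γ [] (red_nil Γ))) h
  rw [rep_eval Γ hu, rep_eval Γ hu'] at h2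
  exact Quotient.exact h2

lemma red_geodesic {u : List (V × Bool)} (hu : Red Γ u) :
    u.length = wlen Γ (evalWord Γ u) := by
  obtain ⟨m, hm, hml⟩ := exists_min_word Γ (evalWord Γ u)
  have hmr : Red Γ m := red_of_min Γ (by rw [hm]; exact hml)
  have hl := eqv_length Γ (red_eqv_of_eval_eq Γ hu hmr hm.symm)
  rw [hl, hml]

end S10

namespace S10
variable {V : Type} (Γ : SimpleGraph V)
open Relation

lemma linv_ne (l : V × Bool) : linv l ≠ l := by
  obtain ⟨v, b⟩ := l
  simp [linv, Prod.ext_iff]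

lemma split_two {α : Type*} (w : List α) {i j : ℕ} (hij : i < j) (hj : j < w.length) :
    w = w.take i ++ w[i]'(hij.trans hj) ::
      ((w.take j).drop (i+1) ++ w[j]'hj :: w.drop (j+1)) := by
  have h1 : w = w.take j ++ w[j]'hj :: w.drop (j+1) := by
    conv_lhs => rw [← List.take_append_drop j w, List.drop_eq_getElem_cons hj]
  have h3 : w.take (i+1) = w.take i ++ [w[i]'(hij.trans hj)] := by
    rw [List.take_succ, List.getElem?_eq_getElem (hij.trans hj)]
    rfl
  have h2 : w.take j = (w.take i ++ [w[i]'(hij.trans hj)]) ++ (w.take j).drop (i+1) := by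
    conv_lhs => rw [← List.take_append_drop (i+1) (w.take j)]
    rw [List.take_take, min_eq_left (by omega), h3]
  conv_lhs => rw [h1, h2]
  simp only [List.append_assoc, List.singleton_append, List.cons_append, List.nil_append]

lemma mem_drop_take {α : Type*} {w : List α} {i j : ℕ} {x : α}
    (hx : x ∈ (w.take j).drop (i+1)) :
    ∃ k, i < k ∧ k < j ∧ ∃ (hk : k < w.length), w[k]'hk = x := by
  obtain ⟨r, hr, hxr⟩ := List.mem_iff_getElem.1 hx
  simp only [List.length_drop, List.length_take] at hr
  refine ⟨i + 1 + r, by omega, by omega, by omega, ?_⟩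
  rw [← hxr, List.getElem_drop, List.getElem_take]

lemma wpow_succ {α : Type*} (w : List α) (n : ℕ) : wpow w (n+1) = w ++ wpow w n := by
  simp [wpow, List.replicate_succ]

lemma wpow_length {α : Type*} (w : List α) (n : ℕ) :
    (wpow w n).length = n * w.length := by
  induction n with
  | zero => simp [wpow]
  | succ n ih => rw [wpow_succ]; simp [ih]; ring

lemma wpow_getElem {α : Type*} {w : List α} (hN : 0 < w.length) {n k : ℕ}
    (hk : k < (wpow w n).length) :
    (wpow w n)[k] = w[k % w.length]'(Nat.mod_lt _ hN) := by
  induction n generalizing k with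
  | zero => simp [wpow] at hk
  | succ n ih =>
    rw [List.getElem_of_eq (wpow_succ w n)]
    rw [wpow_succ] at hk
    rcases lt_or_ge k w.length with h | h
    · rw [List.getElem_append_left h]
      exact getElem_idx_congr (Nat.mod_eq_of_lt h).symm _ _
    · rw [List.getElem_append_right h]
      have hk2 : k - w.length < (wpow w n).length := by
        simp only [List.length_append] at hk; omega
      rw [ih hk2]
      exact getElem_idx_congr (by rw [Nat.mod_eq_sub_mod h]) _ _

lemma main_comb {w : List (V × Bool)} {n : ℕ} (hw : Red Γ w)
    (hpair : HasPair Γ (wpow w n)) :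
    ∃ (w₃ w₅ w₂ : List (V × Bool)) (l : V × Bool),
      w = w₃ ++ linv l :: (w₅ ++ l :: w₂) ∧
      (∀ x ∈ w₂, lcomm Γ l x) ∧ (∀ x ∈ w₃, lcomm Γ l x) := by
  obtain ⟨i, j, hij, hj, hlet, hmid⟩ := idxPair_of_hasPair Γ hpair
  set W := wpow w n with hW
  set N := w.length with hN
  have hWlen : W.length = n * N := wpow_length w n
  have hNpos : 0 < N := by
    rcases Nat.eq_zero_or_pos N with h0 | h
    · exfalso
      rw [h0, Nat.mul_zero] at hWlen
      omega
    · exact h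
  have hiW : i < W.length := hij.trans hj
  -- residues
  have hi' : i % N < N := Nat.mod_lt _ hNpos
  have hj' : j % N < N := Nat.mod_lt _ hNpos
  have hWi : W[i]'hiW = w[i % N]'hi' := wpow_getElem hNpos hiW
  have hWj : W[j]'hj = w[j % N]'hj' := wpow_getElem hNpos hj
  obtain ⟨qi, hqi⟩ : ∃ q, i = q * N + i % N := ⟨i / N, by rw [Nat.div_add_mod']⟩
  obtain ⟨qj, hqj⟩ : ∃ q, j = q * N + j % N := ⟨j / N, by rw [Nat.div_add_mod']⟩
  set i' := i % N
  set j' := j % N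
  set A := qi * N with hA
  set B := qj * N with hB
  have hne' : i' ≠ j' := by
    intro he
    have : w[j']'hj' = linv (w[j']'hj') := by
      conv_lhs => rw [← hWj]
      rw [hlet, hWi]
      congr 1
      exact getElem_idx_congr he _ _
    exact linv_ne _ this.symm
  -- common getElem transport
  have hWk : ∀ (m : ℕ) (hm : m < W.length), W[m]'hm = w[m % N]'(Nat.mod_lt _ hNpos) :=
    fun m hm => wpow_getElem hNpos hm
  rcases lt_or_gt_of_ne hne' with hlt | hgt
  · -- i' < j' : pair inside one copy of w, contradiction
    exfalso
    have hAB : A ≤ B := by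
      by_contra hab
      push_neg at hab
      have h1 : qj + 1 ≤ qi := by
        by_contra h2
        push_neg at h2
        have := Nat.mul_le_mul_right N (by omega : qi ≤ qj)
        omega
      have h3 : (qj + 1) * N ≤ qi * N := Nat.mul_le_mul_right N h1
      have h4 : qj * N + N ≤ qi * N := by rw [Nat.succ_mul] at h3; omega
      omega
    apply hw
    apply hasPair_of_idxPair Γ (i := i') (j := j')
    refine ⟨hlt, hj', ?_, ?_⟩
    · -- w[j'] = linv w[i']
      rw [← hWj]
      rw [hlet, hWi]
    · intro k hik hkj
      have hm : A + k < W.length := by omega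
      have h5 : lcomm Γ (W[i]'hiW) (W[A+k]'hm) := by
        apply hmid
        · omega
        · omega
      rw [hWi] at h5
      rw [hWk (A+k) hm] at h5
      have h6 : (A + k) % N = k := by
        rw [hA, Nat.mul_comm qi N, Nat.mul_add_mod, Nat.mod_eq_of_lt (by omega)]
      rwa [getElem_idx_congr h6 (by omega) _] at h5
  · -- j' < i' : the good case
    have hAB : A + N ≤ B := by
      have h1 : qi + 1 ≤ qj := by
        by_contra h2
        push_neg at h2
        have := Nat.mul_le_mul_right N (by omega : qj ≤ qi)
        omega
      have h3 : (qi + 1) * N ≤ qj * N := Nat.mul_le_mul_right N h1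
      rw [Nat.succ_mul] at h3
      omega
    refine ⟨w.take j', (w.take i').drop (j'+1), w.drop (i'+1), w[i']'hi', ?_, ?_, ?_⟩
    · have hsp := split_two w hgt hi'
      have hlv : w[j']'hj' = linv (w[i']'hi') := by
        rw [← hWj, hlet, hWi]
      rw [← hlv]
      exact hsp
    · -- w₂ = drop (i'+1) commutes
      intro x hx
      obtain ⟨r, hr, hxr⟩ := List.mem_iff_getElem.1 hx
      simp only [List.length_drop] at hr
      have hkr : (w.drop (i'+1))[r] = w[i'+1+r]'(by omega) := List.getElem_drop
      set k := i' + 1 + r with hkdef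
      have hkN : k < N := by omega
      have hm : A + k < W.length := by omega
      have h5 : lcomm Γ (W[i]'hiW) (W[A+k]'hm) := by
        apply hmid
        · omega
        · omega
      rw [hWi] at h5
      rw [hWk (A+k) hm] at h5
      have h6 : (A + k) % N = k := by
        rw [hA, Nat.mul_comm qi N, Nat.mul_add_mod, Nat.mod_eq_of_lt (by omega)]
      rw [getElem_idx_congr h6 (by omega) _] at h5
      rw [← hxr, hkr]
      exact h5
    · -- w₃ = take j' commutes
      intro x hx
      obtain ⟨r, hr, hxr⟩ := List.mem_iff_getElem.1 hx
      simp only [List.length_take] at hr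
      have hrN : r < j' := by omega
      have hkr : (w.take j')[r] = w[r]'(by omega) := List.getElem_take
      have hm : B + r < W.length := by omega
      have h5 : lcomm Γ (W[i]'hiW) (W[B+r]'hm) := by
        apply hmid
        · omega
        · omega
      rw [hWi] at h5
      rw [hWk (B+r) hm] at h5
      have h6 : (B + r) % N = r := by
        rw [hB, Nat.mul_comm qj N, Nat.mul_add_mod, Nat.mod_eq_of_lt (by omega)]
      rw [getElem_idx_congr h6 (by omega) _] at h5
      rw [← hxr, hkr]
      exact h5

end S10

namespace S10
variable {V : Type} (Γ : SimpleGraph V)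

lemma wlen_one_le (l : V × Bool) : wlen Γ (raagLetter Γ l) ≤ 1 :=
  wlen_le Γ (evalWord_singleton Γ l)

lemma wlen_mul_le (a b : RAAG Γ) : wlen Γ (a * b) ≤ wlen Γ a + wlen Γ b := by
  obtain ⟨u, hu, hul⟩ := exists_min_word Γ a
  obtain ⟨v', hv, hvl⟩ := exists_min_word Γ b
  have h := wlen_le Γ (g := a * b) (u := u ++ v') (by rw [evalWord_append, hu, hv])
  rw [List.length_append, hul, hvl] at h
  exact h

end S10

open S10 in
theorem stmt10 {V : Type} (Γ : SimpleGraph V) (w : List (V × Bool))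
    (g : RAAG Γ) (n : ℕ)
    (hred : IsReducedWord Γ w) (hg : evalWord Γ w = g)
    (hn : 2 ≤ n) (hnotred : ¬ IsReducedWord Γ (wpow w n)) :
    ∃ (w₃ w₅ w₂ : List (V × Bool)) (v : V) (b : Bool),
      w = w₃ ++ [(v, !b)] ++ w₅ ++ [(v, b)] ++ w₂ ∧
      (∀ l ∈ w₂, l.1 ≠ v ∧ ¬ Γ.Adj l.1 v) ∧
      (∀ l ∈ w₃, l.1 ≠ v ∧ ¬ Γ.Adj l.1 v) ∧
      g = (raagLetter Γ (v, b))⁻¹ * evalWord Γ (w₃ ++ w₅ ++ w₂) * raagLetter Γ (v, b) ∧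
      wlen Γ g = 1 + wlen Γ (evalWord Γ (w₃ ++ w₅ ++ w₂)) + 1 := by
  have hred' : w.length = wlen Γ (evalWord Γ w) := hred
  have hredw : Red Γ w := red_of_min Γ hred'
  have hnr : HasPair Γ (wpow w n) := by
    by_contra h
    exact hnotred (red_geodesic Γ h)
  obtain ⟨w₃, w₅, w₂, l, hdecomp, hw₂, hw₃⟩ := main_comb Γ hredw hnr
  obtain ⟨v, b⟩ := l
  have hkey : g = (raagLetter Γ (v, b))⁻¹ * evalWord Γ (w₃ ++ w₅ ++ w₂) *
      raagLetter Γ (v, b) := by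
    rw [← hg, hdecomp]
    simp only [evalWord_append, evalWord_cons, raagLetter_linv]
    have c2 : raagLetter Γ (v, b) * evalWord Γ w₂ =
        evalWord Γ w₂ * raagLetter Γ (v, b) := (raag_word_comm Γ hw₂).eq
    have c3 : (raagLetter Γ (v, b))⁻¹ * evalWord Γ w₃ =
        evalWord Γ w₃ * (raagLetter Γ (v, b))⁻¹ := ((raag_word_comm Γ hw₃).inv_left).eq
    set X := raagLetter Γ (v, b)
    set A := evalWord Γ w₃
    set B := evalWord Γ w₅
    set C := evalWord Γ w₂
    calc A * (X⁻¹ * (B * (X * C)))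
        = (A * X⁻¹) * B * (X * C) := by group
      _ = (X⁻¹ * A) * B * (C * X) := by rw [← c3, c2]
      _ = X⁻¹ * (A * B * C) * X := by group
  refine ⟨w₃, w₅, w₂, v, b, ?_, ?_, ?_, hkey, ?_⟩
  · rw [hdecomp]; simp [linv]
  · intro x hx
    have h := hw₂ x hx
    exact ⟨h.1.symm, fun ha => h.2 ha.symm⟩
  · intro x hx
    have h := hw₃ x hx
    exact ⟨h.1.symm, fun ha => h.2 ha.symm⟩
  · -- lengths
    have hKg : wlen Γ g = w.length := by rw [← hg, ← hred']
    have hlenw : w.length = w₃.length + w₅.length + w₂.length + 2 := by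
      rw [hdecomp]; simp; omega
    have hHle : wlen Γ (evalWord Γ (w₃ ++ w₅ ++ w₂)) ≤
        w₃.length + w₅.length + w₂.length := by
      have h9 := wlen_le Γ (g := evalWord Γ (w₃ ++ w₅ ++ w₂)) (u := w₃ ++ w₅ ++ w₂) rfl
      simp only [List.length_append] at h9
      omega
    have hX : wlen Γ ((raagLetter Γ (v, b))⁻¹) ≤ 1 := by
      have : (raagLetter Γ (v, b))⁻¹ = raagLetter Γ (linv (v, b)) :=
        (raagLetter_linv Γ _).symm
      rw [this]
      exact wlen_one_le Γ _
    have hgle : wlen Γ g ≤ 1 + wlen Γ (evalWord Γ (w₃ ++ w₅ ++ w₂)) + 1 := by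
      rw [hkey]
      calc wlen Γ ((raagLetter Γ (v, b))⁻¹ * evalWord Γ (w₃ ++ w₅ ++ w₂) *
              raagLetter Γ (v, b))
          ≤ wlen Γ ((raagLetter Γ (v, b))⁻¹ * evalWord Γ (w₃ ++ w₅ ++ w₂)) +
              wlen Γ (raagLetter Γ (v, b)) := wlen_mul_le Γ _ _
        _ ≤ wlen Γ ((raagLetter Γ (v, b))⁻¹) +
              wlen Γ (evalWord Γ (w₃ ++ w₅ ++ w₂)) +
              wlen Γ (raagLetter Γ (v, b)) := by
            have := wlen_mul_le Γ ((raagLetter Γ (v, b))⁻¹)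
              (evalWord Γ (w₃ ++ w₅ ++ w₂))
            omega
        _ ≤ 1 + wlen Γ (evalWord Γ (w₃ ++ w₅ ++ w₂)) + 1 := by
            have := wlen_one_le Γ (v, b)
            omega
    omega
end

section
/- Let Γ be a finite simple graph with a linear order on V(Γ), and let g₁, g₂ ∈ G(Γ) with g₁g₂ geodesic. If g₂ is SD-conical, then the CGW-normal form of g₁g₂ is the concatenation of the CGW-normal forms of g₁ and g₂: σ(g₁g₂) = σ(g₁)σ(g₂). -/
section CGW
variable {V : Type} (Γ : SimpleGraph V)

/-- inverse of a letter -/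
def invL (l : V × Bool) : V × Bool := (l.1, !l.2)

@[simp] lemma invL_invL (l : V × Bool) : invL (invL l) = l := by
  cases l with | mk v b => cases b <;> rfl

@[simp] lemma invL_fst (l : V × Bool) : (invL l).1 = l.1 := rfl

/-- letters commute combinatorially -/
def CommL (x y : V × Bool) : Prop := x.1 ≠ y.1 ∧ ¬ Γ.Adj x.1 y.1

lemma CommL.symm {x y : V × Bool} (h : CommL Γ x y) : CommL Γ y x :=
  ⟨Ne.symm h.1, fun a => h.2 a.symm⟩

@[simp] lemma commL_invL_left {x y : V × Bool} : CommL Γ (invL x) y ↔ CommL Γ x y := Iff.rfl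
@[simp] lemma commL_invL_right {x y : V × Bool} : CommL Γ x (invL y) ↔ CommL Γ x y := Iff.rfl

lemma raagGen_commute {v w : V} (h1 : v ≠ w) (h2 : ¬ Γ.Adj v w) :
    Commute (raagGen Γ v) (raagGen Γ w) := by
  have hr : (FreeGroup.of v * FreeGroup.of w * (FreeGroup.of v)⁻¹ * (FreeGroup.of w)⁻¹ :
      FreeGroup V) ∈ raagRels Γ := ⟨v, w, h1, h2, rfl⟩
  have h1' : PresentedGroup.mk (raagRels Γ)
      (FreeGroup.of v * FreeGroup.of w * (FreeGroup.of v)⁻¹ * (FreeGroup.of w)⁻¹) = 1 := by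
    have := Subgroup.subset_normalClosure (s := raagRels Γ) hr
    exact (QuotientGroup.eq_one_iff _).mpr this
  have : raagGen Γ v * raagGen Γ w * (raagGen Γ v)⁻¹ * (raagGen Γ w)⁻¹ = 1 := by
    simpa [raagGen, PresentedGroup.of, map_mul, map_inv] using h1'
  rw [mul_inv_eq_one, mul_inv_eq_iff_eq_mul] at this
  exact this

lemma raagLetter_commute {x y : V × Bool} (h : CommL Γ x y) :
    Commute (raagLetter Γ x) (raagLetter Γ y) := by
  have hg : Commute (raagGen Γ x.1) (raagGen Γ y.1) := raagGen_commute Γ h.1 h.2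
  unfold raagLetter
  cases x.2 <;> cases y.2 <;> simp <;>
    first
      | exact hg
      | exact hg.inv_left
      | exact hg.inv_right
      | exact hg.inv_left.inv_right

@[simp] lemma raagLetter_invL (l : V × Bool) :
    raagLetter Γ (invL l) = (raagLetter Γ l)⁻¹ := by
  cases l with | mk v b => cases b <;> simp [raagLetter, invL]

@[simp] lemma evalWord_nil : evalWord Γ ([] : List (V × Bool)) = 1 := rfl

@[simp] lemma evalWord_cons (x : V × Bool) (w : List (V × Bool)) :
    evalWord Γ (x :: w) = raagLetter Γ x * evalWord Γ w := by
  simp [evalWord]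

@[simp] lemma evalWord_append (w₁ w₂ : List (V × Bool)) :
    evalWord Γ (w₁ ++ w₂) = evalWord Γ w₁ * evalWord Γ w₂ := by
  simp [evalWord]


/-- every group element is represented by some word -/
lemma exists_word (g : RAAG Γ) : ∃ w : List (V × Bool), evalWord Γ w = g := by
  induction g using PresentedGroup.induction_on with
  | H z =>
    induction z using FreeGroup.induction_on with
    | C1 => exact ⟨[], by simp⟩
    | of v => exact ⟨[(v, true)], by simp [raagLetter, raagGen, PresentedGroup.of]⟩
    | inv_of v ih =>
      obtain ⟨w, hw⟩ := ih
      exact ⟨[(v, false)], by simp [raagLetter, raagGen, PresentedGroup.of, map_inv]⟩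
    | mul x y ihx ihy =>
      obtain ⟨wx, hwx⟩ := ihx
      obtain ⟨wy, hwy⟩ := ihy
      exact ⟨wx ++ wy, by simp [hwx, hwy, map_mul]⟩

lemma wlenSet_nonempty (g : RAAG Γ) :
    {n | ∃ w : List (V × Bool), evalWord Γ w = g ∧ w.length = n}.Nonempty := by
  obtain ⟨w, hw⟩ := exists_word Γ g
  exact ⟨w.length, w, hw, rfl⟩

lemma wlen_le {g : RAAG Γ} {w : List (V × Bool)} (h : evalWord Γ w = g) :
    wlen Γ g ≤ w.length :=
  Nat.sInf_le ⟨w, h, rfl⟩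

lemma exists_geodesic (g : RAAG Γ) :
    ∃ w : List (V × Bool), evalWord Γ w = g ∧ w.length = wlen Γ g := by
  have := Nat.sInf_mem (wlenSet_nonempty Γ g)
  obtain ⟨w, hw, hl⟩ := this
  exact ⟨w, hw, hl⟩

lemma wlen_mul_le (g h : RAAG Γ) : wlen Γ (g * h) ≤ wlen Γ g + wlen Γ h := by
  obtain ⟨u, hu, hul⟩ := exists_geodesic Γ g
  obtain ⟨v, hv, hvl⟩ := exists_geodesic Γ h
  have : evalWord Γ (u ++ v) = g * h := by simp [hu, hv]
  calc wlen Γ (g * h) ≤ (u ++ v).length := wlen_le Γ this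
    _ = wlen Γ g + wlen Γ h := by simp [hul, hvl]

lemma wlen_letter_mul_le (x : V × Bool) (g : RAAG Γ) :
    wlen Γ (raagLetter Γ x * g) ≤ 1 + wlen Γ g := by
  obtain ⟨u, hu, hul⟩ := exists_geodesic Γ g
  have : evalWord Γ (x :: u) = raagLetter Γ x * g := by simp [hu]
  calc wlen Γ (raagLetter Γ x * g) ≤ (x :: u).length := wlen_le Γ this
    _ = 1 + wlen Γ g := by simp [hul]; omega

lemma wlen_le_letter_mul (x : V × Bool) (g : RAAG Γ) :
    wlen Γ g ≤ 1 + wlen Γ (raagLetter Γ x * g) := by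
  have h := wlen_letter_mul_le Γ (invL x) (raagLetter Γ x * g)
  simpa [mul_assoc] using h

/-! ### Shuffle equivalence -/

/-- one commutation move -/
def Step (w w' : List (V × Bool)) : Prop :=
  ∃ p x y s, CommL Γ x y ∧ w = p ++ x :: y :: s ∧ w' = p ++ y :: x :: s

/-- shuffle equivalence -/
def Sh : List (V × Bool) → List (V × Bool) → Prop := Relation.ReflTransGen (Step Γ)

lemma Step.symm' {w w' : List (V × Bool)} (h : Step Γ w w') : Step Γ w' w := by
  obtain ⟨p, x, y, s, hc, h1, h2⟩ := h
  exact ⟨p, y, x, s, hc.symm, h2, h1⟩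

lemma sh_refl (w : List (V × Bool)) : Sh Γ w w := Relation.ReflTransGen.refl

lemma sh_trans {w₁ w₂ w₃ : List (V × Bool)} (h1 : Sh Γ w₁ w₂) (h2 : Sh Γ w₂ w₃) :
    Sh Γ w₁ w₃ := Relation.ReflTransGen.trans h1 h2

lemma sh_symm {w w' : List (V × Bool)} (h : Sh Γ w w') : Sh Γ w' w :=
  by
    haveI : Std.Symm (Step Γ) := ⟨fun _ _ hs => Step.symm' Γ hs⟩
    exact Std.Symm.symm (r := Relation.ReflTransGen (Step Γ)) _ _ h

lemma step_sh {w w' : List (V × Bool)} (h : Step Γ w w') : Sh Γ w w' :=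
  Relation.ReflTransGen.single h

lemma sh_cons {w w' : List (V × Bool)} (a : V × Bool) (h : Sh Γ w w') :
    Sh Γ (a :: w) (a :: w') := by
  induction h with
  | refl => exact sh_refl Γ _
  | tail _ hs ih =>
    refine sh_trans Γ ih (step_sh Γ ?_)
    obtain ⟨p, x, y, s, hc, h1, h2⟩ := hs
    exact ⟨a :: p, x, y, s, hc, by simp [h1], by simp [h2]⟩

lemma sh_append_left (u : List (V × Bool)) {w w' : List (V × Bool)} (h : Sh Γ w w') :
    Sh Γ (u ++ w) (u ++ w') := by
  induction u with
  | nil => exact h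
  | cons a t ih => exact sh_cons Γ a ih

lemma sh_swap {x y : V × Bool} (s : List (V × Bool)) (hc : CommL Γ x y) :
    Sh Γ (x :: y :: s) (y :: x :: s) := step_sh Γ ⟨[], x, y, s, hc, rfl, rfl⟩

lemma sh_length {w w' : List (V × Bool)} (h : Sh Γ w w') : w.length = w'.length := by
  induction h with
  | refl => rfl
  | tail _ hs ih =>
    obtain ⟨p, x, y, s, _, h1, h2⟩ := hs
    rw [ih, h1, h2]; simp

lemma sh_eval {w w' : List (V × Bool)} (h : Sh Γ w w') : evalWord Γ w = evalWord Γ w' := by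
  induction h with
  | refl => rfl
  | tail _ hs ih =>
    obtain ⟨p, x, y, s, hc, h1, h2⟩ := hs
    rw [ih, h1, h2]
    simp only [evalWord_append, evalWord_cons, mul_assoc]
    congr 1
    rw [← mul_assoc, ← mul_assoc, (raagLetter_commute Γ hc).eq]

/-! ### Visibility -/

/-- `x` is visible from the left in `w` -/
def Vis (x : V × Bool) (w : List (V × Bool)) : Prop :=
  ∃ p s, w = p ++ x :: s ∧ ∀ y ∈ p, CommL Γ x y

lemma vis_head (x : V × Bool) (s : List (V × Bool)) : Vis Γ x (x :: s) :=
  ⟨[], s, rfl, by simp⟩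

lemma vis_cons {x : V × Bool} {w : List (V × Bool)} (y : V × Bool) (hc : CommL Γ x y)
    (h : Vis Γ x w) : Vis Γ x (y :: w) := by
  obtain ⟨p, s, h1, h2⟩ := h
  exact ⟨y :: p, s, by simp [h1], by
    intro z hz
    rcases List.mem_cons.mp hz with h | h
    · exact h ▸ hc
    · exact h2 z h⟩

lemma vis_sh_front {x : V × Bool} {p s : List (V × Bool)}
    (hc : ∀ y ∈ p, CommL Γ x y) : Sh Γ (p ++ x :: s) (x :: (p ++ s)) := by
  induction p with
  | nil => exact sh_refl Γ _
  | cons a t ih =>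
    have h1 : Sh Γ (a :: (t ++ x :: s)) (a :: x :: (t ++ s)) :=
      sh_cons Γ a (ih (fun y hy => hc y (List.mem_cons_of_mem a hy)))
    have h2 : Sh Γ (a :: x :: (t ++ s)) (x :: a :: (t ++ s)) :=
      sh_swap Γ _ ((hc a (List.mem_cons_self)).symm)
    exact sh_trans Γ h1 h2

lemma vis_step {x : V × Bool} {w w' : List (V × Bool)} (hs : Step Γ w w')
    (h : Vis Γ x w) : Vis Γ x w' := by
  obtain ⟨P, a, b, S, hab, hw, hw'⟩ := hs
  obtain ⟨p, s, h1, h2⟩ := h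
  subst hw hw'
  rcases List.append_eq_append_iff.mp h1 with ⟨u, hu1, hu2⟩ | ⟨u, hu1, hu2⟩
  · -- p = P ++ u, a :: b :: S = u ++ x :: s
    subst hu1
    match u, hu2 with
    | [], hu2 =>
      obtain ⟨rfl, rfl⟩ : a = x ∧ b :: S = s := by
        constructor <;> [exact (List.cons.injEq .. ▸ hu2).1; exact (List.cons.injEq .. ▸ hu2).2]
      refine ⟨P ++ [b], S, by simp, ?_⟩
      intro y hy
      rcases List.mem_append.mp hy with h | h
      · exact h2 y (by simpa using List.mem_append_left [] h)
      · simp at h; subst h; exact hab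
    | [u₁], hu2 =>
      simp only [List.cons_append, List.nil_append, List.cons.injEq] at hu2
      obtain ⟨rfl, rfl, rfl⟩ := hu2
      refine ⟨P, a :: S, by simp, ?_⟩
      intro y hy
      exact h2 y (List.mem_append_left _ hy)
    | u₁ :: u₂ :: t, hu2 =>
      simp only [List.cons_append, List.cons.injEq] at hu2
      obtain ⟨rfl, rfl, ht⟩ := hu2
      refine ⟨P ++ b :: a :: t, s, by simp [ht], ?_⟩
      intro y hy
      have : y ∈ P ++ a :: b :: t := by
        rcases List.mem_append.mp hy with h | h
        · exact List.mem_append_left _ h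
        · simp at h
          rcases h with h | h | h <;> simp [h]
      exact h2 y this
  · -- P = p ++ u, x :: s = u ++ a :: b :: S
    cases u with
    | nil =>
      simp only [List.nil_append, List.cons.injEq] at hu2
      obtain ⟨rfl, rfl⟩ := hu2
      refine ⟨p ++ [b], S, by simp [hu1], ?_⟩
      intro y hy
      rcases List.mem_append.mp hy with h | h
      · exact h2 y h
      · simp at h; subst h; exact hab
    | cons u₁ t =>
      simp only [List.cons_append, List.cons.injEq] at hu2
      obtain ⟨rfl, ht⟩ := hu2
      exact ⟨p, t ++ b :: a :: S, by simp [hu1, ht], h2⟩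

lemma vis_sh {x : V × Bool} {w w' : List (V × Bool)} (hs : Sh Γ w w')
    (h : Vis Γ x w) : Vis Γ x w' := by
  induction hs with
  | refl => exact h
  | tail _ hstep ih => exact vis_step Γ hstep ih

/-! ### The push operation -/

lemma commL_fst_left {a x y : V × Bool} (h : a.1 = x.1) (hc : CommL Γ a y) : CommL Γ x y := by
  unfold CommL at *; rw [← h]; exact hc

lemma commL_fst_right {a x y : V × Bool} (h : a.1 = x.1) (hc : CommL Γ y a) : CommL Γ y x := by
  unfold CommL at *; rw [← h]; exact hc

open Classical in
noncomputable def push (x : V × Bool) : List (V × Bool) → List (V × Bool)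
  | [] => [x]
  | y :: t => if y = invL x then t else if CommL Γ x y then y :: push x t else x :: y :: t

@[simp] lemma push_nil (x : V × Bool) : push Γ x [] = [x] := by simp [push]

lemma push_cancel {x y : V × Bool} (t : List (V × Bool)) (h : y = invL x) :
    push Γ x (y :: t) = t := by simp [push, h]

lemma push_comm_case {x y : V × Bool} (t : List (V × Bool)) (h1 : y ≠ invL x)
    (h2 : CommL Γ x y) : push Γ x (y :: t) = y :: push Γ x t := by simp [push, h1, h2]

lemma push_block {x y : V × Bool} (t : List (V × Bool)) (h1 : y ≠ invL x)
    (h2 : ¬ CommL Γ x y) : push Γ x (y :: t) = x :: y :: t := by simp [push, h1, h2]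

lemma push_eval (x : V × Bool) (w : List (V × Bool)) :
    evalWord Γ (push Γ x w) = raagLetter Γ x * evalWord Γ w := by
  induction w with
  | nil => simp
  | cons y t ih =>
    by_cases h1 : y = invL x
    · rw [push_cancel Γ t h1]
      subst h1
      simp [mul_assoc]
    · by_cases h2 : CommL Γ x y
      · rw [push_comm_case Γ t h1 h2]
        simp only [evalWord_cons, ih, ← mul_assoc]
        rw [(raagLetter_commute Γ h2).eq]
      · rw [push_block Γ t h1 h2]; simp

lemma push_length (x : V × Bool) (w : List (V × Bool)) :
    (push Γ x w).length = w.length + 1 ∨ (push Γ x w).length + 1 = w.length := by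
  induction w with
  | nil => left; simp
  | cons y t ih =>
    by_cases h1 : y = invL x
    · rw [push_cancel Γ t h1]; right; simp
    · by_cases h2 : CommL Γ x y
      · rw [push_comm_case Γ t h1 h2]
        rcases ih with h | h
        · left; simp [h]
        · right; simp; omega
      · rw [push_block Γ t h1 h2]; left; simp

lemma push_no_cancel {x : V × Bool} {w : List (V × Bool)} (h : ¬ Vis Γ (invL x) w) :
    Sh Γ (push Γ x w) (x :: w) := by
  induction w with
  | nil => rw [push_nil]; exact sh_refl Γ _
  | cons y t ih =>
    by_cases h1 : y = invL x
    · exact absurd (by rw [h1]; exact vis_head Γ (invL x) t) h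
    · by_cases h2 : CommL Γ x y
      · rw [push_comm_case Γ t h1 h2]
        have hnt : ¬ Vis Γ (invL x) t := fun hv =>
          h (vis_cons Γ y ((commL_invL_left Γ).mpr h2) hv)
        exact sh_trans Γ (sh_cons Γ y (ih hnt)) (sh_swap Γ t h2.symm)
      · rw [push_block Γ t h1 h2]; exact sh_refl Γ _

lemma push_vis {x : V × Bool} {w : List (V × Bool)} (h : Vis Γ (invL x) w) :
    ∃ p s, w = p ++ invL x :: s ∧ (∀ y ∈ p, CommL Γ x y) ∧ push Γ x w = p ++ s := by
  induction w with
  | nil =>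
    obtain ⟨p, s, hp, -⟩ := h
    cases p <;> simp at hp
  | cons y t ih =>
    by_cases h1 : y = invL x
    · exact ⟨[], t, by simp [h1], by simp, push_cancel Γ t h1⟩
    · by_cases h2 : CommL Γ x y
      · have hvt : Vis Γ (invL x) t := by
          obtain ⟨p, s, hp, hcp⟩ := h
          cases p with
          | nil =>
            simp only [List.nil_append, List.cons.injEq] at hp
            exact absurd hp.1 h1
          | cons p₁ pt =>
            simp only [List.cons_append, List.cons.injEq] at hp
            exact ⟨pt, s, hp.2, fun z hz => hcp z (List.mem_cons_of_mem _ hz)⟩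
        obtain ⟨p, s, hp1, hp2, hp3⟩ := ih hvt
        refine ⟨y :: p, s, by simp [hp1], ?_, by simp [push_comm_case Γ t h1 h2, hp3]⟩
        intro z hz
        rcases List.mem_cons.mp hz with h | h
        · exact h ▸ h2
        · exact hp2 z h
      · obtain ⟨p, s, hp, hcp⟩ := h
        cases p with
        | nil =>
          simp only [List.nil_append, List.cons.injEq] at hp
          exact absurd hp.1 h1
        | cons p₁ pt =>
          simp only [List.cons_append, List.cons.injEq] at hp
          exact absurd ((commL_invL_left Γ).mp
            (hcp y (by rw [hp.1]; exact List.mem_cons_self))) h2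

lemma push_dichotomy (x : V × Bool) (w : List (V × Bool)) :
    Sh Γ (push Γ x w) (x :: w) ∨ (push Γ x w).length + 1 = w.length := by
  by_cases h : Vis Γ (invL x) w
  · obtain ⟨p, s, hp1, -, hp3⟩ := push_vis Γ h
    right; rw [hp3, hp1]; simp; omega
  · left; exact push_no_cancel Γ h

lemma push_step {w w' : List (V × Bool)} (x : V × Bool) (hs : Step Γ w w') :
    Sh Γ (push Γ x w) (push Γ x w') := by
  obtain ⟨P, a, b, S, hab, rfl, rfl⟩ := hs
  induction P with
  | cons c Pt ih =>
    by_cases h1 : c = invL x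
    · rw [List.cons_append, List.cons_append, push_cancel Γ _ h1, push_cancel Γ _ h1]
      exact step_sh Γ ⟨Pt, a, b, S, hab, rfl, rfl⟩
    · by_cases h2 : CommL Γ x c
      · rw [List.cons_append, List.cons_append, push_comm_case Γ _ h1 h2,
          push_comm_case Γ _ h1 h2]
        exact sh_cons Γ c ih
      · rw [List.cons_append, List.cons_append, push_block Γ _ h1 h2,
          push_block Γ _ h1 h2]
        exact step_sh Γ ⟨x :: c :: Pt, a, b, S, hab, rfl, rfl⟩
  | nil =>
    simp only [List.nil_append]
    by_cases ha1 : a = invL x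
    · have hxb : CommL Γ x b := commL_fst_left Γ (by rw [ha1]; simp) hab
      have hb1 : b ≠ invL x := by
        intro hb
        exact hab.1 (by rw [ha1, hb])
      rw [push_cancel Γ _ ha1, push_comm_case Γ _ hb1 hxb, push_cancel Γ _ ha1]
      exact sh_refl Γ _
    · by_cases ha2 : CommL Γ x a
      · by_cases hb1 : b = invL x
        · rw [push_comm_case Γ _ ha1 ha2, push_cancel Γ _ hb1, push_cancel Γ _ hb1]
          exact sh_refl Γ _
        · by_cases hb2 : CommL Γ x b
          · rw [push_comm_case Γ _ ha1 ha2, push_comm_case Γ _ hb1 hb2,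
              push_comm_case Γ _ hb1 hb2, push_comm_case Γ _ ha1 ha2]
            exact sh_swap Γ _ hab
          · rw [push_comm_case Γ _ ha1 ha2, push_block Γ _ hb1 hb2,
              push_block Γ _ hb1 hb2]
            exact sh_trans Γ (sh_swap Γ _ ha2.symm) (sh_cons Γ x (sh_swap Γ _ hab))
      · by_cases hb1 : b = invL x
        · exact absurd (commL_fst_right Γ (by rw [hb1]; simp) hab |>.symm) ha2
        · by_cases hb2 : CommL Γ x b
          · rw [push_block Γ _ ha1 ha2, push_comm_case Γ _ hb1 hb2,
              push_block Γ _ ha1 ha2]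
            exact sh_trans Γ (sh_cons Γ x (sh_swap Γ _ hab)) (sh_swap Γ _ hb2)
          · rw [push_block Γ _ ha1 ha2, push_block Γ _ hb1 hb2]
            exact sh_cons Γ x (sh_swap Γ _ hab)

lemma push_sh {w w' : List (V × Bool)} (x : V × Bool) (hs : Sh Γ w w') :
    Sh Γ (push Γ x w) (push Γ x w') := by
  induction hs with
  | refl => exact sh_refl Γ _
  | tail _ hstep ih => exact sh_trans Γ ih (push_step Γ x hstep)

lemma push_push_comm {x z : V × Bool} (hc : CommL Γ x z) (w : List (V × Bool)) :
    Sh Γ (push Γ x (push Γ z w)) (push Γ z (push Γ x w)) := by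
  induction w with
  | nil =>
    have hzx : z ≠ invL x := fun h => hc.1 (by rw [h]; simp)
    have hxz : x ≠ invL z := fun h => hc.1 (by rw [h]; simp)
    rw [push_nil, push_nil, push_comm_case Γ _ hzx hc, push_comm_case Γ _ hxz hc.symm,
      push_nil, push_nil]
    exact sh_swap Γ _ hc.symm
  | cons y t ih =>
    have hzx : z ≠ invL x := fun h => hc.1 (by rw [h]; simp)
    have hxz : x ≠ invL z := fun h => hc.1 (by rw [h]; simp)
    by_cases h1 : y = invL x
    · have hzy : CommL Γ z y := commL_fst_right Γ (by rw [h1]; simp) hc.symm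
      have hyz : y ≠ invL z := fun h => by
        rw [h1] at h
        exact hc.1 (by
          have : x.1 = z.1 := by
            have := congrArg Prod.fst h
            simpa using this
          exact this)
      rw [push_cancel Γ _ h1, push_comm_case Γ _ hyz hzy, push_cancel Γ _ h1]
      exact sh_refl Γ _
    · by_cases h2 : y = invL z
      · have hxy : CommL Γ x y := commL_fst_right Γ (by rw [h2]; simp) hc
        have hyx : y ≠ invL x := h1
        rw [push_cancel Γ _ h2, push_comm_case Γ _ hyx hxy, push_cancel Γ _ h2]
        exact sh_refl Γ _
      · by_cases h3 : CommL Γ x y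
        · by_cases h4 : CommL Γ z y
          · rw [push_comm_case Γ _ h2 h4, push_comm_case Γ _ h1 h3,
              push_comm_case Γ _ h1 h3, push_comm_case Γ _ h2 h4]
            exact sh_cons Γ y ih
          · rw [push_comm_case Γ _ h1 h3, push_block Γ _ h2 h4, push_block Γ _ h2 h4,
              push_comm_case Γ _ hzx hc, push_comm_case Γ _ h1 h3]
            exact sh_refl Γ _
        · by_cases h4 : CommL Γ z y
          · rw [push_comm_case Γ _ h2 h4, push_block Γ _ h1 h3, push_block Γ _ h1 h3,
              push_comm_case Γ _ hxz hc.symm, push_comm_case Γ _ h2 h4]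
            exact sh_refl Γ _
          · rw [push_block Γ _ h2 h4, push_block Γ _ h1 h3, push_comm_case Γ _ hzx hc,
              push_block Γ _ h1 h3, push_comm_case Γ _ hxz hc.symm, push_block Γ _ h2 h4]
            exact sh_swap Γ _ hc.symm

/-! ### Combinatorially reduced words -/

/-- `w` contains a cancellable pair -/
def HasPair (w : List (V × Bool)) : Prop :=
  ∃ p x q s, w = p ++ x :: q ++ invL x :: s ∧ ∀ y ∈ q, CommL Γ x y

def Red (w : List (V × Bool)) : Prop := ¬ HasPair Γ w

lemma red_nil : Red Γ ([] : List (V × Bool)) := by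
  rintro ⟨p, x, q, s, hp, -⟩
  cases p <;> simp at hp

lemma hasPair_cons {w : List (V × Bool)} (y : V × Bool) (h : HasPair Γ w) :
    HasPair Γ (y :: w) := by
  obtain ⟨p, x, q, s, hp, hq⟩ := h
  exact ⟨y :: p, x, q, s, by simp [hp], hq⟩

lemma red_tail {y : V × Bool} {t : List (V × Bool)} (h : Red Γ (y :: t)) : Red Γ t :=
  fun hp => h (hasPair_cons Γ y hp)

lemma hasPair_step {w w' : List (V × Bool)} (hs : Step Γ w w') (h : HasPair Γ w') :
    HasPair Γ w := by
  obtain ⟨P, a, b, S, hab, rfl, rfl⟩ := hs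
  induction P with
  | cons c Pt ih =>
    obtain ⟨p, x, q, s, hp, hq⟩ := h
    cases p with
    | nil =>
      rw [List.nil_append, List.cons_append] at hp
      injection hp with hx ht
      subst hx
      have hv : Vis Γ (invL c) (Pt ++ b :: a :: S) :=
        ⟨q, s, ht, fun y hy => hq y hy⟩
      have hv' : Vis Γ (invL c) (Pt ++ a :: b :: S) :=
        vis_step Γ (Step.symm' Γ ⟨Pt, a, b, S, hab, rfl, rfl⟩) hv
      obtain ⟨q', s', hq1, hq2⟩ := hv'
      exact ⟨[], c, q', s', by simp [hq1], fun y hy => hq2 y hy⟩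
    | cons p₁ pt =>
      rw [List.cons_append, List.cons_append] at hp
      injection hp with hx ht
      subst hx
      exact hasPair_cons Γ _ (ih ⟨pt, x, q, s, ht, hq⟩)
  | nil =>
    simp only [List.nil_append] at h ⊢
    obtain ⟨p, x, q, s, hp, hq⟩ := h
    cases p with
    | nil =>
      rw [List.nil_append] at hp
      injection hp with hx ht
      subst hx
      rcases List.cons_eq_append_iff.mp ht with ⟨hq0, hbs⟩ | ⟨q', hq0, hS⟩
      · injection hbs with hba hrest
        exact absurd (congrArg Prod.fst hba) (by simpa using (Ne.symm hab.1))
      · subst hq0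
        refine ⟨[a], b, q', s, by simp [hS], ?_⟩
        intro y hy
        exact hq y (List.mem_cons_of_mem _ hy)
    | cons p₁ pt =>
      rw [List.cons_append] at hp
      injection hp with hx ht
      subst hx
      have ht' : a :: S = pt ++ x :: (q ++ invL x :: s) := by
        simpa [List.append_assoc] using ht
      rcases List.cons_eq_append_iff.mp ht' with ⟨hpt0, hbs⟩ | ⟨pt', hpt0, hS⟩
      · subst hpt0
        injection hbs with hxa hrest
        subst hxa
        refine ⟨[], x, b :: q, s, by simp [← hrest], ?_⟩
        intro y hy
        rcases List.mem_cons.mp hy with h | h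
        · exact h ▸ hab
        · exact hq y h
      · subst hpt0
        exact ⟨a :: b :: pt', x, q, s, by simp [hS], hq⟩

lemma red_sh {w w' : List (V × Bool)} (hs : Sh Γ w w') (h : Red Γ w) : Red Γ w' := by
  induction hs with
  | refl => exact h
  | tail _ hstep ih => exact fun hp => ih (hasPair_step Γ hstep hp)

lemma red_cons_of_not_vis {x : V × Bool} {w : List (V × Bool)} (hw : Red Γ w)
    (hv : ¬ Vis Γ (invL x) w) : Red Γ (x :: w) := by
  rintro ⟨p, z, q, s, hp, hq⟩
  cases p with
  | nil =>
    rw [List.nil_append] at hp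
    injection hp with hx ht
    subst hx
    exact hv ⟨q, s, ht, fun y hy => hq y hy⟩
  | cons p₁ pt =>
    rw [List.cons_append] at hp
    injection hp with hx ht
    exact hw ⟨pt, z, q, s, ht, hq⟩

lemma red_push {x : V × Bool} {w : List (V × Bool)} (h : Red Γ w) :
    Red Γ (push Γ x w) := by
  by_cases hv : Vis Γ (invL x) w
  · obtain ⟨p, s, hp1, hp2, hp3⟩ := push_vis Γ hv
    have hsh : Sh Γ w (invL x :: (p ++ s)) := by
      rw [hp1]
      exact vis_sh_front Γ (fun y hy => hp2 y hy)
    have hred : Red Γ (invL x :: (p ++ s)) := red_sh Γ hsh h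
    rw [hp3]
    exact red_tail Γ hred
  · exact red_sh Γ (sh_symm Γ (push_no_cancel Γ hv)) (red_cons_of_not_vis Γ h hv)

lemma push_push_inv {x : V × Bool} {w : List (V × Bool)} (h : Red Γ w) :
    Sh Γ (push Γ x (push Γ (invL x) w)) w := by
  induction w with
  | nil =>
    rw [push_nil, push_cancel Γ _ rfl]
    exact sh_refl Γ _
  | cons y t ih =>
    by_cases h1 : y = invL (invL x)
    · rw [push_cancel Γ _ h1]
      have hx : y = x := by rw [h1, invL_invL]
      subst hx
      have hnv : ¬ Vis Γ (invL y) t := by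
        rintro ⟨q, s, hq1, hq2⟩
        refine h ⟨[], y, q, s, by simp [hq1], ?_⟩
        intro z hz
        exact (commL_invL_left Γ).mp (hq2 z hz)
      exact push_no_cancel Γ hnv
    · by_cases h2 : CommL Γ (invL x) y
      · rw [push_comm_case Γ _ h1 h2]
        have hyx : y ≠ invL x := fun hy => h2.1 (by rw [hy])
        have hxy : CommL Γ x y := (commL_invL_left Γ).mp h2
        rw [push_comm_case Γ _ hyx hxy]
        exact sh_cons Γ y (ih (red_tail Γ h))
      · rw [push_block Γ _ h1 h2, push_cancel Γ _ rfl]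
        exact sh_refl Γ _

/-! ### The action on reduced shuffle classes -/

def shSetoid : Setoid (List (V × Bool)) where
  r := Sh Γ
  iseqv := ⟨sh_refl Γ, fun h => sh_symm Γ h, fun h1 h2 => sh_trans Γ h1 h2⟩

def WC := Quotient (shSetoid Γ)

def mkC (w : List (V × Bool)) : WC Γ := Quotient.mk (shSetoid Γ) w

def RedC : WC Γ → Prop :=
  Quotient.lift (Red Γ) (fun _ _ h => propext
    ⟨fun ha => red_sh Γ h ha, fun hb => red_sh Γ (sh_symm Γ h) hb⟩)

def WSet := {c : WC Γ // RedC Γ c}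

noncomputable def pushC (x : V × Bool) : WC Γ → WC Γ :=
  Quotient.map (push Γ x) (fun _ _ h => push_sh Γ x h)

lemma redC_pushC (x : V × Bool) (c : WC Γ) (h : RedC Γ c) : RedC Γ (pushC Γ x c) := by
  induction c using Quotient.ind with
  | _ w => exact red_push Γ h

noncomputable def pushS (x : V × Bool) (c : WSet Γ) : WSet Γ :=
  ⟨pushC Γ x c.1, redC_pushC Γ x c.1 c.2⟩

lemma pushS_inv (x : V × Bool) (c : WSet Γ) : pushS Γ x (pushS Γ (invL x) c) = c := by
  obtain ⟨c, hc⟩ := c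
  apply Subtype.ext
  simp only [pushS]
  induction c using Quotient.ind with
  | _ w => exact Quotient.sound (push_push_inv Γ hc)

noncomputable def pushE (v : V) : Equiv.Perm (WSet Γ) where
  toFun := pushS Γ (v, true)
  invFun := pushS Γ (v, false)
  left_inv := fun c => pushS_inv Γ (v, false) c
  right_inv := fun c => pushS_inv Γ (v, true) c

lemma pushE_comm {v u : V} (h1 : v ≠ u) (h2 : ¬ Γ.Adj v u) (c : WSet Γ) :
    pushE Γ v (pushE Γ u c) = pushE Γ u (pushE Γ v c) := by
  obtain ⟨c, hc⟩ := c
  apply Subtype.ext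
  induction c using Quotient.ind with
  | _ w => exact Quotient.sound (push_push_comm Γ ⟨h1, h2⟩ w)

lemma raag_rels_perm : ∀ r ∈ raagRels Γ,
    FreeGroup.lift (fun v => pushE Γ v) r = 1 := by
  rintro r ⟨v, u, hvu, hadj, rfl⟩
  simp only [map_mul, map_inv, FreeGroup.lift_apply_of]
  rw [mul_inv_eq_one, mul_inv_eq_iff_eq_mul]
  ext c
  exact pushE_comm Γ hvu hadj c

noncomputable def raagPerm : RAAG Γ →* Equiv.Perm (WSet Γ) :=
  PresentedGroup.toGroup (raag_rels_perm Γ)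

lemma raagPerm_letter (l : V × Bool) (c : WSet Γ) :
    raagPerm Γ (raagLetter Γ l) c = pushS Γ l c := by
  cases l with
  | mk v b =>
    cases b
    · have : raagPerm Γ (raagLetter Γ (v, false)) = (pushE Γ v)⁻¹ := by
        rw [show raagLetter Γ (v, false) = (raagGen Γ v)⁻¹ from rfl, map_inv]
        rw [show raagPerm Γ (raagGen Γ v) = pushE Γ v from PresentedGroup.toGroup.of _]
      rw [this]
      rfl
    · rw [show raagLetter Γ (v, true) = raagGen Γ v from rfl,
        show raagPerm Γ (raagGen Γ v) = pushE Γ v from PresentedGroup.toGroup.of _]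
      rfl

def emptyS : WSet Γ := ⟨mkC Γ [], red_nil Γ⟩

noncomputable def NF (g : RAAG Γ) : WSet Γ := raagPerm Γ g (emptyS Γ)

lemma NF_letter_mul (l : V × Bool) (g : RAAG Γ) :
    NF Γ (raagLetter Γ l * g) = pushS Γ l (NF Γ g) := by
  unfold NF
  rw [map_mul]
  exact raagPerm_letter Γ l _

noncomputable def lenC : WC Γ → ℕ :=
  Quotient.lift List.length (fun _ _ h => sh_length Γ h)

noncomputable def evalC : WC Γ → RAAG Γ :=
  Quotient.lift (evalWord Γ) (fun _ _ h => sh_eval Γ h)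

lemma evalC_pushS (x : V × Bool) (c : WSet Γ) :
    evalC Γ (pushS Γ x c).1 = raagLetter Γ x * evalC Γ c.1 := by
  obtain ⟨c, hc⟩ := c
  induction c using Quotient.ind with
  | _ w => exact push_eval Γ x w

lemma lenC_pushS (x : V × Bool) (c : WSet Γ) :
    lenC Γ (pushS Γ x c).1 ≤ lenC Γ c.1 + 1 := by
  obtain ⟨c, hc⟩ := c
  induction c using Quotient.ind with
  | _ w =>
    show (push Γ x w).length ≤ w.length + 1
    rcases push_length Γ x w with h | h <;> omega

lemma NF_eval_len (w : List (V × Bool)) :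
    evalC Γ (NF Γ (evalWord Γ w)).1 = evalWord Γ w ∧
      lenC Γ (NF Γ (evalWord Γ w)).1 ≤ w.length := by
  induction w with
  | nil =>
    have h1 : NF Γ (evalWord Γ []) = emptyS Γ := by
      unfold NF
      rw [evalWord_nil, map_one]
      rfl
    rw [h1]
    exact ⟨rfl, by simp [emptyS, lenC, mkC]⟩
  | cons l t ih =>
    rw [evalWord_cons, NF_letter_mul Γ l (evalWord Γ t)]
    constructor
    · rw [evalC_pushS Γ l _, ih.1]
    · calc lenC Γ (pushS Γ l (NF Γ (evalWord Γ t))).1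
          ≤ lenC Γ (NF Γ (evalWord Γ t)).1 + 1 := lenC_pushS Γ l _
        _ ≤ t.length + 1 := by have := ih.2; omega
        _ = (l :: t).length := by simp

lemma NF_spec (g : RAAG Γ) :
    evalC Γ (NF Γ g).1 = g ∧ lenC Γ (NF Γ g).1 = wlen Γ g := by
  obtain ⟨w, hw, hlw⟩ := exists_geodesic Γ g
  have h1 := NF_eval_len Γ w
  rw [hw] at h1
  obtain ⟨u, hu⟩ := Quotient.exists_rep (NF Γ g).1
  have heval : evalWord Γ u = g := by rw [← h1.1, ← hu]; rfl
  have hlen : u.length = lenC Γ (NF Γ g).1 := by rw [← hu]; rfl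
  refine ⟨h1.1, le_antisymm (by omega) ?_⟩
  calc wlen Γ g ≤ u.length := wlen_le Γ heval
    _ = lenC Γ (NF Γ g).1 := hlen

/-! ### Geodesics and shuffle classes -/

lemma geodesic_class : ∀ w : List (V × Bool), w.length = wlen Γ (evalWord Γ w) →
    (NF Γ (evalWord Γ w)).1 = mkC Γ w := by
  intro w
  induction w with
  | nil =>
    intro _
    show (NF Γ (evalWord Γ [])).1 = mkC Γ []
    unfold NF
    rw [evalWord_nil, map_one]
    rfl
  | cons l t ih =>
    intro hlen
    have h1 : wlen Γ (evalWord Γ t) ≤ t.length := wlen_le Γ rfl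
    have h2 : wlen Γ (evalWord Γ (l :: t)) ≤ 1 + wlen Γ (evalWord Γ t) := by
      rw [evalWord_cons]
      exact wlen_letter_mul_le Γ l _
    have hlt : t.length = wlen Γ (evalWord Γ t) := by
      simp only [List.length_cons] at hlen
      omega
    have iht := ih hlt
    have hstep : (NF Γ (evalWord Γ (l :: t))).1 = mkC Γ (push Γ l t) := by
      rw [evalWord_cons, NF_letter_mul Γ l (evalWord Γ t)]
      show pushC Γ l (NF Γ (evalWord Γ t)).1 = mkC Γ (push Γ l t)
      rw [iht]
      rfl
    have hlenNF : lenC Γ (NF Γ (evalWord Γ (l :: t))).1 = wlen Γ (evalWord Γ (l :: t)) :=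
      (NF_spec Γ _).2
    rw [hstep] at hlenNF ⊢
    have hplen : (push Γ l t).length = wlen Γ (evalWord Γ (l :: t)) := hlenNF
    rcases push_dichotomy Γ l t with h | h
    · exact Quotient.sound h
    · exfalso
      simp only [List.length_cons] at hlen
      omega

lemma geodesics_sh {w w' : List (V × Bool)} (he : evalWord Γ w = evalWord Γ w')
    (h1 : w.length = wlen Γ (evalWord Γ w)) (h2 : w'.length = wlen Γ (evalWord Γ w')) :
    Sh Γ w w' := by
  have e1 := geodesic_class Γ w h1
  have e2 := geodesic_class Γ w' h2
  rw [he] at e1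
  exact Quotient.exact (e1.symm.trans e2)

/-! ### Starting letters -/

/-- `x` is a starting letter of `g` -/
def StartL (x : V × Bool) (g : RAAG Γ) : Prop :=
  wlen Γ (raagLetter Γ (invL x) * g) + 1 = wlen Γ g

lemma startL_iff_vis {x : V × Bool} {g : RAAG Γ} {w : List (V × Bool)}
    (hw : evalWord Γ w = g) (hl : w.length = wlen Γ g) :
    StartL Γ x g ↔ Vis Γ x w := by
  constructor
  · intro h
    by_contra hnv
    have hnv' : ¬ Vis Γ (invL (invL x)) w := by rwa [invL_invL]
    have hsh : Sh Γ (push Γ (invL x) w) (invL x :: w) := push_no_cancel Γ hnv'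
    -- compute the class of the shorter element
    have hNF : (NF Γ (raagLetter Γ (invL x) * g)).1 = mkC Γ (push Γ (invL x) w) := by
      rw [NF_letter_mul]
      show pushC Γ (invL x) (NF Γ g).1 = _
      rw [← hw, geodesic_class Γ w (by rw [hw]; exact hl)]
      rfl
    have hlen1 : lenC Γ (NF Γ (raagLetter Γ (invL x) * g)).1
        = wlen Γ (raagLetter Γ (invL x) * g) := (NF_spec Γ _).2
    rw [hNF] at hlen1
    have hlen2 : (push Γ (invL x) w).length = wlen Γ (raagLetter Γ (invL x) * g) := hlen1
    have hlen3 : (push Γ (invL x) w).length = w.length + 1 := by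
      have := sh_length Γ hsh
      simpa using this
    unfold StartL at h
    omega
  · rintro ⟨p, s, hps, hc⟩
    have hsh : Sh Γ w (x :: (p ++ s)) := by
      rw [hps]
      exact vis_sh_front Γ hc
    have he : raagLetter Γ x * evalWord Γ (p ++ s) = g := by
      rw [← hw, sh_eval Γ hsh, evalWord_cons]
    have he2 : evalWord Γ (p ++ s) = raagLetter Γ (invL x) * g := by
      rw [raagLetter_invL, ← he, inv_mul_cancel_left]
    have hle : wlen Γ (raagLetter Γ (invL x) * g) ≤ (p ++ s).length :=
      wlen_le Γ he2
    have hlen : (p ++ s).length + 1 = w.length := by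
      rw [hps]; simp; omega
    have hge : wlen Γ g ≤ 1 + wlen Γ (raagLetter Γ (invL x) * g) := by
      have h3 : raagLetter Γ x * (raagLetter Γ (invL x) * g) = g := by
        rw [raagLetter_invL, mul_inv_cancel_left]
      calc wlen Γ g = wlen Γ (raagLetter Γ x * (raagLetter Γ (invL x) * g)) := by rw [h3]
        _ ≤ 1 + wlen Γ (raagLetter Γ (invL x) * g) := wlen_letter_mul_le Γ _ _
    unfold StartL
    omega

/-! ### the letter order -/

lemma letterLT_irrefl (lo : LinearOrder V) (l : V × Bool) : ¬ letterLT lo l l := by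
  letI := lo
  rintro (h | ⟨h1, h2, h3⟩)
  · exact lt_irrefl _ h
  · rw [h2] at h3; cases h3

lemma letterLT_asymm (lo : LinearOrder V) {a b : V × Bool}
    (h1 : letterLT lo a b) (h2 : letterLT lo b a) : False := by
  letI := lo
  rcases h1 with h1 | ⟨e1, e2, e3⟩ <;> rcases h2 with h2 | ⟨f1, f2, f3⟩
  · exact lt_asymm h1 h2
  · rw [f1] at h1; exact lt_irrefl _ h1
  · rw [e1] at h2; exact lt_irrefl _ h2
  · rw [e3] at f2; cases f2

lemma lex_asymm (lo : LinearOrder V) :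
    ∀ {l₁ l₂ : List (V × Bool)}, List.Lex (letterLT lo) l₁ l₂ →
      List.Lex (letterLT lo) l₂ l₁ → False := by
  intro l₁ l₂ h₁
  induction h₁ with
  | nil =>
    intro h₂
    cases h₂
  | rel h =>
    intro h₂
    cases h₂ with
    | rel h' => exact letterLT_asymm lo h h'
    | cons h' => exact letterLT_irrefl lo _ h
  | cons h ih =>
    intro h₂
    cases h₂ with
    | rel h' => exact letterLT_irrefl lo _ h'
    | cons h' => exact ih h'

lemma normalform_unique (lo : LinearOrder V) {w w' : List (V × Bool)} {g : RAAG Γ}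
    (h : NormalForm Γ lo w g) (h' : NormalForm Γ lo w' g) : w = w' := by
  rcases h'.2.2 w h.1 h.2.1 with he | hlex
  · exact he
  · rcases h.2.2 w' h'.1 h'.2.1 with he | hlex'
    · exact he.symm
    · exact absurd hlex (fun hl => lex_asymm lo hl hlex')

lemma normalform_tail (lo : LinearOrder V) {a : V × Bool} {t : List (V × Bool)} {g : RAAG Γ}
    (h : NormalForm Γ lo (a :: t) g) :
    NormalForm Γ lo t (raagLetter Γ (invL a) * g) := by
  obtain ⟨he, hlen, hmax⟩ := h
  have hlen' : t.length + 1 = wlen Γ g := by simpa using hlen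
  have het : evalWord Γ t = raagLetter Γ (invL a) * g := by
    rw [raagLetter_invL, ← he, evalWord_cons, inv_mul_cancel_left]
  have h1 : wlen Γ (raagLetter Γ (invL a) * g) ≤ t.length := wlen_le Γ het
  have h2 : wlen Γ g ≤ 1 + wlen Γ (raagLetter Γ (invL a) * g) := by
    have h3 : raagLetter Γ a * (raagLetter Γ (invL a) * g) = g := by
      rw [raagLetter_invL, mul_inv_cancel_left]
    calc wlen Γ g = wlen Γ (raagLetter Γ a * (raagLetter Γ (invL a) * g)) := by rw [h3]
      _ ≤ 1 + wlen Γ (raagLetter Γ (invL a) * g) := wlen_letter_mul_le Γ _ _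
  have hwt : t.length = wlen Γ (raagLetter Γ (invL a) * g) := by omega
  refine ⟨het, hwt, ?_⟩
  intro u hu hulen
  have heu : evalWord Γ (a :: u) = g := by
    rw [evalWord_cons, hu, raagLetter_invL, mul_inv_cancel_left]
  have hlu : (a :: u).length = wlen Γ g := by
    simp only [List.length_cons, hulen]
    omega
  rcases hmax (a :: u) heu hlu with he2 | hlex
  · left; injection he2
  · cases hlex with
    | rel h' => exact absurd h' (letterLT_irrefl lo a)
    | cons h' => right; exact h'

lemma startL_head_max (lo : LinearOrder V) {w : List (V × Bool)} {g : RAAG Γ}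
    (hw : NormalForm Γ lo w g) {a : V × Bool} {t : List (V × Bool)} (hat : w = a :: t)
    (x : V × Bool) (hx : StartL Γ x g) : x = a ∨ letterLT lo x a := by
  obtain ⟨u₀, hu₀, hu₀l⟩ := exists_geodesic Γ (raagLetter Γ (invL x) * g)
  have heu : evalWord Γ (x :: u₀) = g := by
    rw [evalWord_cons, hu₀, raagLetter_invL, mul_inv_cancel_left]
  have hlu : (x :: u₀).length = wlen Γ g := by
    simp only [List.length_cons, hu₀l]
    unfold StartL at hx
    omega
  rcases hw.2.2 (x :: u₀) heu hlu with he | hlex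
  · rw [hat] at he
    left; injection he
  · rw [hat] at hlex
    cases hlex with
    | rel h' => right; exact h'
    | cons h' => left; rfl

/-! ### Main theorem -/

lemma sgen_of_startL {g : RAAG Γ} {b : V × Bool} (h : StartL Γ b g) : b.1 ∈ SGen Γ g := by
  refine ⟨b.2, raagLetter Γ (invL b) * g, ?_, ?_⟩
  · rw [Prod.mk.eta, raagLetter_invL, mul_inv_cancel_left]
  · unfold StartL at h
    omega

lemma stmt12_aux (lo : LinearOrder V) {g₂ : RAAG Γ} {w₂ : List (V × Bool)}
    (hw₂ : NormalForm Γ lo w₂ g₂) {v₀ : V} (hSG : SGen Γ g₂ = {v₀})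
    (hAdj : ∀ v : V, lo.lt v v₀ → Γ.Adj v v₀) :
    ∀ (w₁ : List (V × Bool)) (g₁ : RAAG Γ) (w : List (V × Bool)),
      NormalForm Γ lo w₁ g₁ → NormalForm Γ lo w (g₁ * g₂) →
      wlen Γ (g₁ * g₂) = wlen Γ g₁ + wlen Γ g₂ → w = w₁ ++ w₂ := by
  intro w₁
  induction w₁ with
  | nil =>
    intro g₁ w hw₁ hw _
    have hg₁ : g₁ = 1 := by rw [← hw₁.1, evalWord_nil]
    rw [hg₁, one_mul] at hw
    simpa using normalform_unique Γ lo hw hw₂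
  | cons a t₁ ih =>
    intro g₁ w hw₁ hw hgeo
    have hstart_a_g1 : StartL Γ a g₁ :=
      (startL_iff_vis Γ hw₁.1 hw₁.2.1).mpr (vis_head Γ a t₁)
    have hassoc : raagLetter Γ (invL a) * (g₁ * g₂)
        = (raagLetter Γ (invL a) * g₁) * g₂ := by rw [mul_assoc]
    have h1 : wlen Γ ((raagLetter Γ (invL a) * g₁) * g₂)
        ≤ wlen Γ (raagLetter Γ (invL a) * g₁) + wlen Γ g₂ := wlen_mul_le Γ _ _
    have h2 : wlen Γ (g₁ * g₂) ≤ 1 + wlen Γ (raagLetter Γ (invL a) * (g₁ * g₂)) :=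
      wlen_le_letter_mul Γ (invL a) (g₁ * g₂)
    have hstart_a_g : StartL Γ a (g₁ * g₂) := by
      unfold StartL at hstart_a_g1 ⊢
      rw [hassoc] at h2 ⊢
      omega
    cases w with
    | nil =>
      exfalso
      have h3 := hw.2.1
      have h4 := hw₁.2.1
      simp only [List.length_nil, List.length_cons] at h3 h4
      omega
    | cons b t =>
      have hstart_b : StartL Γ b (g₁ * g₂) :=
        (startL_iff_vis Γ hw.1 hw.2.1).mpr (vis_head Γ b t)
      have hmax1 : a = b ∨ letterLT lo a b := startL_head_max Γ lo hw rfl a hstart_a_g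
      have h12e : evalWord Γ ((a :: t₁) ++ w₂) = g₁ * g₂ := by
        rw [evalWord_append, hw₁.1, hw₂.1]
      have h12l : ((a :: t₁) ++ w₂).length = wlen Γ (g₁ * g₂) := by
        have := hw₁.2.1
        have := hw₂.2.1
        simp only [List.length_append, List.length_cons] at *
        omega
      have hba : b = a := by
        rcases hmax1 with h | hlt
        · exact h.symm
        · exfalso
          have hvisb : Vis Γ b ((a :: t₁) ++ w₂) :=
            (startL_iff_vis Γ h12e h12l).mp hstart_b
          obtain ⟨p, s, hps, hcomm⟩ := hvisb
          have hfromW2 : Vis Γ b w₂ → (∀ y ∈ (a :: t₁ : List (V × Bool)), CommL Γ b y) →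
              False := by
            intro hv2 hcw1
            have hstb2 : StartL Γ b g₂ := (startL_iff_vis Γ hw₂.1 hw₂.2.1).mpr hv2
            have hmem : b.1 ∈ SGen Γ g₂ := sgen_of_startL Γ hstb2
            rw [hSG] at hmem
            have hb1 : b.1 = v₀ := hmem
            have hca : CommL Γ b a := hcw1 a (List.mem_cons_self)
            letI := lo
            have hne : a.1 ≠ v₀ := fun h => hca.1 (by rw [hb1, h])
            have hnlt : ¬ lo.lt a.1 v₀ := fun hl => hca.2 (by
              rw [hb1]
              exact (hAdj a.1 hl).symm)
            have hgt : lo.lt v₀ a.1 := by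
              rcases lt_trichotomy a.1 v₀ with h | h | h
              · exact absurd h hnlt
              · exact absurd h hne
              · exact h
            exact letterLT_asymm lo hlt (Or.inl (by rw [hb1]; exact hgt))
          rcases List.append_eq_append_iff.mp hps with ⟨u, hu1, hu2⟩ | ⟨u, hu1, hu2⟩
          · apply hfromW2
            · exact ⟨u, s, hu2, fun y hy =>
                hcomm y (by rw [hu1]; exact List.mem_append_right _ hy)⟩
            · intro y hy
              exact hcomm y (by rw [hu1]; exact List.mem_append_left _ hy)
          · cases u with
            | nil =>
              have hw1p : a :: t₁ = p := by simpa using hu1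
              have hw2b : w₂ = b :: s := by simpa using hu2.symm
              apply hfromW2
              · rw [hw2b]
                exact vis_head Γ b s
              · intro y hy
                exact hcomm y (hw1p ▸ hy)
            | cons u₁ ut =>
              rw [List.cons_append] at hu2
              injection hu2 with hb1 hs1
              subst hb1
              have hvis1 : Vis Γ b (a :: t₁) := ⟨p, ut, hu1, fun y hy => hcomm y hy⟩
              have hstb1 : StartL Γ b g₁ := (startL_iff_vis Γ hw₁.1 hw₁.2.1).mpr hvis1
              rcases startL_head_max Γ lo hw₁ rfl b hstb1 with h | h
              · exact letterLT_irrefl lo a (h ▸ hlt)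
              · exact letterLT_asymm lo hlt h
      subst hba
      have hta : NormalForm Γ lo t (raagLetter Γ (invL b) * (g₁ * g₂)) :=
        normalform_tail Γ lo hw
      have ht₁ : NormalForm Γ lo t₁ (raagLetter Γ (invL b) * g₁) :=
        normalform_tail Γ lo hw₁
      rw [hassoc] at hta
      have hgeo' : wlen Γ ((raagLetter Γ (invL b) * g₁) * g₂)
          = wlen Γ (raagLetter Γ (invL b) * g₁) + wlen Γ g₂ := by
        unfold StartL at hstart_a_g hstart_a_g1
        rw [hassoc] at hstart_a_g
        omega
      have hrec := ih (raagLetter Γ (invL b) * g₁) t ht₁ hta hgeo'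
      rw [List.cons_append, hrec]
end CGW

theorem stmt12 {V : Type} (Γ : SimpleGraph V) (lo : LinearOrder V)
    (g₁ g₂ : RAAG Γ)
    (hgeo : wlen Γ (g₁ * g₂) = wlen Γ g₁ + wlen Γ g₂)
    (hsd : SDConical Γ lo g₂)
    (w w₁ w₂ : List (V × Bool))
    (hw : NormalForm Γ lo w (g₁ * g₂))
    (hw₁ : NormalForm Γ lo w₁ g₁) (hw₂ : NormalForm Γ lo w₂ g₂) :
    w = w₁ ++ w₂ := by
  obtain ⟨v₀, hSG, hAdj⟩ := hsd
  exact stmt12_aux Γ lo hw₂ hSG hAdj w₁ g₁ w hw₁ hw hgeo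
end
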